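/- arXiv:2604.11613 — 13 statements merged into one kernel-verified Lean document; each statement's English description precedes it below -/
import Mathlib

section
/- For any row index j and any column index k with c(k) = c(j), as κ → ∞ (with α, η and all tokens fixed) the attention weight A_{jk} converges to the class-restricted softmax value exp(α⟨x_j, x_k⟩) / Z_{j,in}. -/
open Finset Real
open scoped RealInnerProductSpace BigOperators

/-- Softmax attention with labels: if token `k` is in the same
class as token `j`, then as `κ → ∞` (with `α`, `η` and all tokens fixed) the
attention weight `A κ j k` converges to the class-restricted softmax value
`exp(α⟨x_j, x_k⟩) / Z_{j,in}`. -/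
theorem same_class_attention_limit
    (d n K : ℕ)
    (α η : ℝ) (hα : 0 < α) (hη : 0 < η)
    (x : Fin n → EuclideanSpace ℝ (Fin d))
    (y : Fin n → EuclideanSpace ℝ (Fin K))
    (c : Fin n → Fin K)
    (hy : ∀ j k, ⟪y j, y k⟫ = if c j = c k then η else 0)
    (A : ℝ → Fin n → Fin n → ℝ)
    (hA : ∀ κ : ℝ, ∀ j k, A κ j k =
      Real.exp (α * ⟪x j, x k⟫ + (κ * α) * ⟪y j, y k⟫) /
        ∑ s, Real.exp (α * ⟪x j, x s⟫ + (κ * α) * ⟪y j, y s⟫))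
    (Zin : Fin n → ℝ)
    (hZ : ∀ j, Zin j =
      ∑ s ∈ Finset.univ.filter (fun s => c s = c j), Real.exp (α * ⟪x j, x s⟫)) :
    ∀ j k, c k = c j →
      Filter.Tendsto (fun κ : ℝ => A κ j k) Filter.atTop
        (nhds (Real.exp (α * ⟪x j, x k⟫) / Zin j)) := by
  intro j k hck
  have hyk : ⟪y j, y k⟫ = η := by rw [hy]; simp [hck.symm]
  -- rewrite A with shifted exponents
  have key : ∀ κ : ℝ, A κ j k =
      Real.exp (α * ⟪x j, x k⟫) /
        ∑ s, Real.exp (α * ⟪x j, x s⟫ + (κ * α) * (⟪y j, y s⟫ - η)) := by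
    intro κ
    rw [hA, hyk]
    have hsum : (∑ s, Real.exp (α * ⟪x j, x s⟫ + (κ * α) * (⟪y j, y s⟫ - η)))
        = (∑ s, Real.exp (α * ⟪x j, x s⟫ + (κ * α) * ⟪y j, y s⟫)) *
          Real.exp (-(κ * α * η)) := by
      rw [Finset.sum_mul]
      refine Finset.sum_congr rfl fun s _ => ?_
      rw [← Real.exp_add]
      ring_nf
    rw [hsum]
    rw [div_mul_eq_div_div_swap, Real.exp_neg, div_inv_eq_mul, ← Real.exp_add]
  -- limit of the denominator
  have hD : Filter.Tendsto
      (fun κ : ℝ => ∑ s, Real.exp (α * ⟪x j, x s⟫ + (κ * α) * (⟪y j, y s⟫ - η)))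
      Filter.atTop (nhds (Zin j)) := by
    have hZ' : Zin j = ∑ s : Fin n, (if c s = c j then Real.exp (α * ⟪x j, x s⟫) else 0) := by
      rw [hZ, Finset.sum_filter]
    rw [hZ']
    refine tendsto_finset_sum _ fun s _ => ?_
    by_cases hs : c s = c j
    · have : ⟪y j, y s⟫ = η := by rw [hy]; simp [hs.symm]
      simp only [this, sub_self, mul_zero, add_zero, hs, if_true]
      exact tendsto_const_nhds
    · have hys : ⟪y j, y s⟫ = 0 := by
        rw [hy, if_neg (fun h => hs h.symm)]
      simp only [hys, zero_sub, hs, if_false]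
      have : (fun κ : ℝ => Real.exp (α * ⟪x j, x s⟫ + κ * α * (-η)))
          = fun κ : ℝ => Real.exp (α * ⟪x j, x s⟫) * Real.exp (κ * α * (-η)) := by
        funext κ; rw [← Real.exp_add]
      rw [this]
      have h0 : Filter.Tendsto (fun κ : ℝ => Real.exp (κ * α * (-η)))
          Filter.atTop (nhds 0) := by
        apply Real.tendsto_exp_atBot.comp
        have : (fun κ : ℝ => κ * α * (-η)) = fun κ : ℝ => κ * (α * (-η)) := by
          funext κ; ring
        rw [this]
        exact Filter.tendsto_id.atTop_mul_const_of_neg (by nlinarith)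
      simpa using h0.const_mul (Real.exp (α * ⟪x j, x s⟫))
  -- Zin j ≠ 0
  have hZpos : 0 < Zin j := by
    rw [hZ]
    apply Finset.sum_pos (fun s _ => Real.exp_pos _)
    exact ⟨j, by simp⟩
  simp only [key]
  exact tendsto_const_nhds.div hD hZpos.ne'
end

section
/- (Invariant Cones) Let w_1,…,w_K ∈ ℝ^d and define for each class c the open polyhedral cone C_c := {x ∈ ℝ^d : ⟨w_c − w_{c'}, x⟩ > 0 for all c' ≠ c}. If at time t every training point lies in the cone of its class, i.e. x_i^{(t)} ∈ C_{c(i)} for all i, then after one step of the block-diagonal feature update the same holds: x_i^{(t+1)} ∈ C_{c(i)} for all i. -/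
open Finset Real
open scoped RealInnerProductSpace BigOperators

/-- **Invariant Cones.** Let `C_c := {x : ⟨w_c − w_{c'}, x⟩ > 0 ∀ c' ≠ c}`.
If at time `t` every training point lies in the cone of its class, then after one
step of the block-diagonal feature update the same holds at time `t+1`. -/
theorem invariant_cones
    (d n K : ℕ)
    (α α' γ' : ℝ) (hα : 0 < α) (hα' : 0 < α') (hγ' : 0 < γ')
    (c : Fin n → Fin K)
    (hclass : ∀ k : Fin K, ∃ j, c j = k)
    (w : Fin K → EuclideanSpace ℝ (Fin d))
    (x : ℕ → Fin n → EuclideanSpace ℝ (Fin d))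
    (A : ℕ → Fin n → Fin n → ℝ)
    (hA : ∀ t j k, A t j k =
      if c k = c j then
        Real.exp (α * ⟪x t j, x t k⟫) /
          ∑ s ∈ Finset.univ.filter (fun s => c s = c j), Real.exp (α * ⟪x t j, x t s⟫)
      else 0)
    (hx : ∀ t j, x (t+1) j =
      x t j + α' • ∑ k ∈ Finset.univ.filter (fun k => c k = c j), A t j k • x t k)
    (t : ℕ)
    (hcone : ∀ i : Fin n, ∀ c' : Fin K, c' ≠ c i → 0 < ⟪w (c i) - w c', x t i⟫) :
    ∀ i : Fin n, ∀ c' : Fin K, c' ≠ c i → 0 < ⟪w (c i) - w c', x (t+1) i⟫ := by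
  intro i c' hc'
  rw [hx t i, inner_add_right, inner_smul_right, inner_sum]
  have hmem : i ∈ Finset.univ.filter (fun k => c k = c i) := by simp
  have hApos : ∀ k ∈ Finset.univ.filter (fun k => c k = c i), 0 < A t i k := by
    intro k hk
    rw [Finset.mem_filter] at hk
    rw [hA t i k, if_pos hk.2]
    apply div_pos (Real.exp_pos _)
    exact Finset.sum_pos (fun s _ => Real.exp_pos _) ⟨i, hmem⟩
  have hsum : 0 < ∑ k ∈ Finset.univ.filter (fun k => c k = c i),
      ⟪w (c i) - w c', A t i k • x t k⟫ := by
    apply Finset.sum_pos _ ⟨i, hmem⟩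
    intro k hk
    rw [Finset.mem_filter] at hk
    rw [real_inner_smul_right]
    have := hcone k c' (hk.2 ▸ hc')
    rw [hk.2] at this
    exact mul_pos (hApos k (by simp [hk.2])) this
  have := hcone i c' hc'
  positivity
end

section
/- (Monotone global directional margin) Let w_1,…,w_K ∈ ℝ^d, let C_c := {x ∈ ℝ^d : ⟨w_c − w_{c'}, x⟩ > 0 for all c' ≠ c}, let μ_c^{(t)} := (1/|S_c|) Σ_{i∈S_c} x_i^{(t)} be the class centroids, and define the global directional margin M_t := Σ_{c=1}^K Σ_{c'≠c} ⟨w_c − w_{c'}, μ_c^{(t)} − μ_{c'}^{(t)}⟩. If K ≥ 2 and at time 0 every training point lies in the cone of its class (x_i^{(0)} ∈ C_{c(i)} for all i), then M_t is strictly increasing in t: M_{t+1} > M_t for all t ≥ 0. -/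
open Finset Real
open scoped RealInnerProductSpace BigOperators

/-- **Monotone global directional margin.** With class centroids
`μ_c^{(t)} = (1/|S_c|) Σ_{i∈S_c} x_i^{(t)}` and global directional margin
`M_t = Σ_c Σ_{c'≠c} ⟨w_c − w_{c'}, μ_c^{(t)} − μ_{c'}^{(t)}⟩`, if `K ≥ 2` and at
time `0` every training point lies in the cone of its class, then `M_t` is
strictly increasing in `t`. -/
theorem directional_margin_strictly_increasing
    (d n K : ℕ) (hK : 2 ≤ K)
    (α α' γ' : ℝ) (hα : 0 < α) (hα' : 0 < α') (hγ' : 0 < γ')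
    (c : Fin n → Fin K)
    (hclass : ∀ k : Fin K, ∃ j, c j = k)
    (w : Fin K → EuclideanSpace ℝ (Fin d))
    (x : ℕ → Fin n → EuclideanSpace ℝ (Fin d))
    (A : ℕ → Fin n → Fin n → ℝ)
    (hA : ∀ t j k, A t j k =
      if c k = c j then
        Real.exp (α * ⟪x t j, x t k⟫) /
          ∑ s ∈ Finset.univ.filter (fun s => c s = c j), Real.exp (α * ⟪x t j, x t s⟫)
      else 0)
    (hx : ∀ t j, x (t+1) j =
      x t j + α' • ∑ k ∈ Finset.univ.filter (fun k => c k = c j), A t j k • x t k)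
    (hcone0 : ∀ i : Fin n, ∀ c' : Fin K, c' ≠ c i → 0 < ⟪w (c i) - w c', x 0 i⟫)
    (μ : Fin K → ℕ → EuclideanSpace ℝ (Fin d))
    (hμ : ∀ cc t, μ cc t =
      (((Finset.univ.filter (fun i => c i = cc)).card : ℝ))⁻¹ •
        ∑ i ∈ Finset.univ.filter (fun i => c i = cc), x t i)
    (M : ℕ → ℝ)
    (hM : ∀ t, M t =
      ∑ cc : Fin K, ∑ cc' ∈ Finset.univ.filter (fun cc' => cc' ≠ cc),
        ⟪w cc - w cc', μ cc t - μ cc' t⟫) :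
    ∀ t, M t < M (t + 1) := by
  -- attention weights within a class are positive
  have hApos : ∀ t (j k : Fin n), c k = c j → 0 < A t j k := by
    intro t j k hk
    rw [hA t j k, if_pos hk]
    apply div_pos (Real.exp_pos _)
    apply Finset.sum_pos (fun s _ => Real.exp_pos _)
    exact ⟨j, by simp⟩
  -- cone membership is preserved
  have hcone : ∀ t (i : Fin n) (c' : Fin K), c' ≠ c i → 0 < ⟪w (c i) - w c', x t i⟫ := by
    intro t
    induction t with
    | zero => exact hcone0
    | succ t ih =>
      intro i c' h
      rw [hx t i, inner_add_right, inner_smul_right, inner_sum]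
      have h2 : 0 < ∑ k ∈ Finset.univ.filter (fun k => c k = c i),
          ⟪w (c i) - w c', A t i k • x t k⟫ := by
        apply Finset.sum_pos
        · intro k hk
          simp only [Finset.mem_filter] at hk
          rw [inner_smul_right]
          have hk' : c k = c i := hk.2
          have := ih k c' (hk' ▸ h)
          rw [hk'] at this
          exact mul_pos (hApos t i k hk') this
        · exact ⟨i, by simp⟩
      have h1 := ih i c' h
      nlinarith
  -- centroid inner products strictly increase along favourable directions
  have hstep : ∀ t (cc : Fin K) (v : EuclideanSpace ℝ (Fin d)),
      (∀ k : Fin n, c k = cc → 0 < ⟪v, x t k⟫) →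
      ⟪v, μ cc t⟫ < ⟪v, μ cc (t+1)⟫ := by
    intro t cc v hv
    rw [hμ cc t, hμ cc (t+1), inner_smul_right, inner_smul_right, inner_sum, inner_sum]
    have hne : (Finset.univ.filter (fun i => c i = cc)).Nonempty := by
      obtain ⟨j, hj⟩ := hclass cc
      exact ⟨j, by simp [hj]⟩
    have hcard : (0:ℝ) < ((Finset.univ.filter (fun i => c i = cc)).card : ℝ) := by
      exact_mod_cast Finset.card_pos.mpr hne
    apply mul_lt_mul_of_pos_left _ (inv_pos.mpr hcard)
    apply Finset.sum_lt_sum_of_nonempty hne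
    intro i hi
    simp only [Finset.mem_filter] at hi
    rw [hx t i, inner_add_right, inner_smul_right, inner_sum]
    have h2 : 0 < ∑ k ∈ Finset.univ.filter (fun k => c k = c i),
        ⟪v, A t i k • x t k⟫ := by
      apply Finset.sum_pos
      · intro k hk
        simp only [Finset.mem_filter] at hk
        rw [inner_smul_right]
        exact mul_pos (hApos t i k hk.2) (hv k (hk.2.trans hi.2))
      · exact ⟨i, by simp⟩
    nlinarith
  intro t
  haveI : NeZero K := ⟨by omega⟩
  rw [hM t, hM (t+1)]
  apply Finset.sum_lt_sum_of_nonempty Finset.univ_nonempty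
  intro cc _
  have hne' : (Finset.univ.filter (fun cc' => cc' ≠ cc)).Nonempty := by
    obtain ⟨cc', hcc'⟩ := Fintype.exists_ne_of_one_lt_card (by rw [Fintype.card_fin]; omega) cc
    exact ⟨cc', by simp [hcc']⟩
  apply Finset.sum_lt_sum_of_nonempty hne'
  intro cc' hcc'
  simp only [Finset.mem_filter] at hcc'
  have h1 : ⟪w cc - w cc', μ cc t⟫ < ⟪w cc - w cc', μ cc (t+1)⟫ := by
    apply hstep t cc
    intro k hk
    have := hcone t k cc' (by rw [hk]; exact hcc'.2)
    rwa [hk] at this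
  have h2 : ⟪-(w cc - w cc'), μ cc' t⟫ < ⟪-(w cc - w cc'), μ cc' (t+1)⟫ := by
    apply hstep t cc'
    intro k hk
    have := hcone t k cc (by rw [hk]; exact fun h => hcc'.2 h.symm)
    rw [hk] at this
    have heq : w cc' - w cc = -(w cc - w cc') := by abel
    rwa [heq] at this
  rw [inner_neg_left, inner_neg_left] at h2
  rw [inner_sub_right, inner_sub_right]
  linarith
end

section
/- (Within-class alignment recursion) For every t ∈ ℕ, the minimal within-class inner product of the correct class satisfies ρ_{t+1} ≥ (1+α')² ρ_t, where ρ_t := min_{i,j∈S_{c*}} ⟨x_i^{(t)}, x_j^{(t)}⟩. -/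
open Finset Real
open scoped RealInnerProductSpace BigOperators

/-- **Within-class alignment recursion.** Under the block-diagonal
feature update, the minimal within-class inner product of the correct class
`ρ_t = min_{i,j∈S_{c*}} ⟨x_i^{(t)}, x_j^{(t)}⟩` satisfies `ρ_{t+1} ≥ (1+α')² ρ_t`. -/
theorem within_class_alignment_recursion
    (d n K : ℕ)
    (α α' γ' : ℝ) (hα : 0 < α) (hα' : 0 < α') (hγ' : 0 < γ')
    (c : Fin n → Fin K)
    (hclass : ∀ k : Fin K, ∃ j, c j = k)
    (cstar : Fin K)
    (hne : (Finset.univ.filter (fun i => c i = cstar)).Nonempty)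
    (hcard : (Finset.univ.filter (fun i => c i = cstar)).card < n)
    (x : ℕ → Fin n → EuclideanSpace ℝ (Fin d))
    (A : ℕ → Fin n → Fin n → ℝ)
    (hA : ∀ t j k, A t j k =
      if c k = c j then
        Real.exp (α * ⟪x t j, x t k⟫) /
          ∑ s ∈ Finset.univ.filter (fun s => c s = c j), Real.exp (α * ⟪x t j, x t s⟫)
      else 0)
    (hx : ∀ t j, x (t+1) j =
      x t j + α' • ∑ k ∈ Finset.univ.filter (fun k => c k = c j), A t j k • x t k)
    (ρ : ℕ → ℝ)
    (hρ : ∀ t, ρ t =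
      ((Finset.univ.filter (fun i => c i = cstar)) ×ˢ
          (Finset.univ.filter (fun i => c i = cstar))).inf' (hne.product hne)
        (fun p => ⟪x t p.1, x t p.2⟫)) :
    ∀ t, (1 + α') ^ 2 * ρ t ≤ ρ (t + 1) := by
  intro t
  set S := Finset.univ.filter (fun i => c i = cstar) with hS
  have hρle : ∀ a ∈ S, ∀ b ∈ S, ρ t ≤ ⟪x t a, x t b⟫ := by
    intro a ha b hb
    have hmem : (a, b) ∈ (Finset.univ.filter (fun i => c i = cstar)) ×ˢ
        (Finset.univ.filter (fun i => c i = cstar)) := Finset.mem_product.mpr ⟨ha, hb⟩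
    have h2 := Finset.inf'_le (b := (a, b))
      (fun p : Fin n × Fin n => ⟪x t p.1, x t p.2⟫) hmem
    rw [hρ t]
    exact h2
  have hDpos : ∀ j, 0 < ∑ s ∈ Finset.univ.filter (fun s => c s = c j),
      Real.exp (α * ⟪x t j, x t s⟫) := by
    intro j
    apply Finset.sum_pos (fun s _ => Real.exp_pos _)
    exact ⟨j, by simp⟩
  have hApos : ∀ j k, 0 ≤ A t j k := by
    intro j k
    rw [hA]
    split
    · exact div_nonneg (Real.exp_pos _).le (hDpos j).le
    · exact le_refl _
  have hAsum : ∀ j, ∑ k ∈ Finset.univ.filter (fun k => c k = c j), A t j k = 1 := by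
    intro j
    rw [Finset.sum_congr rfl (fun k hk => by
      rw [hA, if_pos (by simpa using hk)])]
    rw [← Finset.sum_div]
    exact div_self (hDpos j).ne'
  have hfilter : ∀ j ∈ S, Finset.univ.filter (fun k => c k = c j) = S := by
    intro j hj
    have hj' : c j = cstar := by simpa [hS] using hj
    ext k
    simp [hS, hj']
  rw [hρ (t + 1)]
  apply Finset.le_inf'
  rintro ⟨i, j⟩ hp
  have hi : i ∈ S := (Finset.mem_product.mp hp).1
  have hj : j ∈ S := (Finset.mem_product.mp hp).2
  have hAsumi : ∑ k ∈ S, A t i k = 1 := by rw [← hfilter i hi]; exact hAsum i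
  have hAsumj : ∑ k ∈ S, A t j k = 1 := by rw [← hfilter j hj]; exact hAsum j
  have hxi : x (t + 1) i = x t i + α' • ∑ k ∈ S, A t i k • x t k := by
    rw [hx t i, hfilter i hi]
  have hxj : x (t + 1) j = x t j + α' • ∑ k ∈ S, A t j k • x t k := by
    rw [hx t j, hfilter j hj]
  simp only [hxi, hxj]
  have key : ⟪x t i + α' • ∑ k ∈ S, A t i k • x t k,
             x t j + α' • ∑ k ∈ S, A t j k • x t k⟫
      = ⟪x t i, x t j⟫ + α' * ∑ k ∈ S, A t j k * ⟪x t i, x t k⟫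
        + α' * ∑ k ∈ S, A t i k * ⟪x t k, x t j⟫
        + α' * α' * ∑ k ∈ S, ∑ l ∈ S, A t i k * (A t j l * ⟪x t k, x t l⟫) := by
    simp only [inner_add_left, inner_add_right, real_inner_smul_left,
      real_inner_smul_right, inner_sum, sum_inner, Finset.mul_sum]
    ring_nf
    rw [Finset.sum_comm]
    congr 1
    exact Finset.sum_congr rfl fun k _ => Finset.sum_congr rfl fun l _ => by ring
  rw [key]
  have hB2 : ρ t ≤ ∑ k ∈ S, A t j k * ⟪x t i, x t k⟫ := by
    calc ρ t = ∑ k ∈ S, A t j k * ρ t := by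
          rw [← Finset.sum_mul, hAsumj, one_mul]
      _ ≤ _ := Finset.sum_le_sum fun k hk =>
          mul_le_mul_of_nonneg_left (hρle i hi k hk) (hApos j k)
  have hB3 : ρ t ≤ ∑ k ∈ S, A t i k * ⟪x t k, x t j⟫ := by
    calc ρ t = ∑ k ∈ S, A t i k * ρ t := by
          rw [← Finset.sum_mul, hAsumi, one_mul]
      _ ≤ _ := Finset.sum_le_sum fun k hk =>
          mul_le_mul_of_nonneg_left (hρle k hk j hj) (hApos i k)
  have hB4 : ρ t ≤ ∑ k ∈ S, ∑ l ∈ S, A t i k * (A t j l * ⟪x t k, x t l⟫) := by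
    calc ρ t = ∑ k ∈ S, A t i k * ∑ l ∈ S, A t j l * ρ t := by
          rw [show (∑ l ∈ S, A t j l * ρ t) = ρ t by
            rw [← Finset.sum_mul, hAsumj, one_mul],
            ← Finset.sum_mul, hAsumi, one_mul]
      _ ≤ _ := by
          refine Finset.sum_le_sum fun k hk => ?_
          rw [Finset.mul_sum]
          refine Finset.sum_le_sum fun l hl => ?_
          exact mul_le_mul_of_nonneg_left
            (mul_le_mul_of_nonneg_left (hρle k hk l hl) (hApos j l)) (hApos i k)
  have hB1 : ρ t ≤ ⟪x t i, x t j⟫ := hρle i hi j hj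
  nlinarith [hα'.le, mul_le_mul_of_nonneg_left hB2 hα'.le,
    mul_le_mul_of_nonneg_left hB3 hα'.le,
    mul_le_mul_of_nonneg_left hB4 (mul_nonneg hα'.le hα'.le)]
end

section
/- (Cross-class alignment recursion) For every t ∈ ℕ, the maximal cross-class inner product involving the correct class satisfies Λ_{t+1} ≤ (1+α')² Λ_t, where Λ_t := max_{i∈S_{c*}, j∉S_{c*}} ⟨x_i^{(t)}, x_j^{(t)}⟩. -/
open Finset Real
open scoped RealInnerProductSpace BigOperators

/-- **Cross-class alignment recursion.** Under the block-diagonal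
feature update, the maximal cross-class inner product involving the correct class
`Λ_t = max_{i∈S_{c*}, j∉S_{c*}} ⟨x_i^{(t)}, x_j^{(t)}⟩` satisfies
`Λ_{t+1} ≤ (1+α')² Λ_t`. -/
theorem cross_class_alignment_recursion
    (d n K : ℕ)
    (α α' γ' : ℝ) (hα : 0 < α) (hα' : 0 < α') (hγ' : 0 < γ')
    (c : Fin n → Fin K)
    (hclass : ∀ k : Fin K, ∃ j, c j = k)
    (cstar : Fin K)
    (hne : (Finset.univ.filter (fun i => c i = cstar)).Nonempty)
    (hne' : (Finset.univ.filter (fun i => c i ≠ cstar)).Nonempty)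
    (hcard : (Finset.univ.filter (fun i => c i = cstar)).card < n)
    (x : ℕ → Fin n → EuclideanSpace ℝ (Fin d))
    (A : ℕ → Fin n → Fin n → ℝ)
    (hA : ∀ t j k, A t j k =
      if c k = c j then
        Real.exp (α * ⟪x t j, x t k⟫) /
          ∑ s ∈ Finset.univ.filter (fun s => c s = c j), Real.exp (α * ⟪x t j, x t s⟫)
      else 0)
    (hx : ∀ t j, x (t+1) j =
      x t j + α' • ∑ k ∈ Finset.univ.filter (fun k => c k = c j), A t j k • x t k)
    (Λ : ℕ → ℝ)
    (hΛ : ∀ t, Λ t =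
      ((Finset.univ.filter (fun i => c i = cstar)) ×ˢ
          (Finset.univ.filter (fun i => c i ≠ cstar))).sup' (hne.product hne')
        (fun p => ⟪x t p.1, x t p.2⟫)) :
    ∀ t, Λ (t + 1) ≤ (1 + α') ^ 2 * Λ t := by
  intro t
  have hS : ∀ j : Fin n, (Finset.univ.filter (fun k => c k = c j)).Nonempty :=
    fun j => ⟨j, by simp⟩
  have hApos : ∀ j k : Fin n, 0 ≤ A t j k := by
    intro j k
    rw [hA]
    split
    · exact div_nonneg (Real.exp_pos _).le
        (Finset.sum_pos (fun s _ => (Real.exp_pos _)) (hS j)).le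
    · exact le_refl 0
  have hAsum : ∀ j : Fin n,
      ∑ k ∈ Finset.univ.filter (fun k => c k = c j), A t j k = 1 := by
    intro j
    have hd : 0 < ∑ s ∈ Finset.univ.filter (fun s => c s = c j),
        Real.exp (α * ⟪x t j, x t s⟫) :=
      Finset.sum_pos (fun s _ => Real.exp_pos _) (hS j)
    have hc : ∀ k ∈ Finset.univ.filter (fun k => c k = c j),
        A t j k = Real.exp (α * ⟪x t j, x t k⟫) /
          ∑ s ∈ Finset.univ.filter (fun s => c s = c j),
            Real.exp (α * ⟪x t j, x t s⟫) := by
      intro k hk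
      rw [hA, if_pos (Finset.mem_filter.mp hk).2]
    rw [Finset.sum_congr rfl hc, ← Finset.sum_div, div_self hd.ne']
  have hΛle : ∀ a b : Fin n, c a = cstar → c b ≠ cstar → ⟪x t a, x t b⟫ ≤ Λ t := by
    intro a b ha hb
    rw [hΛ]
    have hmem : (a, b) ∈ (Finset.univ.filter (fun i => c i = cstar)) ×ˢ
        (Finset.univ.filter (fun i => c i ≠ cstar)) :=
      Finset.mem_product.mpr ⟨Finset.mem_filter.mpr ⟨Finset.mem_univ _, ha⟩,
        Finset.mem_filter.mpr ⟨Finset.mem_univ _, hb⟩⟩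
    exact Finset.le_sup' (fun p : Fin n × Fin n => ⟪x t p.1, x t p.2⟫) hmem
  rw [hΛ (t+1)]
  apply Finset.sup'_le
  rintro ⟨i, j⟩ hp
  obtain ⟨hp1, hp2⟩ := Finset.mem_product.mp hp
  have hci : c i = cstar := (Finset.mem_filter.mp hp1).2
  have hcj : c j ≠ cstar := (Finset.mem_filter.mp hp2).2
  simp only
  rw [hx t i, hx t j]
  set su := ∑ k ∈ Finset.univ.filter (fun k => c k = c i), A t i k • x t k with hsu
  set sv := ∑ k ∈ Finset.univ.filter (fun k => c k = c j), A t j k • x t k with hsv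
  have h2 : ∀ a : Fin n, c a = cstar → ⟪x t a, sv⟫ ≤ Λ t := by
    intro a ha
    rw [hsv, inner_sum]
    calc ∑ k ∈ Finset.univ.filter (fun k => c k = c j), ⟪x t a, A t j k • x t k⟫
        ≤ ∑ k ∈ Finset.univ.filter (fun k => c k = c j), A t j k * Λ t := by
          apply Finset.sum_le_sum
          intro k hk
          rw [real_inner_smul_right]
          exact mul_le_mul_of_nonneg_left
            (hΛle a k ha (by rw [(Finset.mem_filter.mp hk).2]; exact hcj)) (hApos j k)
      _ = Λ t := by rw [← Finset.sum_mul, hAsum j, one_mul]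
  have h3 : ∀ b : Fin n, c b ≠ cstar → ⟪su, x t b⟫ ≤ Λ t := by
    intro b hb
    rw [hsu, sum_inner]
    calc ∑ k ∈ Finset.univ.filter (fun k => c k = c i), ⟪A t i k • x t k, x t b⟫
        ≤ ∑ k ∈ Finset.univ.filter (fun k => c k = c i), A t i k * Λ t := by
          apply Finset.sum_le_sum
          intro k hk
          rw [real_inner_smul_left]
          exact mul_le_mul_of_nonneg_left
            (hΛle k b (by rw [(Finset.mem_filter.mp hk).2]; exact hci) hb) (hApos i k)
      _ = Λ t := by rw [← Finset.sum_mul, hAsum i, one_mul]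
  have h4 : ⟪su, sv⟫ ≤ Λ t := by
    rw [hsu, sum_inner]
    calc ∑ k ∈ Finset.univ.filter (fun k => c k = c i), ⟪A t i k • x t k, sv⟫
        ≤ ∑ k ∈ Finset.univ.filter (fun k => c k = c i), A t i k * Λ t := by
          apply Finset.sum_le_sum
          intro k hk
          rw [real_inner_smul_left]
          exact mul_le_mul_of_nonneg_left
            (h2 k (by rw [(Finset.mem_filter.mp hk).2]; exact hci)) (hApos i k)
      _ = Λ t := by rw [← Finset.sum_mul, hAsum i, one_mul]
  have h1 : ⟪x t i, x t j⟫ ≤ Λ t := hΛle i j hci hcj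
  have h2' := h2 i hci
  have h3' := h3 j hcj
  have hexp : ⟪x t i + α' • su, x t j + α' • sv⟫ =
      ⟪x t i, x t j⟫ + α' * ⟪x t i, sv⟫ + α' * ⟪su, x t j⟫ + α' * (α' * ⟪su, sv⟫) := by
    rw [inner_add_left, inner_add_right, inner_add_right, real_inner_smul_left,
      real_inner_smul_left, real_inner_smul_right, real_inner_smul_right]
    ring
  rw [hexp]
  nlinarith [mul_le_mul_of_nonneg_left h2' hα'.le, mul_le_mul_of_nonneg_left h3' hα'.le,
    mul_le_mul_of_nonneg_left h4 (mul_nonneg hα'.le hα'.le), sq_nonneg α']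
end

section
/- (Training margin recursion) For every t ∈ ℕ, the training margin Γ_t := ρ_t − Λ_t, with ρ_t := min_{i,j∈S_{c*}} ⟨x_i^{(t)}, x_j^{(t)}⟩ and Λ_t := max_{i∈S_{c*}, j∉S_{c*}} ⟨x_i^{(t)}, x_j^{(t)}⟩, satisfies Γ_{t+1} ≥ (1+α')² Γ_t; in particular if Γ_0 > 0 then Γ_t ≥ Γ_0 (1+α')^{2t} for all t. -/
open Finset Real
open scoped RealInnerProductSpace BigOperators

/-- **Training margin recursion.** Under the block-diagonal feature
update, the training margin `Γ_t = ρ_t − Λ_t` satisfies `Γ_{t+1} ≥ (1+α')² Γ_t`;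
in particular, if `Γ_0 > 0` then `Γ_t ≥ Γ_0 (1+α')^{2t}` for all `t`. -/
theorem training_margin_recursion
    (d n K : ℕ)
    (α α' γ' : ℝ) (hα : 0 < α) (hα' : 0 < α') (hγ' : 0 < γ')
    (c : Fin n → Fin K)
    (hclass : ∀ k : Fin K, ∃ j, c j = k)
    (cstar : Fin K)
    (hne : (Finset.univ.filter (fun i => c i = cstar)).Nonempty)
    (hne' : (Finset.univ.filter (fun i => c i ≠ cstar)).Nonempty)
    (hcard : (Finset.univ.filter (fun i => c i = cstar)).card < n)
    (x : ℕ → Fin n → EuclideanSpace ℝ (Fin d))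
    (A : ℕ → Fin n → Fin n → ℝ)
    (hA : ∀ t j k, A t j k =
      if c k = c j then
        Real.exp (α * ⟪x t j, x t k⟫) /
          ∑ s ∈ Finset.univ.filter (fun s => c s = c j), Real.exp (α * ⟪x t j, x t s⟫)
      else 0)
    (hx : ∀ t j, x (t+1) j =
      x t j + α' • ∑ k ∈ Finset.univ.filter (fun k => c k = c j), A t j k • x t k)
    (ρ : ℕ → ℝ)
    (hρ : ∀ t, ρ t =
      ((Finset.univ.filter (fun i => c i = cstar)) ×ˢ
          (Finset.univ.filter (fun i => c i = cstar))).inf' (hne.product hne)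
        (fun p => ⟪x t p.1, x t p.2⟫))
    (Λ : ℕ → ℝ)
    (hΛ : ∀ t, Λ t =
      ((Finset.univ.filter (fun i => c i = cstar)) ×ˢ
          (Finset.univ.filter (fun i => c i ≠ cstar))).sup' (hne.product hne')
        (fun p => ⟪x t p.1, x t p.2⟫))
    (Γ : ℕ → ℝ)
    (hΓ : ∀ t, Γ t = ρ t - Λ t) :
    (∀ t, (1 + α') ^ 2 * Γ t ≤ Γ (t + 1)) ∧
      (0 < Γ 0 → ∀ t, Γ 0 * (1 + α') ^ (2 * t) ≤ Γ t) := by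
  have hApos : ∀ t j k, 0 ≤ A t j k := by
    intro t j k
    rw [hA]
    split
    · exact div_nonneg (Real.exp_nonneg _)
        (Finset.sum_nonneg fun s _ => (Real.exp_nonneg _))
    · exact le_refl 0
  have hAsum : ∀ t j, ∑ k ∈ Finset.univ.filter (fun k => c k = c j), A t j k = 1 := by
    intro t j
    have hden : 0 < ∑ s ∈ Finset.univ.filter (fun s => c s = c j),
        Real.exp (α * ⟪x t j, x t s⟫) :=
      Finset.sum_pos (fun s _ => Real.exp_pos _) ⟨j, by simp⟩
    have : ∀ k ∈ Finset.univ.filter (fun k => c k = c j),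
        A t j k = Real.exp (α * ⟪x t j, x t k⟫) /
          ∑ s ∈ Finset.univ.filter (fun s => c s = c j), Real.exp (α * ⟪x t j, x t s⟫) := by
      intro k hk
      rw [hA, if_pos (Finset.mem_filter.mp hk).2]
    rw [Finset.sum_congr rfl this, ← Finset.sum_div, div_self hden.ne']
  have hexp : ∀ t i j, ⟪x (t+1) i, x (t+1) j⟫ =
      ⟪x t i, x t j⟫
      + α' * ∑ l ∈ Finset.univ.filter (fun l => c l = c j), A t j l * ⟪x t i, x t l⟫
      + α' * ∑ k ∈ Finset.univ.filter (fun k => c k = c i), A t i k * ⟪x t k, x t j⟫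
      + (α' * α') * ∑ k ∈ Finset.univ.filter (fun k => c k = c i),
          ∑ l ∈ Finset.univ.filter (fun l => c l = c j),
            A t i k * (A t j l * ⟪x t k, x t l⟫) := by
    intro t i j
    rw [hx, hx]
    simp only [inner_add_left, inner_add_right, real_inner_smul_left, real_inner_smul_right,
      sum_inner, inner_sum, Finset.mul_sum]
    ring_nf
    rw [Finset.sum_comm]
    exact congrArg₂ (· + ·) rfl
      (Finset.sum_congr rfl fun k _ => Finset.sum_congr rfl fun l _ => by ring)
  -- pointwise bounds for pairs inside/outside the class
  have hρle : ∀ t i j, c i = cstar → c j = cstar → ρ t ≤ ⟪x t i, x t j⟫ := by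
    intro t i j hi hj
    rw [hρ]
    exact Finset.inf'_le (b := (i, j)) (fun p : Fin n × Fin n => ⟪x t p.1, x t p.2⟫)
      (Finset.mem_product.mpr ⟨Finset.mem_filter.mpr ⟨Finset.mem_univ _, hi⟩,
        Finset.mem_filter.mpr ⟨Finset.mem_univ _, hj⟩⟩)
  have hΛge : ∀ t i j, c i = cstar → c j ≠ cstar → ⟪x t i, x t j⟫ ≤ Λ t := by
    intro t i j hi hj
    rw [hΛ]
    exact Finset.le_sup' (b := (i, j)) (fun p : Fin n × Fin n => ⟪x t p.1, x t p.2⟫)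
      (Finset.mem_product.mpr ⟨Finset.mem_filter.mpr ⟨Finset.mem_univ _, hi⟩,
        Finset.mem_filter.mpr ⟨Finset.mem_univ _, hj⟩⟩)
  have hlow : ∀ t i j, c i = cstar → c j = cstar →
      (1 + α') ^ 2 * ρ t ≤ ⟪x (t+1) i, x (t+1) j⟫ := by
    intro t i j hi hj
    rw [hexp]
    have h1 : ρ t ≤ ∑ l ∈ Finset.univ.filter (fun l => c l = c j),
        A t j l * ⟪x t i, x t l⟫ := by
      calc ρ t = (∑ l ∈ Finset.univ.filter (fun l => c l = c j), A t j l) * ρ t := by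
            rw [hAsum]; ring
        _ = ∑ l ∈ Finset.univ.filter (fun l => c l = c j), A t j l * ρ t := by
            rw [Finset.sum_mul]
        _ ≤ _ := by
            refine Finset.sum_le_sum fun l hl => ?_
            exact mul_le_mul_of_nonneg_left
              (hρle t i l hi (by simpa [hj] using (Finset.mem_filter.mp hl).2))
              (hApos t j l)
    have h2 : ρ t ≤ ∑ k ∈ Finset.univ.filter (fun k => c k = c i),
        A t i k * ⟪x t k, x t j⟫ := by
      calc ρ t = (∑ k ∈ Finset.univ.filter (fun k => c k = c i), A t i k) * ρ t := by
            rw [hAsum]; ring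
        _ = ∑ k ∈ Finset.univ.filter (fun k => c k = c i), A t i k * ρ t := by
            rw [Finset.sum_mul]
        _ ≤ _ := by
            refine Finset.sum_le_sum fun k hk => ?_
            exact mul_le_mul_of_nonneg_left
              (hρle t k j (by simpa [hi] using (Finset.mem_filter.mp hk).2) hj)
              (hApos t i k)
    have h3 : ρ t ≤ ∑ k ∈ Finset.univ.filter (fun k => c k = c i),
        ∑ l ∈ Finset.univ.filter (fun l => c l = c j),
          A t i k * (A t j l * ⟪x t k, x t l⟫) := by
      calc ρ t = (∑ k ∈ Finset.univ.filter (fun k => c k = c i), A t i k) * ρ t := by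
            rw [hAsum]; ring
        _ = ∑ k ∈ Finset.univ.filter (fun k => c k = c i), A t i k * ρ t := by
            rw [Finset.sum_mul]
        _ ≤ _ := by
            refine Finset.sum_le_sum fun k hk => ?_
            have hk' : c k = cstar := by simpa [hi] using (Finset.mem_filter.mp hk).2
            have hinner : ρ t ≤ ∑ l ∈ Finset.univ.filter (fun l => c l = c j),
                A t j l * ⟪x t k, x t l⟫ := by
              calc ρ t = (∑ l ∈ Finset.univ.filter (fun l => c l = c j), A t j l) * ρ t := by
                    rw [hAsum]; ring
                _ = ∑ l ∈ Finset.univ.filter (fun l => c l = c j), A t j l * ρ t := by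
                    rw [Finset.sum_mul]
                _ ≤ _ := by
                    refine Finset.sum_le_sum fun l hl => ?_
                    exact mul_le_mul_of_nonneg_left
                      (hρle t k l hk' (by simpa [hj] using (Finset.mem_filter.mp hl).2))
                      (hApos t j l)
            calc A t i k * ρ t ≤ A t i k * ∑ l ∈ Finset.univ.filter (fun l => c l = c j),
                  A t j l * ⟪x t k, x t l⟫ :=
                  mul_le_mul_of_nonneg_left hinner (hApos t i k)
              _ = _ := by rw [Finset.mul_sum]
    nlinarith [hρle t i j hi hj, sq_nonneg α', hα'.le]
  have hup : ∀ t i j, c i = cstar → c j ≠ cstar →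
      ⟪x (t+1) i, x (t+1) j⟫ ≤ (1 + α') ^ 2 * Λ t := by
    intro t i j hi hj
    rw [hexp]
    have h1 : ∑ l ∈ Finset.univ.filter (fun l => c l = c j),
        A t j l * ⟪x t i, x t l⟫ ≤ Λ t := by
      calc _ ≤ ∑ l ∈ Finset.univ.filter (fun l => c l = c j), A t j l * Λ t := by
            refine Finset.sum_le_sum fun l hl => ?_
            have hl' : c l = c j := (Finset.mem_filter.mp hl).2
            exact mul_le_mul_of_nonneg_left
              (hΛge t i l hi (by rw [hl']; exact hj)) (hApos t j l)
        _ = Λ t := by rw [← Finset.sum_mul, hAsum]; ring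
    have h2 : ∑ k ∈ Finset.univ.filter (fun k => c k = c i),
        A t i k * ⟪x t k, x t j⟫ ≤ Λ t := by
      calc _ ≤ ∑ k ∈ Finset.univ.filter (fun k => c k = c i), A t i k * Λ t := by
            refine Finset.sum_le_sum fun k hk => ?_
            exact mul_le_mul_of_nonneg_left
              (hΛge t k j (by simpa [hi] using (Finset.mem_filter.mp hk).2) hj)
              (hApos t i k)
        _ = Λ t := by rw [← Finset.sum_mul, hAsum]; ring
    have h3 : ∑ k ∈ Finset.univ.filter (fun k => c k = c i),
        ∑ l ∈ Finset.univ.filter (fun l => c l = c j),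
          A t i k * (A t j l * ⟪x t k, x t l⟫) ≤ Λ t := by
      calc _ ≤ ∑ k ∈ Finset.univ.filter (fun k => c k = c i), A t i k * Λ t := by
            refine Finset.sum_le_sum fun k hk => ?_
            have hk' : c k = cstar := by simpa [hi] using (Finset.mem_filter.mp hk).2
            have hinner : ∑ l ∈ Finset.univ.filter (fun l => c l = c j),
                A t j l * ⟪x t k, x t l⟫ ≤ Λ t := by
              calc _ ≤ ∑ l ∈ Finset.univ.filter (fun l => c l = c j), A t j l * Λ t := by
                    refine Finset.sum_le_sum fun l hl => ?_
                    have hl' : c l = c j := (Finset.mem_filter.mp hl).2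
                    exact mul_le_mul_of_nonneg_left
                      (hΛge t k l hk' (by rw [hl']; exact hj)) (hApos t j l)
                _ = Λ t := by rw [← Finset.sum_mul, hAsum]; ring
            calc (∑ l ∈ Finset.univ.filter (fun l => c l = c j),
                  A t i k * (A t j l * ⟪x t k, x t l⟫))
                  = A t i k * ∑ l ∈ Finset.univ.filter (fun l => c l = c j),
                      A t j l * ⟪x t k, x t l⟫ := by rw [Finset.mul_sum]
              _ ≤ A t i k * Λ t := mul_le_mul_of_nonneg_left hinner (hApos t i k)
        _ = Λ t := by rw [← Finset.sum_mul, hAsum]; ring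
    nlinarith [hΛge t i j hi hj, sq_nonneg α', hα'.le]
  have hρstep : ∀ t, (1 + α') ^ 2 * ρ t ≤ ρ (t + 1) := by
    intro t
    rw [hρ (t+1)]
    refine Finset.le_inf' _ _ fun p hp => ?_
    have hp' := Finset.mem_product.mp hp
    exact hlow t p.1 p.2 (Finset.mem_filter.mp hp'.1).2 (Finset.mem_filter.mp hp'.2).2
  have hΛstep : ∀ t, Λ (t + 1) ≤ (1 + α') ^ 2 * Λ t := by
    intro t
    rw [hΛ (t+1)]
    refine Finset.sup'_le _ _ fun p hp => ?_
    have hp' := Finset.mem_product.mp hp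
    exact hup t p.1 p.2 (Finset.mem_filter.mp hp'.1).2 (Finset.mem_filter.mp hp'.2).2
  have hmain : ∀ t, (1 + α') ^ 2 * Γ t ≤ Γ (t + 1) := by
    intro t
    rw [hΓ, hΓ]
    have := hρstep t
    have := hΛstep t
    nlinarith
  refine ⟨hmain, fun h0 t => ?_⟩
  induction t with
  | zero => simp
  | succ t ih =>
    have hpos : (0:ℝ) < (1 + α') ^ 2 := by positivity
    calc Γ 0 * (1 + α') ^ (2 * (t + 1))
        = (1 + α') ^ 2 * (Γ 0 * (1 + α') ^ (2 * t)) := by ring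
      _ ≤ (1 + α') ^ 2 * Γ t := by
          exact mul_le_mul_of_nonneg_left ih hpos.le
      _ ≤ Γ (t + 1) := hmain t
end

section
/- (Test–correct-class alignment lower bound) Assume ‖x^{(0)}‖₂ ≤ 1 and ‖x_i^{(0)}‖₂ ≤ 1 for all i. Then for every t ∈ ℕ, R_{t+1} ≥ (1+α') R_t + α'(1+α') ( p_{c*}^{(t)} ρ_t − (1 − p_{c*}^{(t)}) (1+α')^{2t} ). -/
open Finset Real
open scoped RealInnerProductSpace BigOperators

/-!
Every update is a convex combination added with weight `α'`, so by induction all training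
features stay in the ball of radius `(1 + α')^t`, and any two of them have inner product at
least `-(1 + α')^(2t)`. Pairing the test update with a correct-class feature `x_k`, the
attention mass `p_{c*}` sits on partners of alignment at least `ρ_t` and the remaining mass on
partners of alignment at least `-(1 + α')^(2t)`; this bounds `⟪x^{(t+1)}, x_k^{(t)}⟫` below by
some `B`. The correct-class training update of `x_j` is `x_j` plus `α'` times a convex
combination of such `x_k`, so its alignment with `x^{(t+1)}` is at least `(1 + α') B`.
-/

section

variable {ι F : Type*} [NormedAddCommGroup F] [InnerProductSpace ℝ F]

theorem sum_exp_div_sum_exp (s : Finset ι) (f : ι → ℝ) (hs : s.Nonempty) :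
    ∑ i ∈ s, exp (f i) / ∑ j ∈ s, exp (f j) = 1 := by
  rw [← sum_div, div_self (sum_pos (fun _ _ => exp_pos _) hs).ne']

theorem le_sum_mul_of_forall_le {s : Finset ι} {w f : ι → ℝ} {b : ℝ}
    (hw0 : ∀ i ∈ s, 0 ≤ w i) (hw1 : ∑ i ∈ s, w i = 1) (hb : ∀ i ∈ s, b ≤ f i) :
    b ≤ ∑ i ∈ s, w i * f i :=
  calc b = ∑ i ∈ s, w i * b := by rw [← sum_mul, hw1, one_mul]
    _ ≤ ∑ i ∈ s, w i * f i :=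
      sum_le_sum fun i hi => mul_le_mul_of_nonneg_left (hb i hi) (hw0 i hi)

theorem le_sum_mul_of_le_of_not_le [Fintype ι] (P : ι → Prop) [DecidablePred P]
    {w f : ι → ℝ} {a b : ℝ} (hw0 : ∀ i, 0 ≤ w i) (hw1 : ∑ i, w i = 1)
    (ha : ∀ i, P i → a ≤ f i) (hb : ∀ i, ¬P i → b ≤ f i) :
    (∑ i ∈ univ.filter P, w i) * a + (1 - ∑ i ∈ univ.filter P, w i) * b ≤ ∑ i, w i * f i := by
  have hcompl : 1 - ∑ i ∈ univ.filter P, w i = ∑ i ∈ univ.filter (¬P ·), w i := by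
    rw [← hw1, ← sum_filter_add_sum_filter_not univ P, add_sub_cancel_left]
  rw [hcompl, sum_mul, sum_mul, ← sum_filter_add_sum_filter_not univ P]
  exact add_le_add
    (sum_le_sum fun i hi => mul_le_mul_of_nonneg_left (ha i (mem_filter.mp hi).2) (hw0 i))
    (sum_le_sum fun i hi => mul_le_mul_of_nonneg_left (hb i (mem_filter.mp hi).2) (hw0 i))

theorem norm_add_smul_sum_smul_le {E : Type*} [SeminormedAddCommGroup E] [NormedSpace ℝ E]
    {s : Finset ι} {w : ι → ℝ} {u : ι → E} {v : E} {a B : ℝ} (ha : 0 ≤ a)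
    (hw0 : ∀ i ∈ s, 0 ≤ w i) (hw1 : ∑ i ∈ s, w i = 1) (hv : ‖v‖ ≤ B) (hu : ∀ i ∈ s, ‖u i‖ ≤ B) :
    ‖v + a • ∑ i ∈ s, w i • u i‖ ≤ (1 + a) * B := by
  have hmean : ‖∑ i ∈ s, w i • u i‖ ≤ B := by
    simpa using (convex_closedBall (0 : E) B).sum_mem hw0 hw1 (by simpa using hu)
  calc ‖v + a • ∑ i ∈ s, w i • u i‖ ≤ ‖v‖ + a * ‖∑ i ∈ s, w i • u i‖ := by
        simpa [norm_smul, abs_of_nonneg ha] using norm_add_le v (a • ∑ i ∈ s, w i • u i)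
    _ ≤ B + a * B := by gcongr
    _ = (1 + a) * B := by ring

theorem norm_le_one_add_pow_of_mean_shift {E : Type*} [SeminormedAddCommGroup E]
    [NormedSpace ℝ E] {x : ℕ → ι → E} {W : ℕ → ι → ι → ℝ} {s : ι → Finset ι} {a : ℝ}
    (ha : 0 ≤ a) (hW0 : ∀ t j, ∀ k ∈ s j, 0 ≤ W t j k) (hW1 : ∀ t j, ∑ k ∈ s j, W t j k = 1)
    (hx : ∀ t j, x (t + 1) j = x t j + a • ∑ k ∈ s j, W t j k • x t k)
    (h0 : ∀ i, ‖x 0 i‖ ≤ 1) (t : ℕ) (i : ι) : ‖x t i‖ ≤ (1 + a) ^ t := by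
  induction t generalizing i with
  | zero => simpa using h0 i
  | succ t ih =>
    rw [hx, pow_succ']
    exact norm_add_smul_sum_smul_le ha (hW0 t i) (hW1 t i) (ih i) fun k _ => ih k

theorem neg_sq_le_real_inner {u v : F} {B : ℝ} (hu : ‖u‖ ≤ B) (hv : ‖v‖ ≤ B) :
    -B ^ 2 ≤ ⟪u, v⟫ := by
  have hprod : ‖u‖ * ‖v‖ ≤ B ^ 2 :=
    sq B ▸ mul_le_mul hu hv (norm_nonneg v) ((norm_nonneg u).trans hu)
  linarith [neg_abs_le ⟪u, v⟫, abs_real_inner_le_norm u v]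

theorem add_mul_le_inner_add_smul_sum [Fintype ι] (P : ι → Prop) [DecidablePred P]
    {A : ι → ℝ} {u : ι → F} {v z : F} {a r ρ M : ℝ} (ha : 0 ≤ a)
    (hA0 : ∀ i, 0 ≤ A i) (hA1 : ∑ i, A i = 1) (hr : r ≤ ⟪v, z⟫)
    (hρ : ∀ i, P i → ρ ≤ ⟪u i, z⟫) (hM : ∀ i, ¬P i → -M ≤ ⟪u i, z⟫) :
    r + a * ((∑ i ∈ univ.filter P, A i) * ρ - (1 - ∑ i ∈ univ.filter P, A i) * M) ≤
      ⟪v + a • ∑ i, A i • u i, z⟫ := by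
  have hsplit := le_sum_mul_of_le_of_not_le P hA0 hA1 hρ hM
  rw [inner_add_left, real_inner_smul_left, sum_inner]
  simp only [real_inner_smul_left]
  gcongr
  linarith

theorem mul_le_inner_add_smul_sum {s : Finset ι} {w : ι → ℝ} {u : ι → F} {v y : F} {a B : ℝ}
    (ha : 0 ≤ a) (hw0 : ∀ i ∈ s, 0 ≤ w i) (hw1 : ∑ i ∈ s, w i = 1)
    (hv : B ≤ ⟪y, v⟫) (hu : ∀ i ∈ s, B ≤ ⟪y, u i⟫) :
    (1 + a) * B ≤ ⟪y, v + a • ∑ i ∈ s, w i • u i⟫ := by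
  have hmean := le_sum_mul_of_forall_le hw0 hw1 hu
  rw [inner_add_right, real_inner_smul_right, inner_sum]
  simp only [real_inner_smul_right]
  linarith [mul_le_mul_of_nonneg_left hmean ha]

end

theorem test_correct_class_alignment_lower_bound_general
    (d n K : ℕ)
    (α γ α' γ' : ℝ) (hα' : 0 < α')
    (c : Fin n → Fin K)
    (cstar : Fin K)
    (hne : (Finset.univ.filter (fun i => c i = cstar)).Nonempty)
    (x : ℕ → Fin n → EuclideanSpace ℝ (Fin d))
    (xt : ℕ → EuclideanSpace ℝ (Fin d))
    (yt : ℕ → Fin K → ℝ)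
    (Atr : ℕ → Fin n → Fin n → ℝ)
    (hAtr : ∀ t j k, Atr t j k =
      if c k = c j then
        Real.exp (α * ⟪x t j, x t k⟫) /
          ∑ s ∈ Finset.univ.filter (fun s => c s = c j), Real.exp (α * ⟪x t j, x t s⟫)
      else 0)
    (hx : ∀ t j, x (t+1) j =
      x t j + α' • ∑ k ∈ Finset.univ.filter (fun k => c k = c j), Atr t j k • x t k)
    (A : ℕ → Fin n → ℝ)
    (hA : ∀ t i, A t i =
      Real.exp (α * ⟪xt t, x t i⟫ + γ * (1 + γ') ^ t * yt t (c i)) /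
        ∑ m, Real.exp (α * ⟪xt t, x t m⟫ + γ * (1 + γ') ^ t * yt t (c m)))
    (hxt : ∀ t, xt (t+1) = xt t + α' • ∑ i, A t i • x t i)
    (p : Fin K → ℕ → ℝ)
    (hp : ∀ cc t, p cc t = ∑ j ∈ Finset.univ.filter (fun i => c i = cc), A t j)
    (R ρ : ℕ → ℝ)
    (hR : ∀ t, R t =
      (Finset.univ.filter (fun i => c i = cstar)).inf' hne (fun j => ⟪xt t, x t j⟫))
    (hρ : ∀ t, ρ t =
      ((Finset.univ.filter (fun i => c i = cstar)) ×ˢ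
          (Finset.univ.filter (fun i => c i = cstar))).inf' (hne.product hne)
        (fun q => ⟪x t q.1, x t q.2⟫))
    (hxi0 : ∀ i, ‖x 0 i‖ ≤ 1) :
    ∀ t : ℕ,
      (1 + α') * R t +
        α' * (1 + α') * (p cstar t * ρ t - (1 - p cstar t) * (1 + α') ^ (2 * t)) ≤
      R (t + 1) := by
  intro t
  have hA0 : ∀ i, 0 ≤ A t i := fun i => by rw [hA]; positivity
  have hA1 : ∑ i, A t i = 1 := by
    simp only [hA]; exact sum_exp_div_sum_exp _ _ (hne.mono (subset_univ _))
  have hAtr0 : ∀ t j k, 0 ≤ Atr t j k := fun t j k => by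
    rw [hAtr]; split_ifs <;> positivity
  have hAtr1 : ∀ t j, ∑ k ∈ univ.filter (fun k => c k = c j), Atr t j k = 1 := fun t j => by
    rw [sum_congr rfl fun k hk => by rw [hAtr, if_pos (mem_filter.mp hk).2]]
    exact sum_exp_div_sum_exp _ _ ⟨j, by simp⟩
  have hnorm := norm_le_one_add_pow_of_mean_shift hα'.le (fun t j k _ => hAtr0 t j k) hAtr1 hx hxi0
  set B := R t + α' * (p cstar t * ρ t - (1 - p cstar t) * (1 + α') ^ (2 * t))
    with hB
  have htest : ∀ k ∈ univ.filter (fun i => c i = cstar), B ≤ ⟪xt (t + 1), x t k⟫ := by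
    intro k hk
    have hRk : R t ≤ ⟪xt t, x t k⟫ := by rw [hR]; exact inf'_le _ hk
    have hρk : ∀ i, c i = cstar → ρ t ≤ ⟪x t i, x t k⟫ := fun i hi => by
      rw [hρ]
      exact inf'_le _ (b := (i, k)) (mem_product.mpr ⟨by simpa using hi, hk⟩)
    have hMk : ∀ i, -(1 + α') ^ (2 * t) ≤ ⟪x t i, x t k⟫ := fun i => by
      rw [pow_mul']; exact neg_sq_le_real_inner (hnorm t i) (hnorm t k)
    rw [hB, hxt, hp]
    exact add_mul_le_inner_add_smul_sum (fun i => c i = cstar) hα'.le hA0 hA1 hRk hρk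
      fun i _ => hMk i
  calc _ = (1 + α') * B := by ring
    _ ≤ R (t + 1) := by
      rw [hR (t + 1)]
      refine le_inf' _ _ fun j hj => ?_
      have hclass : univ.filter (fun k => c k = c j) = univ.filter (fun i => c i = cstar) := by
        rw [(mem_filter.mp hj).2]
      rw [hx, hclass]
      exact mul_le_inner_add_smul_sum hα'.le (fun k _ => hAtr0 t j k) (hclass ▸ hAtr1 t j)
        (htest j hj) htest

/-- **Test–correct-class alignment lower bound.** -/
theorem test_correct_class_alignment_lower_bound
    (d n K : ℕ) (hK : 2 ≤ K)
    (α γ α' γ' : ℝ) (hα : 0 < α) (hγ : 0 < γ) (hα' : 0 < α') (hγ' : 0 < γ')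
    (c : Fin n → Fin K)
    (hclass : ∀ k : Fin K, ∃ i, c i = k)
    (cstar : Fin K)
    (hne : (Finset.univ.filter (fun i => c i = cstar)).Nonempty)
    (hne' : (Finset.univ.filter (fun i => c i ≠ cstar)).Nonempty)
    (hcard : (Finset.univ.filter (fun i => c i = cstar)).card < n)
    (x : ℕ → Fin n → EuclideanSpace ℝ (Fin d))
    (xt : ℕ → EuclideanSpace ℝ (Fin d))
    (yt : ℕ → Fin K → ℝ)
    (hyt0 : yt 0 = 0)
    (Atr : ℕ → Fin n → Fin n → ℝ)
    (hAtr : ∀ t j k, Atr t j k =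
      if c k = c j then
        Real.exp (α * ⟪x t j, x t k⟫) /
          ∑ s ∈ Finset.univ.filter (fun s => c s = c j), Real.exp (α * ⟪x t j, x t s⟫)
      else 0)
    (hx : ∀ t j, x (t+1) j =
      x t j + α' • ∑ k ∈ Finset.univ.filter (fun k => c k = c j), Atr t j k • x t k)
    (A : ℕ → Fin n → ℝ)
    (hA : ∀ t i, A t i =
      Real.exp (α * ⟪xt t, x t i⟫ + γ * (1 + γ') ^ t * yt t (c i)) /
        ∑ m, Real.exp (α * ⟪xt t, x t m⟫ + γ * (1 + γ') ^ t * yt t (c m)))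
    (hxt : ∀ t, xt (t+1) = xt t + α' • ∑ i, A t i • x t i)
    (hyt : ∀ t, yt (t+1) =
      yt t + α' • ∑ i, A t i • ((1 + γ') ^ t • (Pi.single (c i) (1 : ℝ) : Fin K → ℝ)))
    (p : Fin K → ℕ → ℝ)
    (hp : ∀ cc t, p cc t = ∑ j ∈ Finset.univ.filter (fun i => c i = cc), A t j)
    (R L Δ ρ Λ Γ : ℕ → ℝ)
    (hR : ∀ t, R t =
      (Finset.univ.filter (fun i => c i = cstar)).inf' hne (fun j => ⟪xt t, x t j⟫))
    (hL : ∀ t, L t =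
      (Finset.univ.filter (fun i => c i ≠ cstar)).sup' hne' (fun j => ⟪xt t, x t j⟫))
    (hΔ : ∀ t, Δ t = R t - L t)
    (hρ : ∀ t, ρ t =
      ((Finset.univ.filter (fun i => c i = cstar)) ×ˢ
          (Finset.univ.filter (fun i => c i = cstar))).inf' (hne.product hne)
        (fun q => ⟪x t q.1, x t q.2⟫))
    (hΛ : ∀ t, Λ t =
      ((Finset.univ.filter (fun i => c i = cstar)) ×ˢ
          (Finset.univ.filter (fun i => c i ≠ cstar))).sup' (hne.product hne')
        (fun q => ⟪x t q.1, x t q.2⟫))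
    (hΓ : ∀ t, Γ t = ρ t - Λ t)
    (hx0 : ‖xt 0‖ ≤ 1) (hxi0 : ∀ i, ‖x 0 i‖ ≤ 1) :
    ∀ t : ℕ,
      (1 + α') * R t +
        α' * (1 + α') * (p cstar t * ρ t - (1 - p cstar t) * (1 + α') ^ (2 * t)) ≤
      R (t + 1) :=
  test_correct_class_alignment_lower_bound_general d n K α γ α' γ' hα' c cstar hne x xt yt Atr hAtr
    hx A hA hxt p hp R ρ hR hρ hxi0
end

section
/- (Test–wrong-class alignment upper bound) Assume ‖x^{(0)}‖₂ ≤ 1 and ‖x_i^{(0)}‖₂ ≤ 1 for all i. Then for every t ∈ ℕ, L_{t+1} ≤ (1+α') L_t + α'(1+α') ( p_{c*}^{(t)} Λ_t + (1 − p_{c*}^{(t)}) (1+α')^{2t} ). -/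
open Finset Real
open scoped RealInnerProductSpace BigOperators

/-- **Test–wrong-class alignment upper bound.** -/
theorem test_wrong_class_alignment_upper_bound
    (d n K : ℕ) (hK : 2 ≤ K)
    (α γ α' γ' : ℝ) (hα : 0 < α) (hγ : 0 < γ) (hα' : 0 < α') (hγ' : 0 < γ')
    (c : Fin n → Fin K)
    (hclass : ∀ k : Fin K, ∃ i, c i = k)
    (cstar : Fin K)
    (hne : (Finset.univ.filter (fun i => c i = cstar)).Nonempty)
    (hne' : (Finset.univ.filter (fun i => c i ≠ cstar)).Nonempty)
    (hcard : (Finset.univ.filter (fun i => c i = cstar)).card < n)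
    (x : ℕ → Fin n → EuclideanSpace ℝ (Fin d))
    (xt : ℕ → EuclideanSpace ℝ (Fin d))
    (yt : ℕ → Fin K → ℝ)
    (hyt0 : yt 0 = 0)
    (Atr : ℕ → Fin n → Fin n → ℝ)
    (hAtr : ∀ t j k, Atr t j k =
      if c k = c j then
        Real.exp (α * ⟪x t j, x t k⟫) /
          ∑ s ∈ Finset.univ.filter (fun s => c s = c j), Real.exp (α * ⟪x t j, x t s⟫)
      else 0)
    (hx : ∀ t j, x (t+1) j =
      x t j + α' • ∑ k ∈ Finset.univ.filter (fun k => c k = c j), Atr t j k • x t k)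
    (A : ℕ → Fin n → ℝ)
    (hA : ∀ t i, A t i =
      Real.exp (α * ⟪xt t, x t i⟫ + γ * (1 + γ') ^ t * yt t (c i)) /
        ∑ m, Real.exp (α * ⟪xt t, x t m⟫ + γ * (1 + γ') ^ t * yt t (c m)))
    (hxt : ∀ t, xt (t+1) = xt t + α' • ∑ i, A t i • x t i)
    (hyt : ∀ t, yt (t+1) =
      yt t + α' • ∑ i, A t i • ((1 + γ') ^ t • (Pi.single (c i) (1 : ℝ) : Fin K → ℝ)))
    (p : Fin K → ℕ → ℝ)
    (hp : ∀ cc t, p cc t = ∑ j ∈ Finset.univ.filter (fun i => c i = cc), A t j)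
    (R L Δ ρ Λ Γ : ℕ → ℝ)
    (hR : ∀ t, R t =
      (Finset.univ.filter (fun i => c i = cstar)).inf' hne (fun j => ⟪xt t, x t j⟫))
    (hL : ∀ t, L t =
      (Finset.univ.filter (fun i => c i ≠ cstar)).sup' hne' (fun j => ⟪xt t, x t j⟫))
    (hΔ : ∀ t, Δ t = R t - L t)
    (hρ : ∀ t, ρ t =
      ((Finset.univ.filter (fun i => c i = cstar)) ×ˢ
          (Finset.univ.filter (fun i => c i = cstar))).inf' (hne.product hne)
        (fun q => ⟪x t q.1, x t q.2⟫))
    (hΛ : ∀ t, Λ t =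
      ((Finset.univ.filter (fun i => c i = cstar)) ×ˢ
          (Finset.univ.filter (fun i => c i ≠ cstar))).sup' (hne.product hne')
        (fun q => ⟪x t q.1, x t q.2⟫))
    (hΓ : ∀ t, Γ t = ρ t - Λ t)
    (hx0 : ‖xt 0‖ ≤ 1) (hxi0 : ∀ i, ‖x 0 i‖ ≤ 1) :
    ∀ t : ℕ,
      L (t + 1) ≤
        (1 + α') * L t +
          α' * (1 + α') * (p cstar t * Λ t + (1 - p cstar t) * (1 + α') ^ (2 * t)) := by
  have hα'0 : (0:ℝ) ≤ α' := le_of_lt hα'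
  have hone : (0:ℝ) < 1 + α' := by linarith
  obtain ⟨i0, _⟩ := hne
  haveI : Nonempty (Fin n) := ⟨i0⟩
  -- Atr properties
  have hAtr_nonneg : ∀ t j k, 0 ≤ Atr t j k := by
    intro t j k
    rw [hAtr]
    split
    · exact div_nonneg (Real.exp_pos _).le
        (Finset.sum_nonneg fun s _ => (Real.exp_pos _).le)
    · exact le_refl 0
  have hAtr_sum : ∀ t j,
      ∑ k ∈ Finset.univ.filter (fun k => c k = c j), Atr t j k = 1 := by
    intro t j
    have hD : 0 < ∑ s ∈ Finset.univ.filter (fun s => c s = c j),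
        Real.exp (α * ⟪x t j, x t s⟫) :=
      Finset.sum_pos (fun s _ => Real.exp_pos _) ⟨j, by simp⟩
    have heach : ∀ k ∈ Finset.univ.filter (fun k => c k = c j),
        Atr t j k = Real.exp (α * ⟪x t j, x t k⟫) /
          ∑ s ∈ Finset.univ.filter (fun s => c s = c j),
            Real.exp (α * ⟪x t j, x t s⟫) := by
      intro k hk
      rw [hAtr, if_pos (Finset.mem_filter.mp hk).2]
    rw [Finset.sum_congr rfl heach, ← Finset.sum_div, div_self hD.ne']
  -- A properties
  have hA_nonneg : ∀ t i, 0 ≤ A t i := by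
    intro t i
    rw [hA]
    exact div_nonneg (Real.exp_pos _).le
      (Finset.sum_nonneg fun s _ => (Real.exp_pos _).le)
  have hA_sum : ∀ t, ∑ i, A t i = 1 := by
    intro t
    have hD : 0 < ∑ m, Real.exp (α * ⟪xt t, x t m⟫ + γ * (1 + γ') ^ t * yt t (c m)) :=
      Finset.sum_pos (fun s _ => Real.exp_pos _) Finset.univ_nonempty
    have heach : ∀ i ∈ Finset.univ, A t i =
        Real.exp (α * ⟪xt t, x t i⟫ + γ * (1 + γ') ^ t * yt t (c i)) /
          ∑ m, Real.exp (α * ⟪xt t, x t m⟫ + γ * (1 + γ') ^ t * yt t (c m)) :=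
      fun i _ => hA t i
    rw [Finset.sum_congr rfl heach, ← Finset.sum_div, div_self hD.ne']
  -- norm growth
  have hnorm : ∀ t i, ‖x t i‖ ≤ (1 + α') ^ t := by
    intro t
    induction t with
    | zero => intro i; simpa using hxi0 i
    | succ t ih =>
      intro j
      rw [hx t j]
      have h1 : ‖∑ k ∈ Finset.univ.filter (fun k => c k = c j), Atr t j k • x t k‖
          ≤ (1 + α') ^ t := by
        calc ‖∑ k ∈ Finset.univ.filter (fun k => c k = c j), Atr t j k • x t k‖
            ≤ ∑ k ∈ Finset.univ.filter (fun k => c k = c j), ‖Atr t j k • x t k‖ :=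
              norm_sum_le _ _
          _ = ∑ k ∈ Finset.univ.filter (fun k => c k = c j), Atr t j k * ‖x t k‖ := by
              refine Finset.sum_congr rfl fun k _ => ?_
              rw [norm_smul, Real.norm_eq_abs, abs_of_nonneg (hAtr_nonneg t j k)]
          _ ≤ ∑ k ∈ Finset.univ.filter (fun k => c k = c j), Atr t j k * (1 + α') ^ t :=
              Finset.sum_le_sum fun k _ =>
                mul_le_mul_of_nonneg_left (ih k) (hAtr_nonneg t j k)
          _ = (1 + α') ^ t := by rw [← Finset.sum_mul, hAtr_sum t j, one_mul]
      calc ‖x t j + α' • ∑ k ∈ Finset.univ.filter (fun k => c k = c j), Atr t j k • x t k‖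
          ≤ ‖x t j‖ + ‖α' • ∑ k ∈ Finset.univ.filter (fun k => c k = c j), Atr t j k • x t k‖ :=
            norm_add_le _ _
        _ ≤ (1 + α') ^ t + α' * (1 + α') ^ t := by
            rw [norm_smul, Real.norm_eq_abs, abs_of_nonneg hα'0]
            exact add_le_add (ih j) (mul_le_mul_of_nonneg_left h1 hα'0)
        _ = (1 + α') ^ (t + 1) := by ring
  have hip : ∀ t i k, ⟪x t i, x t k⟫ ≤ (1 + α') ^ (2 * t) := by
    intro t i k
    calc ⟪x t i, x t k⟫ ≤ ‖x t i‖ * ‖x t k‖ := real_inner_le_norm _ _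
      _ ≤ (1 + α') ^ t * (1 + α') ^ t :=
          mul_le_mul (hnorm t i) (hnorm t k) (norm_nonneg _) (pow_nonneg hone.le t)
      _ = (1 + α') ^ (2 * t) := by rw [← pow_add, two_mul]
  intro t
  rw [hL (t + 1)]
  apply Finset.sup'_le
  intro j hj
  have hjc : c j ≠ cstar := (Finset.mem_filter.mp hj).2
  show ⟪xt (t + 1), x (t + 1) j⟫ ≤ _
  rw [hxt t, hx t j]
  set S1 := ∑ i, A t i • x t i with hS1
  set S2 := ∑ k ∈ Finset.univ.filter (fun k => c k = c j), Atr t j k • x t k with hS2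
  have hexp : ⟪xt t + α' • S1, x t j + α' • S2⟫
      = ⟪xt t, x t j⟫ + α' * ⟪xt t, S2⟫ + α' * ⟪S1, x t j⟫ + α' * α' * ⟪S1, S2⟫ := by
    simp only [inner_add_left, inner_add_right, real_inner_smul_left, real_inner_smul_right]
    ring
  rw [hexp]
  have hS2ip : ∀ v : EuclideanSpace ℝ (Fin d), ⟪v, S2⟫
      = ∑ k ∈ Finset.univ.filter (fun k => c k = c j), Atr t j k * ⟪v, x t k⟫ := by
    intro v
    rw [hS2, inner_sum]
    exact Finset.sum_congr rfl fun k _ => real_inner_smul_right _ _ _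
  have hS1ip : ∀ v : EuclideanSpace ℝ (Fin d), ⟪S1, v⟫ = ∑ i, A t i * ⟪x t i, v⟫ := by
    intro v
    rw [hS1, sum_inner]
    exact Finset.sum_congr rfl fun i _ => real_inner_smul_left _ _ _
  -- bound pieces
  have hb1 : ⟪xt t, x t j⟫ ≤ L t := by
    rw [hL t]; exact Finset.le_sup' (fun i => ⟪xt t, x t i⟫) hj
  have hmemL : ∀ k : Fin n, c k = c j → ⟪xt t, x t k⟫ ≤ L t := by
    intro k hk
    have hkc : c k ≠ cstar := by rw [hk]; exact hjc
    rw [hL t]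
    exact Finset.le_sup' (fun i => ⟪xt t, x t i⟫)
      (Finset.mem_filter.mpr ⟨Finset.mem_univ _, hkc⟩)
  have hb2 : ⟪xt t, S2⟫ ≤ L t := by
    rw [hS2ip]
    calc ∑ k ∈ Finset.univ.filter (fun k => c k = c j), Atr t j k * ⟪xt t, x t k⟫
        ≤ ∑ k ∈ Finset.univ.filter (fun k => c k = c j), Atr t j k * L t :=
          Finset.sum_le_sum fun k hk =>
            mul_le_mul_of_nonneg_left (hmemL k (Finset.mem_filter.mp hk).2) (hAtr_nonneg t j k)
      _ = L t := by rw [← Finset.sum_mul, hAtr_sum t j, one_mul]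
  have key : ∀ g : Fin n → ℝ, (∀ i, c i = cstar → g i ≤ Λ t) →
      (∀ i, c i ≠ cstar → g i ≤ (1 + α') ^ (2 * t)) →
      ∑ i, A t i * g i ≤ p cstar t * Λ t + (1 - p cstar t) * (1 + α') ^ (2 * t) := by
    intro g h1 h2
    have hsplit : ∑ i, A t i * g i
        = ∑ i ∈ Finset.univ.filter (fun i => c i = cstar), A t i * g i
          + ∑ i ∈ Finset.univ.filter (fun i => ¬ c i = cstar), A t i * g i :=
      (Finset.sum_filter_add_sum_filter_not _ _ _).symm
    have hp2 : ∑ i ∈ Finset.univ.filter (fun i => ¬ c i = cstar), A t i = 1 - p cstar t := by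
      have h3 := Finset.sum_filter_add_sum_filter_not Finset.univ (fun i => c i = cstar) (A t)
      rw [hA_sum t] at h3
      rw [hp cstar t] at *
      linarith
    have ha : ∑ i ∈ Finset.univ.filter (fun i => c i = cstar), A t i * g i
        ≤ p cstar t * Λ t := by
      calc ∑ i ∈ Finset.univ.filter (fun i => c i = cstar), A t i * g i
          ≤ ∑ i ∈ Finset.univ.filter (fun i => c i = cstar), A t i * Λ t :=
            Finset.sum_le_sum fun i hi =>
              mul_le_mul_of_nonneg_left (h1 i (Finset.mem_filter.mp hi).2) (hA_nonneg t i)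
        _ = p cstar t * Λ t := by rw [← Finset.sum_mul, ← hp cstar t]
    have hb : ∑ i ∈ Finset.univ.filter (fun i => ¬ c i = cstar), A t i * g i
        ≤ (1 - p cstar t) * (1 + α') ^ (2 * t) := by
      calc ∑ i ∈ Finset.univ.filter (fun i => ¬ c i = cstar), A t i * g i
          ≤ ∑ i ∈ Finset.univ.filter (fun i => ¬ c i = cstar), A t i * (1 + α') ^ (2 * t) :=
            Finset.sum_le_sum fun i hi =>
              mul_le_mul_of_nonneg_left (h2 i (Finset.mem_filter.mp hi).2) (hA_nonneg t i)
        _ = (1 - p cstar t) * (1 + α') ^ (2 * t) := by rw [← Finset.sum_mul, hp2]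
    rw [hsplit]
    linarith
  have hΛmem : ∀ i k : Fin n, c i = cstar → c k ≠ cstar → ⟪x t i, x t k⟫ ≤ Λ t := by
    intro i k hi hk
    rw [hΛ t]
    have hmem : (i, k) ∈ (Finset.univ.filter (fun i => c i = cstar)) ×ˢ
        (Finset.univ.filter (fun i => c i ≠ cstar)) := by
      simp [Finset.mem_product, hi, hk]
    exact Finset.le_sup' (fun q : Fin n × Fin n => ⟪x t q.1, x t q.2⟫) hmem
  have hb3 : ⟪S1, x t j⟫ ≤ p cstar t * Λ t + (1 - p cstar t) * (1 + α') ^ (2 * t) := by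
    rw [hS1ip]
    exact key _ (fun i hi => hΛmem i j hi hjc) (fun i _ => hip t i j)
  have hb4 : ⟪S1, S2⟫ ≤ p cstar t * Λ t + (1 - p cstar t) * (1 + α') ^ (2 * t) := by
    rw [hS1ip]
    refine key _ (fun i hi => ?_) (fun i _ => ?_)
    · rw [hS2ip]
      calc ∑ k ∈ Finset.univ.filter (fun k => c k = c j), Atr t j k * ⟪x t i, x t k⟫
          ≤ ∑ k ∈ Finset.univ.filter (fun k => c k = c j), Atr t j k * Λ t :=
            Finset.sum_le_sum fun k hk =>
              mul_le_mul_of_nonneg_left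
                (hΛmem i k hi (by rw [(Finset.mem_filter.mp hk).2]; exact hjc))
                (hAtr_nonneg t j k)
        _ = Λ t := by rw [← Finset.sum_mul, hAtr_sum t j, one_mul]
    · rw [hS2ip]
      calc ∑ k ∈ Finset.univ.filter (fun k => c k = c j), Atr t j k * ⟪x t i, x t k⟫
          ≤ ∑ k ∈ Finset.univ.filter (fun k => c k = c j), Atr t j k * (1 + α') ^ (2 * t) :=
            Finset.sum_le_sum fun k _ =>
              mul_le_mul_of_nonneg_left (hip t i k) (hAtr_nonneg t j k)
        _ = (1 + α') ^ (2 * t) := by rw [← Finset.sum_mul, hAtr_sum t j, one_mul]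
  calc ⟪xt t, x t j⟫ + α' * ⟪xt t, S2⟫ + α' * ⟪S1, x t j⟫ + α' * α' * ⟪S1, S2⟫
      ≤ L t + α' * L t + α' * (p cstar t * Λ t + (1 - p cstar t) * (1 + α') ^ (2 * t))
        + α' * α' * (p cstar t * Λ t + (1 - p cstar t) * (1 + α') ^ (2 * t)) :=
        add_le_add (add_le_add (add_le_add hb1 (mul_le_mul_of_nonneg_left hb2 hα'0))
          (mul_le_mul_of_nonneg_left hb3 hα'0))
          (mul_le_mul_of_nonneg_left hb4 (mul_nonneg hα'0 hα'0))
    _ = (1 + α') * L t + α' * (1 + α') * (p cstar t * Λ t + (1 - p cstar t) * (1 + α') ^ (2 * t)) := by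
        ring
end

section
/- (Test margin recursion) Assume ‖x^{(0)}‖₂ ≤ 1 and ‖x_i^{(0)}‖₂ ≤ 1 for all i. Then for every t ∈ ℕ, the test margin satisfies Δ_{t+1} ≥ (1+α') Δ_t + α'(1+α') p_{c*}^{(t)} Γ_t − 2α'(1 − p_{c*}^{(t)}) (1+α')^{2t+1}. -/
open Finset Real
open scoped RealInnerProductSpace BigOperators


private lemma aux_sum_lb {ι : Type*} (T : Finset ι) (w g : ι → ℝ) (b : ℝ)
    (hw : ∀ i ∈ T, 0 ≤ w i) (hg : ∀ i ∈ T, b ≤ g i) :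
    (∑ i ∈ T, w i) * b ≤ ∑ i ∈ T, w i * g i := by
  rw [Finset.sum_mul]
  exact Finset.sum_le_sum fun i hi => mul_le_mul_of_nonneg_left (hg i hi) (hw i hi)

private lemma aux_sum_ub {ι : Type*} (T : Finset ι) (w g : ι → ℝ) (b : ℝ)
    (hw : ∀ i ∈ T, 0 ≤ w i) (hg : ∀ i ∈ T, g i ≤ b) :
    ∑ i ∈ T, w i * g i ≤ (∑ i ∈ T, w i) * b := by
  rw [Finset.sum_mul]
  exact Finset.sum_le_sum fun i hi => mul_le_mul_of_nonneg_left (hg i hi) (hw i hi)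

private lemma aux_norm_sum {ι : Type*} {E : Type*} [NormedAddCommGroup E] [NormedSpace ℝ E]
    (T : Finset ι) (w : ι → ℝ) (v : ι → E) (B : ℝ)
    (hw : ∀ i ∈ T, 0 ≤ w i) (hv : ∀ i ∈ T, ‖v i‖ ≤ B) :
    ‖∑ i ∈ T, w i • v i‖ ≤ (∑ i ∈ T, w i) * B := by
  calc ‖∑ i ∈ T, w i • v i‖ ≤ ∑ i ∈ T, ‖w i • v i‖ := norm_sum_le _ _
    _ = ∑ i ∈ T, w i * ‖v i‖ := by
        refine Finset.sum_congr rfl fun i hi => ?_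
        rw [norm_smul, Real.norm_of_nonneg (hw i hi)]
    _ ≤ (∑ i ∈ T, w i) * B := aux_sum_ub T w _ B hw hv

private lemma aux_inner_sum_right {ι : Type*} {E : Type*} [NormedAddCommGroup E]
    [InnerProductSpace ℝ E] (T : Finset ι) (u : E) (w : ι → ℝ) (v : ι → E) :
    ⟪u, ∑ i ∈ T, w i • v i⟫ = ∑ i ∈ T, w i * ⟪u, v i⟫ := by
  simp [inner_sum, real_inner_smul_right]

private lemma aux_inner_sum_left {ι : Type*} {E : Type*} [NormedAddCommGroup E]
    [InnerProductSpace ℝ E] (T : Finset ι) (u : E) (w : ι → ℝ) (v : ι → E) :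
    ⟪∑ i ∈ T, w i • v i, u⟫ = ∑ i ∈ T, w i * ⟪v i, u⟫ := by
  simp [sum_inner, real_inner_smul_left]

private lemma aux_inner_expand {E : Type*} [NormedAddCommGroup E] [InnerProductSpace ℝ E]
    (u v P Q : E) (a : ℝ) :
    ⟪u + a • P, v + a • Q⟫
      = ⟪u, v⟫ + a * ⟪u, Q⟫ + a * ⟪P, v⟫ + a * a * ⟪P, Q⟫ := by
  simp only [inner_add_left, inner_add_right, real_inner_smul_left, real_inner_smul_right]
  ring

set_option maxHeartbeats 2000000 in
/-- **Test margin recursion.** -/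
theorem test_margin_recursion
    (d n K : ℕ) (hK : 2 ≤ K)
    (α γ α' γ' : ℝ) (hα : 0 < α) (hγ : 0 < γ) (hα' : 0 < α') (hγ' : 0 < γ')
    (c : Fin n → Fin K)
    (hclass : ∀ k : Fin K, ∃ i, c i = k)
    (cstar : Fin K)
    (hne : (Finset.univ.filter (fun i => c i = cstar)).Nonempty)
    (hne' : (Finset.univ.filter (fun i => c i ≠ cstar)).Nonempty)
    (hcard : (Finset.univ.filter (fun i => c i = cstar)).card < n)
    (x : ℕ → Fin n → EuclideanSpace ℝ (Fin d))
    (xt : ℕ → EuclideanSpace ℝ (Fin d))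
    (yt : ℕ → Fin K → ℝ)
    (hyt0 : yt 0 = 0)
    (Atr : ℕ → Fin n → Fin n → ℝ)
    (hAtr : ∀ t j k, Atr t j k =
      if c k = c j then
        Real.exp (α * ⟪x t j, x t k⟫) /
          ∑ s ∈ Finset.univ.filter (fun s => c s = c j), Real.exp (α * ⟪x t j, x t s⟫)
      else 0)
    (hx : ∀ t j, x (t+1) j =
      x t j + α' • ∑ k ∈ Finset.univ.filter (fun k => c k = c j), Atr t j k • x t k)
    (A : ℕ → Fin n → ℝ)
    (hA : ∀ t i, A t i =
      Real.exp (α * ⟪xt t, x t i⟫ + γ * (1 + γ') ^ t * yt t (c i)) /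
        ∑ m, Real.exp (α * ⟪xt t, x t m⟫ + γ * (1 + γ') ^ t * yt t (c m)))
    (hxt : ∀ t, xt (t+1) = xt t + α' • ∑ i, A t i • x t i)
    (hyt : ∀ t, yt (t+1) =
      yt t + α' • ∑ i, A t i • ((1 + γ') ^ t • (Pi.single (c i) (1 : ℝ) : Fin K → ℝ)))
    (p : Fin K → ℕ → ℝ)
    (hp : ∀ cc t, p cc t = ∑ j ∈ Finset.univ.filter (fun i => c i = cc), A t j)
    (R L Δ ρ Λ Γ : ℕ → ℝ)
    (hR : ∀ t, R t =
      (Finset.univ.filter (fun i => c i = cstar)).inf' hne (fun j => ⟪xt t, x t j⟫))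
    (hL : ∀ t, L t =
      (Finset.univ.filter (fun i => c i ≠ cstar)).sup' hne' (fun j => ⟪xt t, x t j⟫))
    (hΔ : ∀ t, Δ t = R t - L t)
    (hρ : ∀ t, ρ t =
      ((Finset.univ.filter (fun i => c i = cstar)) ×ˢ
          (Finset.univ.filter (fun i => c i = cstar))).inf' (hne.product hne)
        (fun q => ⟪x t q.1, x t q.2⟫))
    (hΛ : ∀ t, Λ t =
      ((Finset.univ.filter (fun i => c i = cstar)) ×ˢ
          (Finset.univ.filter (fun i => c i ≠ cstar))).sup' (hne.product hne')
        (fun q => ⟪x t q.1, x t q.2⟫))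
    (hΓ : ∀ t, Γ t = ρ t - Λ t)
    (hx0 : ‖xt 0‖ ≤ 1) (hxi0 : ∀ i, ‖x 0 i‖ ≤ 1) :
    ∀ t : ℕ,
      (1 + α') * Δ t + α' * (1 + α') * p cstar t * Γ t -
          2 * α' * (1 - p cstar t) * (1 + α') ^ (2 * t + 1) ≤
        Δ (t + 1) := by
  classical
  have hα0 : (0:ℝ) ≤ α' := hα'.le
  have h1α : (0:ℝ) < 1 + α' := by linarith
  obtain ⟨i0, hi0⟩ := hne
  -- attention weights: nonnegative, sum to 1
  have hDpos : ∀ t, 0 < ∑ m, Real.exp (α * ⟪xt t, x t m⟫ + γ * (1 + γ') ^ t * yt t (c m)) :=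
    fun t => Finset.sum_pos (fun m _ => Real.exp_pos _) ⟨i0, Finset.mem_univ _⟩
  have hApos : ∀ t i, 0 ≤ A t i := fun t i => by
    rw [hA]
    exact div_nonneg (Real.exp_pos _).le (hDpos t).le
  have hAsum : ∀ t, ∑ i, A t i = 1 := by
    intro t
    have := (hDpos t).ne'
    calc ∑ i, A t i
        = ∑ i, Real.exp (α * ⟪xt t, x t i⟫ + γ * (1 + γ') ^ t * yt t (c i)) /
            ∑ m, Real.exp (α * ⟪xt t, x t m⟫ + γ * (1 + γ') ^ t * yt t (c m)) :=
          Finset.sum_congr rfl fun i _ => hA t i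
      _ = 1 := by rw [← Finset.sum_div, div_self this]
  have hAtrpos : ∀ t j k, 0 ≤ Atr t j k := by
    intro t j k
    rw [hAtr]
    split
    · exact div_nonneg (Real.exp_pos _).le
        (Finset.sum_nonneg fun s _ => (Real.exp_pos _).le)
    · exact le_refl _
  have hAtrsum : ∀ t j, ∑ k ∈ Finset.univ.filter (fun k => c k = c j), Atr t j k = 1 := by
    intro t j
    have hDj : 0 < ∑ s ∈ Finset.univ.filter (fun s => c s = c j),
        Real.exp (α * ⟪x t j, x t s⟫) :=
      Finset.sum_pos (fun s _ => Real.exp_pos _) ⟨j, by simp⟩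
    calc ∑ k ∈ Finset.univ.filter (fun k => c k = c j), Atr t j k
        = ∑ k ∈ Finset.univ.filter (fun k => c k = c j),
            Real.exp (α * ⟪x t j, x t k⟫) / ∑ s ∈ Finset.univ.filter (fun s => c s = c j),
              Real.exp (α * ⟪x t j, x t s⟫) := by
          refine Finset.sum_congr rfl fun k hk => ?_
          rw [hAtr, if_pos (Finset.mem_filter.mp hk).2]
      _ = 1 := by rw [← Finset.sum_div, div_self hDj.ne']
  -- norm growth bound
  have hnorm : ∀ t, ‖xt t‖ ≤ (1+α')^t ∧ ∀ i, ‖x t i‖ ≤ (1+α')^t := by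
    intro t
    induction t with
    | zero => simpa using ⟨hx0, hxi0⟩
    | succ t ih =>
      obtain ⟨ih1, ih2⟩ := ih
      have hstep2 : ∀ i, ‖x (t+1) i‖ ≤ (1+α')^(t+1) := by
        intro j
        rw [hx]
        calc ‖x t j + α' • ∑ k ∈ Finset.univ.filter (fun k => c k = c j), Atr t j k • x t k‖
            ≤ ‖x t j‖ + ‖α' • ∑ k ∈ Finset.univ.filter (fun k => c k = c j), Atr t j k • x t k‖ :=
              norm_add_le _ _
          _ ≤ (1+α')^t + α' * ((∑ k ∈ Finset.univ.filter (fun k => c k = c j), Atr t j k) * (1+α')^t) := by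
              rw [norm_smul, Real.norm_of_nonneg hα0]
              exact add_le_add (ih2 j) (mul_le_mul_of_nonneg_left
                (aux_norm_sum _ _ _ _ (fun k _ => hAtrpos t j k) (fun k _ => ih2 k)) hα0)
          _ = (1+α')^(t+1) := by rw [hAtrsum]; ring
      refine ⟨?_, hstep2⟩
      rw [hxt]
      calc ‖xt t + α' • ∑ i, A t i • x t i‖
          ≤ ‖xt t‖ + ‖α' • ∑ i, A t i • x t i‖ := norm_add_le _ _
        _ ≤ (1+α')^t + α' * ((∑ i, A t i) * (1+α')^t) := by
            rw [norm_smul, Real.norm_of_nonneg hα0]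
            exact add_le_add ih1 (mul_le_mul_of_nonneg_left
              (aux_norm_sum _ _ _ _ (fun i _ => hApos t i) (fun i _ => ih2 i)) hα0)
        _ = (1+α')^(t+1) := by rw [hAsum]; ring
  -- pairwise inner product bounds
  have hIPbd : ∀ t i k, -((1+α')^t * (1+α')^t) ≤ ⟪x t i, x t k⟫ ∧
      ⟪x t i, x t k⟫ ≤ (1+α')^t * (1+α')^t := by
    intro t i k
    have h1 := abs_real_inner_le_norm (x t i) (x t k)
    have h2 : ‖x t i‖ * ‖x t k‖ ≤ (1+α')^t * (1+α')^t :=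
      mul_le_mul ((hnorm t).2 i) ((hnorm t).2 k) (norm_nonneg _) (pow_pos h1α t).le
    exact abs_le.mp (h1.trans h2)
  -- inner product expansion of the update
  have hexp : ∀ (t : ℕ) (j : Fin n),
      ⟪xt (t+1), x (t+1) j⟫ =
        ⟪xt t, x t j⟫
        + α' * ∑ k ∈ Finset.univ.filter (fun k => c k = c j), Atr t j k * ⟪xt t, x t k⟫
        + α' * ∑ i, A t i * ⟪x t i, x t j⟫
        + α' * α' * ∑ i, A t i *
            ∑ k ∈ Finset.univ.filter (fun k => c k = c j), Atr t j k * ⟪x t i, x t k⟫ := by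
    intro t j
    rw [hxt, hx, aux_inner_expand]
    rw [aux_inner_sum_right, aux_inner_sum_left, aux_inner_sum_left]
    congr 1
    refine congrArg _ (Finset.sum_congr rfl fun i _ => ?_)
    rw [aux_inner_sum_right]
  -- sum of A over the complement class
  have hpcompl : ∀ t, ∑ i ∈ Finset.univ.filter (fun i => ¬ c i = cstar), A t i
      = 1 - p cstar t := by
    intro t
    have h := Finset.sum_filter_add_sum_filter_not Finset.univ (fun i => c i = cstar) (A t)
    rw [hAsum t] at h
    rw [hp]
    linarith
  have hp0 : ∀ t, 0 ≤ p cstar t := by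
    intro t
    rw [hp]
    exact Finset.sum_nonneg fun i _ => hApos t i
  -- R recursion (lower bound)
  have hRstep : ∀ t, (1+α') * R t + (α' + α'*α') *
      (p cstar t * ρ t - (1 - p cstar t) * ((1+α')^t * (1+α')^t)) ≤ R (t+1) := by
    intro t
    rw [hR (t+1)]
    apply Finset.le_inf'
    intro j hj
    have hcj : c j = cstar := by simpa using (Finset.mem_filter.mp hj).2
    have hfil : Finset.univ.filter (fun k => c k = c j)
        = Finset.univ.filter (fun i => c i = cstar) := by
      ext k; simp [hcj]
    rw [hexp t j]
    set M2 := (1+α')^t * (1+α')^t with hM2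
    -- T1 bound
    have hT1 : R t ≤ ∑ k ∈ Finset.univ.filter (fun k => c k = c j), Atr t j k * ⟪xt t, x t k⟫ := by
      have := aux_sum_lb (Finset.univ.filter (fun k => c k = c j)) (Atr t j)
        (fun k => ⟪xt t, x t k⟫) (R t) (fun k _ => hAtrpos t j k)
        (fun k hk => by
          rw [hR t]
          have hk' : k ∈ Finset.univ.filter (fun i => c i = cstar) :=
            Finset.mem_filter.mpr ⟨Finset.mem_univ _, ((Finset.mem_filter.mp hk).2).trans hcj⟩
          have h := Finset.inf'_le (s := Finset.univ.filter (fun i => c i = cstar))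
            (fun j => ⟪xt t, x t j⟫) hk'
          exact h)
      rwa [hAtrsum t j, one_mul] at this
    -- T2 bound
    have hT2 : p cstar t * ρ t - (1 - p cstar t) * M2
        ≤ ∑ i, A t i * ⟪x t i, x t j⟫ := by
      rw [← Finset.sum_filter_add_sum_filter_not Finset.univ (fun i => c i = cstar)
        (fun i => A t i * ⟪x t i, x t j⟫)]
      have hA1 : p cstar t * ρ t
          ≤ ∑ i ∈ Finset.univ.filter (fun i => c i = cstar), A t i * ⟪x t i, x t j⟫ := by
        have := aux_sum_lb (Finset.univ.filter (fun i => c i = cstar)) (A t)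
          (fun i => ⟪x t i, x t j⟫) (ρ t) (fun i _ => hApos t i)
          (fun i hi => by
            rw [hρ t]
            have hm : (i, j) ∈ (Finset.univ.filter (fun i => c i = cstar)) ×ˢ
                (Finset.univ.filter (fun i => c i = cstar)) := Finset.mem_product.mpr ⟨hi, hj⟩
            have h := Finset.inf'_le (fun q => ⟪x t q.1, x t q.2⟫) hm
            exact h)
        rwa [← hp] at this
      have hA2 : (1 - p cstar t) * (-M2)
          ≤ ∑ i ∈ Finset.univ.filter (fun i => ¬ c i = cstar), A t i * ⟪x t i, x t j⟫ := by
        have := aux_sum_lb (Finset.univ.filter (fun i => ¬ c i = cstar)) (A t)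
          (fun i => ⟪x t i, x t j⟫) (-M2) (fun i _ => hApos t i)
          (fun i _ => (hIPbd t i j).1)
        rwa [hpcompl t] at this
      linarith [hA1, hA2]
    -- T3 bound
    have hT3 : p cstar t * ρ t - (1 - p cstar t) * M2
        ≤ ∑ i, A t i * ∑ k ∈ Finset.univ.filter (fun k => c k = c j),
            Atr t j k * ⟪x t i, x t k⟫ := by
      rw [← Finset.sum_filter_add_sum_filter_not Finset.univ (fun i => c i = cstar)
        (fun i => A t i * ∑ k ∈ Finset.univ.filter (fun k => c k = c j),
          Atr t j k * ⟪x t i, x t k⟫)]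
      have hg1 : ∀ i ∈ Finset.univ.filter (fun i => c i = cstar),
          ρ t ≤ ∑ k ∈ Finset.univ.filter (fun k => c k = c j), Atr t j k * ⟪x t i, x t k⟫ := by
        intro i hi
        have := aux_sum_lb (Finset.univ.filter (fun k => c k = c j)) (Atr t j)
          (fun k => ⟪x t i, x t k⟫) (ρ t) (fun k _ => hAtrpos t j k)
          (fun k hk => by
            rw [hρ t]
            have hk' : k ∈ Finset.univ.filter (fun i => c i = cstar) :=
              Finset.mem_filter.mpr ⟨Finset.mem_univ _, ((Finset.mem_filter.mp hk).2).trans hcj⟩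
            have hm : (i, k) ∈ (Finset.univ.filter (fun i => c i = cstar)) ×ˢ
                (Finset.univ.filter (fun i => c i = cstar)) := Finset.mem_product.mpr ⟨hi, hk'⟩
            have h := Finset.inf'_le (fun q => ⟪x t q.1, x t q.2⟫) hm
            exact h)
        rwa [hAtrsum t j, one_mul] at this
      have hg2 : ∀ (i : Fin n),
          -M2 ≤ ∑ k ∈ Finset.univ.filter (fun k => c k = c j), Atr t j k * ⟪x t i, x t k⟫ := by
        intro i
        have := aux_sum_lb (Finset.univ.filter (fun k => c k = c j)) (Atr t j)
          (fun k => ⟪x t i, x t k⟫) (-M2) (fun k _ => hAtrpos t j k)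
          (fun k _ => (hIPbd t i k).1)
        rwa [hAtrsum t j, one_mul] at this
      have hA1 : p cstar t * ρ t
          ≤ ∑ i ∈ Finset.univ.filter (fun i => c i = cstar), A t i *
              ∑ k ∈ Finset.univ.filter (fun k => c k = c j), Atr t j k * ⟪x t i, x t k⟫ := by
        have := aux_sum_lb (Finset.univ.filter (fun i => c i = cstar)) (A t)
          (fun i => ∑ k ∈ Finset.univ.filter (fun k => c k = c j), Atr t j k * ⟪x t i, x t k⟫)
          (ρ t) (fun i _ => hApos t i) hg1
        rwa [← hp] at this
      have hA2 : (1 - p cstar t) * (-M2)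
          ≤ ∑ i ∈ Finset.univ.filter (fun i => ¬ c i = cstar), A t i *
              ∑ k ∈ Finset.univ.filter (fun k => c k = c j), Atr t j k * ⟪x t i, x t k⟫ := by
        have := aux_sum_lb (Finset.univ.filter (fun i => ¬ c i = cstar)) (A t)
          (fun i => ∑ k ∈ Finset.univ.filter (fun k => c k = c j), Atr t j k * ⟪x t i, x t k⟫)
          (-M2) (fun i _ => hApos t i) (fun i _ => hg2 i)
        rwa [hpcompl t] at this
      linarith [hA1, hA2]
    have hT0 : R t ≤ ⟪xt t, x t j⟫ := by
      rw [hR t]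
      have h := Finset.inf'_le (s := Finset.univ.filter (fun i => c i = cstar))
        (fun j => ⟪xt t, x t j⟫) hj
      exact h
    linarith [mul_le_mul_of_nonneg_left hT1 hα0, mul_le_mul_of_nonneg_left hT2 hα0,
      mul_le_mul_of_nonneg_left hT3 (mul_nonneg hα0 hα0), hT0]
  -- L recursion (upper bound)
  have hLstep : ∀ t, L (t+1) ≤ (1+α') * L t + (α' + α'*α') *
      (p cstar t * Λ t + (1 - p cstar t) * ((1+α')^t * (1+α')^t)) := by
    intro t
    rw [hL (t+1)]
    apply Finset.sup'_le
    intro j hj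
    have hcj : ¬ c j = cstar := by simpa using (Finset.mem_filter.mp hj).2
    have hksub : ∀ k ∈ Finset.univ.filter (fun k => c k = c j),
        k ∈ Finset.univ.filter (fun i => c i ≠ cstar) := by
      intro k hk
      have := (Finset.mem_filter.mp hk).2
      simp only [Finset.mem_filter, Finset.mem_univ, true_and]
      rw [this]
      exact hcj
    rw [hexp t j]
    set M2 := (1+α')^t * (1+α')^t with hM2
    have hT1 : ∑ k ∈ Finset.univ.filter (fun k => c k = c j), Atr t j k * ⟪xt t, x t k⟫ ≤ L t := by
      have := aux_sum_ub (Finset.univ.filter (fun k => c k = c j)) (Atr t j)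
        (fun k => ⟪xt t, x t k⟫) (L t) (fun k _ => hAtrpos t j k)
        (fun k hk => by
          rw [hL t]
          have h := Finset.le_sup' (fun j => ⟪xt t, x t j⟫) (hksub k hk)
          exact h)
      rwa [hAtrsum t j, one_mul] at this
    have hT2 : ∑ i, A t i * ⟪x t i, x t j⟫
        ≤ p cstar t * Λ t + (1 - p cstar t) * M2 := by
      rw [← Finset.sum_filter_add_sum_filter_not Finset.univ (fun i => c i = cstar)
        (fun i => A t i * ⟪x t i, x t j⟫)]
      have hA1 : ∑ i ∈ Finset.univ.filter (fun i => c i = cstar), A t i * ⟪x t i, x t j⟫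
          ≤ p cstar t * Λ t := by
        have := aux_sum_ub (Finset.univ.filter (fun i => c i = cstar)) (A t)
          (fun i => ⟪x t i, x t j⟫) (Λ t) (fun i _ => hApos t i)
          (fun i hi => by
            rw [hΛ t]
            have hm : (i, j) ∈ (Finset.univ.filter (fun i => c i = cstar)) ×ˢ
                (Finset.univ.filter (fun i => c i ≠ cstar)) := Finset.mem_product.mpr ⟨hi, hj⟩
            have h := Finset.le_sup' (fun q => ⟪x t q.1, x t q.2⟫) hm
            exact h)
        rwa [← hp] at this
      have hA2 : ∑ i ∈ Finset.univ.filter (fun i => ¬ c i = cstar), A t i * ⟪x t i, x t j⟫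
          ≤ (1 - p cstar t) * M2 := by
        have := aux_sum_ub (Finset.univ.filter (fun i => ¬ c i = cstar)) (A t)
          (fun i => ⟪x t i, x t j⟫) M2 (fun i _ => hApos t i)
          (fun i _ => (hIPbd t i j).2)
        rwa [hpcompl t] at this
      linarith
    have hT3 : ∑ i, A t i * ∑ k ∈ Finset.univ.filter (fun k => c k = c j),
          Atr t j k * ⟪x t i, x t k⟫
        ≤ p cstar t * Λ t + (1 - p cstar t) * M2 := by
      rw [← Finset.sum_filter_add_sum_filter_not Finset.univ (fun i => c i = cstar)
        (fun i => A t i * ∑ k ∈ Finset.univ.filter (fun k => c k = c j),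
          Atr t j k * ⟪x t i, x t k⟫)]
      have hg1 : ∀ i ∈ Finset.univ.filter (fun i => c i = cstar),
          ∑ k ∈ Finset.univ.filter (fun k => c k = c j), Atr t j k * ⟪x t i, x t k⟫ ≤ Λ t := by
        intro i hi
        have := aux_sum_ub (Finset.univ.filter (fun k => c k = c j)) (Atr t j)
          (fun k => ⟪x t i, x t k⟫) (Λ t) (fun k _ => hAtrpos t j k)
          (fun k hk => by
            rw [hΛ t]
            have hm : (i, k) ∈ (Finset.univ.filter (fun i => c i = cstar)) ×ˢ
                (Finset.univ.filter (fun i => c i ≠ cstar)) :=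
              Finset.mem_product.mpr ⟨hi, hksub k hk⟩
            have h := Finset.le_sup' (fun q => ⟪x t q.1, x t q.2⟫) hm
            exact h)
        rwa [hAtrsum t j, one_mul] at this
      have hg2 : ∀ (i : Fin n),
          ∑ k ∈ Finset.univ.filter (fun k => c k = c j), Atr t j k * ⟪x t i, x t k⟫ ≤ M2 := by
        intro i
        have := aux_sum_ub (Finset.univ.filter (fun k => c k = c j)) (Atr t j)
          (fun k => ⟪x t i, x t k⟫) M2 (fun k _ => hAtrpos t j k)
          (fun k _ => (hIPbd t i k).2)
        rwa [hAtrsum t j, one_mul] at this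
      have hA1 : ∑ i ∈ Finset.univ.filter (fun i => c i = cstar), A t i *
            ∑ k ∈ Finset.univ.filter (fun k => c k = c j), Atr t j k * ⟪x t i, x t k⟫
          ≤ p cstar t * Λ t := by
        have := aux_sum_ub (Finset.univ.filter (fun i => c i = cstar)) (A t)
          (fun i => ∑ k ∈ Finset.univ.filter (fun k => c k = c j), Atr t j k * ⟪x t i, x t k⟫)
          (Λ t) (fun i _ => hApos t i) hg1
        rwa [← hp] at this
      have hA2 : ∑ i ∈ Finset.univ.filter (fun i => ¬ c i = cstar), A t i *
            ∑ k ∈ Finset.univ.filter (fun k => c k = c j), Atr t j k * ⟪x t i, x t k⟫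
          ≤ (1 - p cstar t) * M2 := by
        have := aux_sum_ub (Finset.univ.filter (fun i => ¬ c i = cstar)) (A t)
          (fun i => ∑ k ∈ Finset.univ.filter (fun k => c k = c j), Atr t j k * ⟪x t i, x t k⟫)
          M2 (fun i _ => hApos t i) (fun i _ => hg2 i)
        rwa [hpcompl t] at this
      linarith
    have hT0 : ⟪xt t, x t j⟫ ≤ L t := by
      rw [hL t]
      have h := Finset.le_sup' (fun j => ⟪xt t, x t j⟫) hj
      exact h
    linarith [mul_le_mul_of_nonneg_left hT1 hα0, mul_le_mul_of_nonneg_left hT2 hα0,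
      mul_le_mul_of_nonneg_left hT3 (mul_nonneg hα0 hα0), hT0]
  -- combine
  intro t
  have hpow : (1+α')^(2*t+1) = (1+α') * ((1+α')^t * (1+α')^t) := by
    rw [pow_succ, two_mul, pow_add]; ring
  have h1 := hRstep t
  have h2 := hLstep t
  rw [hΔ (t+1), hΔ t, hΓ t, hpow]
  linarith [h1, h2]
end

section
/- (Effective margin recursion) Assume ‖x^{(0)}‖₂ ≤ 1 and ‖x_i^{(0)}‖₂ ≤ 1 for all i. Then for every t ∈ ℕ, the effective margin satisfies Δ̃_{t+1} ≥ (1 + α' + α'(1+α') p_{c*}^{(t)}) Δ̃_t − 2α'(1 − p_{c*}^{(t)}) (1+α')^{2t+1}. -/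
open Finset Real
open scoped RealInnerProductSpace BigOperators

lemma expand_inner {d : ℕ} {ι ι' : Type*} (s : Finset ι) (s' : Finset ι')
    (u z : EuclideanSpace ℝ (Fin d)) (v : ι → EuclideanSpace ℝ (Fin d))
    (ζ : ι' → EuclideanSpace ℝ (Fin d)) (w : ι → ℝ) (ω : ι' → ℝ) (a : ℝ) :
    ⟪u + a • ∑ i ∈ s, w i • v i, z + a • ∑ k ∈ s', ω k • ζ k⟫ =
      ⟪u, z⟫ + a * ∑ k ∈ s', ω k * ⟪u, ζ k⟫ + a * ∑ i ∈ s, w i * ⟪v i, z⟫ +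
        a * a * ∑ i ∈ s, w i * ∑ k ∈ s', ω k * ⟪v i, ζ k⟫ := by
  simp only [inner_add_left, inner_add_right, real_inner_smul_left, real_inner_smul_right,
    sum_inner, inner_sum, Finset.mul_sum]
  ring_nf
  congr 1
  rw [Finset.sum_comm]
  exact Finset.sum_congr rfl fun i _ => Finset.sum_congr rfl fun k _ => by ring

lemma wsum_le {ι : Type*} (s : Finset ι) (w f : ι → ℝ) (b : ℝ)
    (hw : ∀ i ∈ s, 0 ≤ w i) (hf : ∀ i ∈ s, f i ≤ b) :
    ∑ i ∈ s, w i * f i ≤ (∑ i ∈ s, w i) * b := by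
  rw [Finset.sum_mul]
  exact Finset.sum_le_sum fun i hi => mul_le_mul_of_nonneg_left (hf i hi) (hw i hi)

lemma le_wsum {ι : Type*} (s : Finset ι) (w f : ι → ℝ) (b : ℝ)
    (hw : ∀ i ∈ s, 0 ≤ w i) (hf : ∀ i ∈ s, b ≤ f i) :
    (∑ i ∈ s, w i) * b ≤ ∑ i ∈ s, w i * f i := by
  rw [Finset.sum_mul]
  exact Finset.sum_le_sum fun i hi => mul_le_mul_of_nonneg_left (hf i hi) (hw i hi)

lemma split_ge {ι : Type*} [Fintype ι] (q : ι → Prop) [DecidablePred q] (w f : ι → ℝ)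
    (hw : ∀ i, 0 ≤ w i) (r b : ℝ) (h1 : ∀ i, q i → r ≤ f i) (h2 : ∀ i, ¬ q i → b ≤ f i) :
    (∑ i ∈ univ.filter q, w i) * r + (∑ i ∈ univ.filter (fun i => ¬ q i), w i) * b
      ≤ ∑ i, w i * f i := by
  rw [← Finset.sum_filter_add_sum_filter_not univ q (fun i => w i * f i)]
  exact add_le_add (le_wsum _ _ _ _ (fun i _ => hw i) (fun i hi => h1 i (mem_filter.mp hi).2))
    (le_wsum _ _ _ _ (fun i _ => hw i) (fun i hi => h2 i (mem_filter.mp hi).2))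

lemma split_le {ι : Type*} [Fintype ι] (q : ι → Prop) [DecidablePred q] (w f : ι → ℝ)
    (hw : ∀ i, 0 ≤ w i) (r b : ℝ) (h1 : ∀ i, q i → f i ≤ r) (h2 : ∀ i, ¬ q i → f i ≤ b) :
    ∑ i, w i * f i ≤
      (∑ i ∈ univ.filter q, w i) * r + (∑ i ∈ univ.filter (fun i => ¬ q i), w i) * b := by
  rw [← Finset.sum_filter_add_sum_filter_not univ q (fun i => w i * f i)]
  exact add_le_add (wsum_le _ _ _ _ (fun i _ => hw i) (fun i hi => h1 i (mem_filter.mp hi).2))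
    (wsum_le _ _ _ _ (fun i _ => hw i) (fun i hi => h2 i (mem_filter.mp hi).2))

lemma inner_abs_bound {d : ℕ} (u v : EuclideanSpace ℝ (Fin d)) (B : ℝ)
    (hu : ‖u‖ ≤ B) (hv : ‖v‖ ≤ B) : -(B*B) ≤ ⟪u,v⟫ ∧ ⟪u,v⟫ ≤ B*B := by
  have h := abs_real_inner_le_norm u v
  have hB : 0 ≤ B := le_trans (norm_nonneg u) hu
  have h2 : ‖u‖*‖v‖ ≤ B*B := mul_le_mul hu hv (norm_nonneg v) hB
  exact abs_le.mp (h.trans h2)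

lemma my_inf'_le {α β : Type*} [SemilatticeInf α] {s : Finset β} (H : s.Nonempty)
    (f : β → α) {b : β} (h : b ∈ s) : s.inf' H f ≤ f b := Finset.inf'_le f h

lemma my_le_sup' {α β : Type*} [SemilatticeSup α] {s : Finset β} (H : s.Nonempty)
    (f : β → α) {b : β} (h : b ∈ s) : f b ≤ s.sup' H f := Finset.le_sup' f h

/-- **Effective margin recursion.** -/
theorem effective_margin_recursion
    (d n K : ℕ) (hK : 2 ≤ K)
    (α γ α' γ' : ℝ) (hα : 0 < α) (hγ : 0 < γ) (hα' : 0 < α') (hγ' : 0 < γ')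
    (c : Fin n → Fin K)
    (hclass : ∀ k : Fin K, ∃ i, c i = k)
    (cstar : Fin K)
    (hne : (Finset.univ.filter (fun i => c i = cstar)).Nonempty)
    (hne' : (Finset.univ.filter (fun i => c i ≠ cstar)).Nonempty)
    (hcard : (Finset.univ.filter (fun i => c i = cstar)).card < n)
    (x : ℕ → Fin n → EuclideanSpace ℝ (Fin d))
    (xt : ℕ → EuclideanSpace ℝ (Fin d))
    (yt : ℕ → Fin K → ℝ)
    (hyt0 : yt 0 = 0)
    (Atr : ℕ → Fin n → Fin n → ℝ)
    (hAtr : ∀ t j k, Atr t j k =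
      if c k = c j then
        Real.exp (α * ⟪x t j, x t k⟫) /
          ∑ s ∈ Finset.univ.filter (fun s => c s = c j), Real.exp (α * ⟪x t j, x t s⟫)
      else 0)
    (hx : ∀ t j, x (t+1) j =
      x t j + α' • ∑ k ∈ Finset.univ.filter (fun k => c k = c j), Atr t j k • x t k)
    (A : ℕ → Fin n → ℝ)
    (hA : ∀ t i, A t i =
      Real.exp (α * ⟪xt t, x t i⟫ + γ * (1 + γ') ^ t * yt t (c i)) /
        ∑ m, Real.exp (α * ⟪xt t, x t m⟫ + γ * (1 + γ') ^ t * yt t (c m)))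
    (hxt : ∀ t, xt (t+1) = xt t + α' • ∑ i, A t i • x t i)
    (hyt : ∀ t, yt (t+1) =
      yt t + α' • ∑ i, A t i • ((1 + γ') ^ t • (Pi.single (c i) (1 : ℝ) : Fin K → ℝ)))
    (p : Fin K → ℕ → ℝ)
    (hp : ∀ cc t, p cc t = ∑ j ∈ Finset.univ.filter (fun i => c i = cc), A t j)
    (R L Δ ρ Λ Γ : ℕ → ℝ)
    (hR : ∀ t, R t =
      (Finset.univ.filter (fun i => c i = cstar)).inf' hne (fun j => ⟪xt t, x t j⟫))
    (hL : ∀ t, L t =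
      (Finset.univ.filter (fun i => c i ≠ cstar)).sup' hne' (fun j => ⟪xt t, x t j⟫))
    (hΔ : ∀ t, Δ t = R t - L t)
    (hρ : ∀ t, ρ t =
      ((Finset.univ.filter (fun i => c i = cstar)) ×ˢ
          (Finset.univ.filter (fun i => c i = cstar))).inf' (hne.product hne)
        (fun q => ⟪x t q.1, x t q.2⟫))
    (hΛ : ∀ t, Λ t =
      ((Finset.univ.filter (fun i => c i = cstar)) ×ˢ
          (Finset.univ.filter (fun i => c i ≠ cstar))).sup' (hne.product hne')
        (fun q => ⟪x t q.1, x t q.2⟫))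
    (hΓ : ∀ t, Γ t = ρ t - Λ t)
    (hx0 : ‖xt 0‖ ≤ 1) (hxi0 : ∀ i, ‖x 0 i‖ ≤ 1)
    (Δtil : ℕ → ℝ) (hΔtil : ∀ t, Δtil t = min (Δ t) (Γ t)) :
    ∀ t : ℕ,
      (1 + α' + α' * (1 + α') * p cstar t) * Δtil t -
          2 * α' * (1 - p cstar t) * (1 + α') ^ (2 * t + 1) ≤
        Δtil (t + 1) := by
  have h1α : (0:ℝ) < 1 + α' := by linarith
  have hFinN : (Finset.univ : Finset (Fin n)).Nonempty :=
    ⟨hne.choose, mem_univ _⟩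
  -- attention weights facts
  have hApos : ∀ t i, 0 < A t i := by
    intro t i
    rw [hA]
    exact div_pos (Real.exp_pos _) (Finset.sum_pos (fun m _ => Real.exp_pos _) hFinN)
  have hAsum : ∀ t, ∑ i, A t i = 1 := by
    intro t
    have hd : 0 < ∑ m, Real.exp (α * ⟪xt t, x t m⟫ + γ * (1 + γ') ^ t * yt t (c m)) :=
      Finset.sum_pos (fun m _ => Real.exp_pos _) hFinN
    simp only [hA]
    rw [← Finset.sum_div, div_self hd.ne']
  have hAtrnn : ∀ t j k, 0 ≤ Atr t j k := by
    intro t j k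
    rw [hAtr]
    split
    · exact div_nonneg (Real.exp_pos _).le (Finset.sum_nonneg fun s _ => (Real.exp_pos _).le)
    · exact le_refl _
  have hAtrsum : ∀ t j, ∑ k ∈ Finset.univ.filter (fun k => c k = c j), Atr t j k = 1 := by
    intro t j
    have hjmem : j ∈ Finset.univ.filter (fun k => c k = c j) := by simp
    have hd : 0 < ∑ s ∈ Finset.univ.filter (fun s => c s = c j),
        Real.exp (α * ⟪x t j, x t s⟫) :=
      Finset.sum_pos (fun m _ => Real.exp_pos _) ⟨j, hjmem⟩
    have heq : ∀ k ∈ Finset.univ.filter (fun k => c k = c j), Atr t j k =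
        Real.exp (α * ⟪x t j, x t k⟫) /
          ∑ s ∈ Finset.univ.filter (fun s => c s = c j), Real.exp (α * ⟪x t j, x t s⟫) := by
      intro k hk
      rw [hAtr, if_pos (by simpa using hk)]
    rw [Finset.sum_congr rfl heq, ← Finset.sum_div, div_self hd.ne']
  -- norm bounds
  have hnormx : ∀ t j, ‖x t j‖ ≤ (1+α')^t := by
    intro t
    induction t with
    | zero => intro j; simpa using hxi0 j
    | succ t ih =>
      intro j
      rw [hx]
      have hs : ‖∑ k ∈ Finset.univ.filter (fun k => c k = c j), Atr t j k • x t k‖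
          ≤ (1+α')^t := by
        calc ‖∑ k ∈ Finset.univ.filter (fun k => c k = c j), Atr t j k • x t k‖
            ≤ ∑ k ∈ Finset.univ.filter (fun k => c k = c j), ‖Atr t j k • x t k‖ :=
              norm_sum_le _ _
          _ = ∑ k ∈ Finset.univ.filter (fun k => c k = c j), Atr t j k * ‖x t k‖ := by
              refine Finset.sum_congr rfl fun k _ => ?_
              rw [norm_smul, Real.norm_eq_abs, abs_of_nonneg (hAtrnn t j k)]
          _ ≤ (∑ k ∈ Finset.univ.filter (fun k => c k = c j), Atr t j k) * (1+α')^t :=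
              wsum_le _ _ _ _ (fun k _ => hAtrnn t j k) (fun k _ => ih k)
          _ = (1+α')^t := by rw [hAtrsum]; ring
      calc ‖x t j + α' • ∑ k ∈ Finset.univ.filter (fun k => c k = c j), Atr t j k • x t k‖
          ≤ ‖x t j‖ + ‖α' • ∑ k ∈ Finset.univ.filter (fun k => c k = c j), Atr t j k • x t k‖ :=
            norm_add_le _ _
        _ ≤ (1+α')^t + α' * (1+α')^t := by
            refine add_le_add (ih j) ?_
            rw [norm_smul, Real.norm_eq_abs, abs_of_pos hα']
            exact mul_le_mul_of_nonneg_left hs hα'.le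
        _ = (1+α')^(t+1) := by rw [pow_succ]; ring
  have hnormxt : ∀ t, ‖xt t‖ ≤ (1+α')^t := by
    intro t
    induction t with
    | zero => simpa using hx0
    | succ t ih =>
      rw [hxt]
      have hs : ‖∑ i, A t i • x t i‖ ≤ (1+α')^t := by
        calc ‖∑ i, A t i • x t i‖ ≤ ∑ i, ‖A t i • x t i‖ := norm_sum_le _ _
          _ = ∑ i, A t i * ‖x t i‖ := by
              refine Finset.sum_congr rfl fun i _ => ?_
              rw [norm_smul, Real.norm_eq_abs, abs_of_pos (hApos t i)]
          _ ≤ (∑ i, A t i) * (1+α')^t :=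
              wsum_le _ _ _ _ (fun i _ => (hApos t i).le) (fun i _ => hnormx t i)
          _ = (1+α')^t := by rw [hAsum]; ring
      calc ‖xt t + α' • ∑ i, A t i • x t i‖
          ≤ ‖xt t‖ + ‖α' • ∑ i, A t i • x t i‖ := norm_add_le _ _
        _ ≤ (1+α')^t + α' * (1+α')^t := by
            refine add_le_add ih ?_
            rw [norm_smul, Real.norm_eq_abs, abs_of_pos hα']
            exact mul_le_mul_of_nonneg_left hs hα'.le
        _ = (1+α')^(t+1) := by rw [pow_succ]; ring
  intro t
  have hP0 : 0 ≤ p cstar t := by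
    rw [hp]
    exact Finset.sum_nonneg fun i _ => (hApos t i).le
  have hcompl : ∑ j ∈ Finset.univ.filter (fun i => ¬ c i = cstar), A t j
      = 1 - p cstar t := by
    have hsplit := Finset.sum_filter_add_sum_filter_not Finset.univ
      (fun i => c i = cstar) (A t)
    rw [hAsum] at hsplit
    rw [hp]
    linarith
  have hP1 : p cstar t ≤ 1 := by
    have h0 := Finset.sum_nonneg (s := Finset.univ.filter (fun i => ¬ c i = cstar))
      (f := A t) (fun i _ => (hApos t i).le)
    rw [hcompl] at h0
    linarith
  -- inner product bounds
  have hbnd : ∀ i j, -((1+α')^t * (1+α')^t) ≤ ⟪x t i, x t j⟫ ∧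
      ⟪x t i, x t j⟫ ≤ (1+α')^t * (1+α')^t :=
    fun i j => inner_abs_bound _ _ _ (hnormx t i) (hnormx t j)
  have hbndt : ∀ j, -((1+α')^t * (1+α')^t) ≤ ⟪xt t, x t j⟫ ∧
      ⟪xt t, x t j⟫ ≤ (1+α')^t * (1+α')^t :=
    fun j => inner_abs_bound _ _ _ (hnormxt t) (hnormx t j)
  -- extremal value access
  have hRle : ∀ j, c j = cstar → R t ≤ ⟪xt t, x t j⟫ := by
    intro j hj
    rw [hR]
    have hmem : j ∈ Finset.univ.filter (fun i => c i = cstar) :=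
      Finset.mem_filter.mpr ⟨Finset.mem_univ _, hj⟩
    exact my_inf'_le hne (fun j => ⟪xt t, x t j⟫) hmem
  have hLge : ∀ j, ¬ c j = cstar → ⟪xt t, x t j⟫ ≤ L t := by
    intro j hj
    rw [hL]
    have hmem : j ∈ Finset.univ.filter (fun i => c i ≠ cstar) :=
      Finset.mem_filter.mpr ⟨Finset.mem_univ _, hj⟩
    exact my_le_sup' hne' (fun j => ⟪xt t, x t j⟫) hmem
  have hρle : ∀ i j, c i = cstar → c j = cstar → ρ t ≤ ⟪x t i, x t j⟫ := by
    intro i j hi hj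
    rw [hρ]
    have hmem : (i, j) ∈ ((Finset.univ.filter (fun i => c i = cstar)) ×ˢ
        (Finset.univ.filter (fun i => c i = cstar))) :=
      Finset.mem_product.mpr ⟨Finset.mem_filter.mpr ⟨Finset.mem_univ _, hi⟩,
        Finset.mem_filter.mpr ⟨Finset.mem_univ _, hj⟩⟩
    exact my_inf'_le (hne.product hne) (fun q => ⟪x t q.1, x t q.2⟫) hmem
  have hΛge : ∀ i j, c i = cstar → ¬ c j = cstar → ⟪x t i, x t j⟫ ≤ Λ t := by
    intro i j hi hj
    rw [hΛ]
    have hmem : (i, j) ∈ ((Finset.univ.filter (fun i => c i = cstar)) ×ˢ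
        (Finset.univ.filter (fun i => c i ≠ cstar))) :=
      Finset.mem_product.mpr ⟨Finset.mem_filter.mpr ⟨Finset.mem_univ _, hi⟩,
        Finset.mem_filter.mpr ⟨Finset.mem_univ _, hj⟩⟩
    exact my_le_sup' (hne.product hne') (fun q => ⟪x t q.1, x t q.2⟫) hmem
  -- R recursion lower bound
  have hRnext : (1+α') * R t +
      α' * (1+α') * (p cstar t * ρ t
        - (1 - p cstar t) * ((1+α')^t * (1+α')^t)) ≤ R (t+1) := by
    rw [hR (t+1)]
    apply Finset.le_inf'
    intro j hj
    have hcj : c j = cstar := (Finset.mem_filter.mp hj).2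
    have hck : ∀ k, k ∈ Finset.univ.filter (fun k => c k = c j) → c k = cstar :=
      fun k hk => ((Finset.mem_filter.mp hk).2).trans hcj
    have hexp : ⟪xt (t+1), x (t+1) j⟫ =
        ⟪xt t, x t j⟫
        + α' * ∑ k ∈ Finset.univ.filter (fun k => c k = c j), Atr t j k * ⟪xt t, x t k⟫
        + α' * ∑ i, A t i * ⟪x t i, x t j⟫
        + α' * α' * ∑ i, A t i *
            ∑ k ∈ Finset.univ.filter (fun k => c k = c j), Atr t j k * ⟪x t i, x t k⟫ := by
      rw [hxt t, hx t j]
      exact expand_inner _ _ _ _ _ _ _ _ _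
    show _ ≤ ⟪xt (t+1), x (t+1) j⟫
    rw [hexp]
    have h1 : R t ≤ ⟪xt t, x t j⟫ := hRle j hcj
    have h2 : R t ≤ ∑ k ∈ Finset.univ.filter (fun k => c k = c j),
        Atr t j k * ⟪xt t, x t k⟫ := by
      have h := le_wsum (Finset.univ.filter (fun k => c k = c j)) (Atr t j)
        (fun k => ⟪xt t, x t k⟫) (R t) (fun k _ => hAtrnn t j k)
        (fun k hk => hRle k (hck k hk))
      rwa [hAtrsum t j, one_mul] at h
    have h3 : p cstar t * ρ t + (1 - p cstar t) * (-((1+α')^t * (1+α')^t)) ≤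
        ∑ i, A t i * ⟪x t i, x t j⟫ := by
      have h := split_ge (fun i => c i = cstar) (A t) (fun i => ⟪x t i, x t j⟫)
        (fun i => (hApos t i).le) (ρ t) (-((1+α')^t * (1+α')^t))
        (fun i hi => hρle i j hi hcj) (fun i _ => (hbnd i j).1)
      rwa [hcompl, ← hp] at h
    have h4 : p cstar t * ρ t + (1 - p cstar t) * (-((1+α')^t * (1+α')^t)) ≤
        ∑ i, A t i * ∑ k ∈ Finset.univ.filter (fun k => c k = c j),
          Atr t j k * ⟪x t i, x t k⟫ := by
      have h := split_ge (fun i => c i = cstar) (A t)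
        (fun i => ∑ k ∈ Finset.univ.filter (fun k => c k = c j),
          Atr t j k * ⟪x t i, x t k⟫)
        (fun i => (hApos t i).le) (ρ t) (-((1+α')^t * (1+α')^t))
        (fun i hi => by
          have h' := le_wsum (Finset.univ.filter (fun k => c k = c j)) (Atr t j)
            (fun k => ⟪x t i, x t k⟫) (ρ t) (fun k _ => hAtrnn t j k)
            (fun k hk => hρle i k hi (hck k hk))
          rwa [hAtrsum t j, one_mul] at h')
        (fun i _ => by
          have h' := le_wsum (Finset.univ.filter (fun k => c k = c j)) (Atr t j)
            (fun k => ⟪x t i, x t k⟫) (-((1+α')^t * (1+α')^t))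
            (fun k _ => hAtrnn t j k) (fun k _ => (hbnd i k).1)
          rwa [hAtrsum t j, one_mul] at h')
      rwa [hcompl, ← hp] at h
    have hh2 := mul_le_mul_of_nonneg_left h2 hα'.le
    have hh3 := mul_le_mul_of_nonneg_left h3 hα'.le
    have hh4 := mul_le_mul_of_nonneg_left h4 (mul_nonneg hα'.le hα'.le)
    linarith [hh2, hh3, hh4, h1]
  -- L recursion upper bound
  have hLnext : L (t+1) ≤ (1+α') * L t +
      α' * (1+α') * (p cstar t * Λ t
        + (1 - p cstar t) * ((1+α')^t * (1+α')^t)) := by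
    rw [hL (t+1)]
    apply Finset.sup'_le
    intro j hj
    have hcj : ¬ c j = cstar := (Finset.mem_filter.mp hj).2
    have hck : ∀ k, k ∈ Finset.univ.filter (fun k => c k = c j) → ¬ c k = cstar :=
      fun k hk h' => hcj (((Finset.mem_filter.mp hk).2).symm.trans h')
    have hexp : ⟪xt (t+1), x (t+1) j⟫ =
        ⟪xt t, x t j⟫
        + α' * ∑ k ∈ Finset.univ.filter (fun k => c k = c j), Atr t j k * ⟪xt t, x t k⟫
        + α' * ∑ i, A t i * ⟪x t i, x t j⟫
        + α' * α' * ∑ i, A t i *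
            ∑ k ∈ Finset.univ.filter (fun k => c k = c j), Atr t j k * ⟪x t i, x t k⟫ := by
      rw [hxt t, hx t j]
      exact expand_inner _ _ _ _ _ _ _ _ _
    show ⟪xt (t+1), x (t+1) j⟫ ≤ _
    rw [hexp]
    have h1 : ⟪xt t, x t j⟫ ≤ L t := hLge j hcj
    have h2 : ∑ k ∈ Finset.univ.filter (fun k => c k = c j),
        Atr t j k * ⟪xt t, x t k⟫ ≤ L t := by
      have h := wsum_le (Finset.univ.filter (fun k => c k = c j)) (Atr t j)
        (fun k => ⟪xt t, x t k⟫) (L t) (fun k _ => hAtrnn t j k)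
        (fun k hk => hLge k (hck k hk))
      rwa [hAtrsum t j, one_mul] at h
    have h3 : ∑ i, A t i * ⟪x t i, x t j⟫ ≤
        p cstar t * Λ t + (1 - p cstar t) * ((1+α')^t * (1+α')^t) := by
      have h := split_le (fun i => c i = cstar) (A t) (fun i => ⟪x t i, x t j⟫)
        (fun i => (hApos t i).le) (Λ t) ((1+α')^t * (1+α')^t)
        (fun i hi => hΛge i j hi hcj) (fun i _ => (hbnd i j).2)
      rwa [hcompl, ← hp] at h
    have h4 : ∑ i, A t i * ∑ k ∈ Finset.univ.filter (fun k => c k = c j),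
          Atr t j k * ⟪x t i, x t k⟫ ≤
        p cstar t * Λ t + (1 - p cstar t) * ((1+α')^t * (1+α')^t) := by
      have h := split_le (fun i => c i = cstar) (A t)
        (fun i => ∑ k ∈ Finset.univ.filter (fun k => c k = c j),
          Atr t j k * ⟪x t i, x t k⟫)
        (fun i => (hApos t i).le) (Λ t) ((1+α')^t * (1+α')^t)
        (fun i hi => by
          have h' := wsum_le (Finset.univ.filter (fun k => c k = c j)) (Atr t j)
            (fun k => ⟪x t i, x t k⟫) (Λ t) (fun k _ => hAtrnn t j k)
            (fun k hk => hΛge i k hi (hck k hk))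
          rwa [hAtrsum t j, one_mul] at h')
        (fun i _ => by
          have h' := wsum_le (Finset.univ.filter (fun k => c k = c j)) (Atr t j)
            (fun k => ⟪x t i, x t k⟫) ((1+α')^t * (1+α')^t)
            (fun k _ => hAtrnn t j k) (fun k _ => (hbnd i k).2)
          rwa [hAtrsum t j, one_mul] at h')
      rwa [hcompl, ← hp] at h
    have hh2 := mul_le_mul_of_nonneg_left h2 hα'.le
    have hh3 := mul_le_mul_of_nonneg_left h3 hα'.le
    have hh4 := mul_le_mul_of_nonneg_left h4 (mul_nonneg hα'.le hα'.le)
    linarith [hh2, hh3, hh4, h1]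
  -- ρ recursion lower bound
  have hρnext : (1+α') * (1+α') * ρ t ≤ ρ (t+1) := by
    rw [hρ (t+1)]
    apply Finset.le_inf'
    rintro ⟨i, j⟩ hq
    obtain ⟨hqi, hqj⟩ := Finset.mem_product.mp hq
    have hci : c i = cstar := (Finset.mem_filter.mp hqi).2
    have hcj : c j = cstar := (Finset.mem_filter.mp hqj).2
    have hcki : ∀ k, k ∈ Finset.univ.filter (fun k => c k = c i) → c k = cstar :=
      fun k hk => ((Finset.mem_filter.mp hk).2).trans hci
    have hckj : ∀ k, k ∈ Finset.univ.filter (fun k => c k = c j) → c k = cstar :=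
      fun k hk => ((Finset.mem_filter.mp hk).2).trans hcj
    have hexp : ⟪x (t+1) i, x (t+1) j⟫ =
        ⟪x t i, x t j⟫
        + α' * ∑ k ∈ Finset.univ.filter (fun k => c k = c j), Atr t j k * ⟪x t i, x t k⟫
        + α' * ∑ l ∈ Finset.univ.filter (fun k => c k = c i), Atr t i l * ⟪x t l, x t j⟫
        + α' * α' * ∑ l ∈ Finset.univ.filter (fun k => c k = c i), Atr t i l *
            ∑ k ∈ Finset.univ.filter (fun k => c k = c j), Atr t j k * ⟪x t l, x t k⟫ := by
      rw [hx t i, hx t j]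
      exact expand_inner _ _ _ _ _ _ _ _ _
    show _ ≤ ⟪x (t+1) i, x (t+1) j⟫
    rw [hexp]
    have h1 : ρ t ≤ ⟪x t i, x t j⟫ := hρle i j hci hcj
    have h2 : ρ t ≤ ∑ k ∈ Finset.univ.filter (fun k => c k = c j),
        Atr t j k * ⟪x t i, x t k⟫ := by
      have h := le_wsum (Finset.univ.filter (fun k => c k = c j)) (Atr t j)
        (fun k => ⟪x t i, x t k⟫) (ρ t) (fun k _ => hAtrnn t j k)
        (fun k hk => hρle i k hci (hckj k hk))
      rwa [hAtrsum t j, one_mul] at h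
    have h3 : ρ t ≤ ∑ l ∈ Finset.univ.filter (fun k => c k = c i),
        Atr t i l * ⟪x t l, x t j⟫ := by
      have h := le_wsum (Finset.univ.filter (fun k => c k = c i)) (Atr t i)
        (fun l => ⟪x t l, x t j⟫) (ρ t) (fun l _ => hAtrnn t i l)
        (fun l hl => hρle l j (hcki l hl) hcj)
      rwa [hAtrsum t i, one_mul] at h
    have h4 : ρ t ≤ ∑ l ∈ Finset.univ.filter (fun k => c k = c i), Atr t i l *
        ∑ k ∈ Finset.univ.filter (fun k => c k = c j), Atr t j k * ⟪x t l, x t k⟫ := by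
      have h := le_wsum (Finset.univ.filter (fun k => c k = c i)) (Atr t i)
        (fun l => ∑ k ∈ Finset.univ.filter (fun k => c k = c j),
          Atr t j k * ⟪x t l, x t k⟫)
        (ρ t) (fun l _ => hAtrnn t i l)
        (fun l hl => by
          have h' := le_wsum (Finset.univ.filter (fun k => c k = c j)) (Atr t j)
            (fun k => ⟪x t l, x t k⟫) (ρ t) (fun k _ => hAtrnn t j k)
            (fun k hk => hρle l k (hcki l hl) (hckj k hk))
          rwa [hAtrsum t j, one_mul] at h')
      rwa [hAtrsum t i, one_mul] at h
    have hh2 := mul_le_mul_of_nonneg_left h2 hα'.le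
    have hh3 := mul_le_mul_of_nonneg_left h3 hα'.le
    have hh4 := mul_le_mul_of_nonneg_left h4 (mul_nonneg hα'.le hα'.le)
    linarith [hh2, hh3, hh4, h1]
  -- Λ recursion upper bound
  have hΛnext : Λ (t+1) ≤ (1+α') * (1+α') * Λ t := by
    rw [hΛ (t+1)]
    apply Finset.sup'_le
    rintro ⟨i, j⟩ hq
    obtain ⟨hqi, hqj⟩ := Finset.mem_product.mp hq
    have hci : c i = cstar := (Finset.mem_filter.mp hqi).2
    have hcj : ¬ c j = cstar := (Finset.mem_filter.mp hqj).2
    have hcki : ∀ k, k ∈ Finset.univ.filter (fun k => c k = c i) → c k = cstar :=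
      fun k hk => ((Finset.mem_filter.mp hk).2).trans hci
    have hckj : ∀ k, k ∈ Finset.univ.filter (fun k => c k = c j) → ¬ c k = cstar :=
      fun k hk h' => hcj (((Finset.mem_filter.mp hk).2).symm.trans h')
    have hexp : ⟪x (t+1) i, x (t+1) j⟫ =
        ⟪x t i, x t j⟫
        + α' * ∑ k ∈ Finset.univ.filter (fun k => c k = c j), Atr t j k * ⟪x t i, x t k⟫
        + α' * ∑ l ∈ Finset.univ.filter (fun k => c k = c i), Atr t i l * ⟪x t l, x t j⟫
        + α' * α' * ∑ l ∈ Finset.univ.filter (fun k => c k = c i), Atr t i l *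
            ∑ k ∈ Finset.univ.filter (fun k => c k = c j), Atr t j k * ⟪x t l, x t k⟫ := by
      rw [hx t i, hx t j]
      exact expand_inner _ _ _ _ _ _ _ _ _
    show ⟪x (t+1) i, x (t+1) j⟫ ≤ _
    rw [hexp]
    have h1 : ⟪x t i, x t j⟫ ≤ Λ t := hΛge i j hci hcj
    have h2 : ∑ k ∈ Finset.univ.filter (fun k => c k = c j),
        Atr t j k * ⟪x t i, x t k⟫ ≤ Λ t := by
      have h := wsum_le (Finset.univ.filter (fun k => c k = c j)) (Atr t j)
        (fun k => ⟪x t i, x t k⟫) (Λ t) (fun k _ => hAtrnn t j k)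
        (fun k hk => hΛge i k hci (hckj k hk))
      rwa [hAtrsum t j, one_mul] at h
    have h3 : ∑ l ∈ Finset.univ.filter (fun k => c k = c i),
        Atr t i l * ⟪x t l, x t j⟫ ≤ Λ t := by
      have h := wsum_le (Finset.univ.filter (fun k => c k = c i)) (Atr t i)
        (fun l => ⟪x t l, x t j⟫) (Λ t) (fun l _ => hAtrnn t i l)
        (fun l hl => hΛge l j (hcki l hl) hcj)
      rwa [hAtrsum t i, one_mul] at h
    have h4 : ∑ l ∈ Finset.univ.filter (fun k => c k = c i), Atr t i l *
        ∑ k ∈ Finset.univ.filter (fun k => c k = c j), Atr t j k * ⟪x t l, x t k⟫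
          ≤ Λ t := by
      have h := wsum_le (Finset.univ.filter (fun k => c k = c i)) (Atr t i)
        (fun l => ∑ k ∈ Finset.univ.filter (fun k => c k = c j),
          Atr t j k * ⟪x t l, x t k⟫)
        (Λ t) (fun l _ => hAtrnn t i l)
        (fun l hl => by
          have h' := wsum_le (Finset.univ.filter (fun k => c k = c j)) (Atr t j)
            (fun k => ⟪x t l, x t k⟫) (Λ t) (fun k _ => hAtrnn t j k)
            (fun k hk => hΛge l k (hcki l hl) (hckj k hk))
          rwa [hAtrsum t j, one_mul] at h')
      rwa [hAtrsum t i, one_mul] at h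
    have hh2 := mul_le_mul_of_nonneg_left h2 hα'.le
    have hh3 := mul_le_mul_of_nonneg_left h3 hα'.le
    have hh4 := mul_le_mul_of_nonneg_left h4 (mul_nonneg hα'.le hα'.le)
    linarith [hh2, hh3, hh4, h1]
  -- final combination
  have hms : Δtil t ≤ R t - L t := by
    have h := min_le_left (Δ t) (Γ t)
    rw [← hΔtil t] at h
    rw [hΔ t] at h
    exact h
  have hmg : Δtil t ≤ ρ t - Λ t := by
    have h := min_le_right (Δ t) (Γ t)
    rw [← hΔtil t] at h
    rw [hΓ t] at h
    exact h
  have hlb : -(2*((1+α')^t * (1+α')^t)) ≤ Δtil t := by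
    rw [hΔtil t]
    refine le_min ?_ ?_
    · rw [hΔ t]
      have hRlb : -((1+α')^t * (1+α')^t) ≤ R t := by
        rw [hR t]
        exact Finset.le_inf' _ _ (fun b _ => (hbndt b).1)
      have hLub : L t ≤ (1+α')^t * (1+α')^t := by
        rw [hL t]
        exact Finset.sup'_le _ _ (fun b _ => (hbndt b).2)
      linarith
    · rw [hΓ t]
      have hρlb : -((1+α')^t * (1+α')^t) ≤ ρ t := by
        rw [hρ t]
        exact Finset.le_inf' _ _ (fun b _ => (hbnd b.1 b.2).1)
      have hΛub : Λ t ≤ (1+α')^t * (1+α')^t := by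
        rw [hΛ t]
        exact Finset.sup'_le _ _ (fun b _ => (hbnd b.1 b.2).2)
      linarith
  have hpow : (1+α')^(2*t+1) = (1+α')^t * (1+α')^t * (1+α') := by
    rw [pow_succ, two_mul, pow_add]
  rw [hΔtil (t+1), hpow]
  refine le_min ?_ ?_
  · -- Δ branch
    have e1 : (1+α') * (R t - L t) + α' * (1+α') * (p cstar t * ρ t - p cstar t * Λ t
        - 2 * (1 - p cstar t) * ((1+α')^t * (1+α')^t)) ≤ Δ (t+1) := by
      rw [hΔ (t+1)]
      linarith [hRnext, hLnext]
    have q1 : 0 ≤ (1+α') * ((R t - L t) - Δtil t) :=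
      mul_nonneg h1α.le (by linarith)
    have q2 : 0 ≤ α' * (1+α') * p cstar t * ((ρ t - Λ t) - Δtil t) :=
      mul_nonneg (mul_nonneg (mul_nonneg hα'.le h1α.le) hP0) (by linarith)
    linarith [e1, q1, q2]
  · -- Γ branch
    have e2 : (1+α') * (1+α') * (ρ t - Λ t) ≤ Γ (t+1) := by
      rw [hΓ (t+1)]
      linarith [hρnext, hΛnext]
    have q3 : 0 ≤ (1+α') * (1+α') * ((ρ t - Λ t) - Δtil t) :=
      mul_nonneg (mul_nonneg h1α.le h1α.le) (by linarith)
    have q4 : 0 ≤ α' * (1+α') * (1 - p cstar t) *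
        (Δtil t + 2*((1+α')^t * (1+α')^t)) :=
      mul_nonneg (mul_nonneg (mul_nonneg hα'.le h1α.le) (by linarith)) (by linarith)
    linarith [e2, q3, q4]
end

section
/- (Test-label update identity and strict margin increase) For every class k and every t, the test label update satisfies y^{(t+1)}_k = y^{(t)}_k + α' λ_t p_k^{(t)}; consequently, for every c ≠ c*, y^{(t+1)}_{c*} − y^{(t+1)}_c = (y^{(t)}_{c*} − y^{(t)}_c) + α' λ_t (p_{c*}^{(t)} − p_c^{(t)}). Moreover, if the classes are balanced (|S_c| = |S_{c*}| for all c), Δ_t > 0, and y^{(t)}_{c*} ≥ y^{(t)}_c for all c ≠ c*, then p_{c*}^{(t)} > p_c^{(t)} and hence y^{(t+1)}_{c*} − y^{(t+1)}_c > y^{(t)}_{c*} − y^{(t)}_c ≥ 0. -/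
open Finset Real
open scoped RealInnerProductSpace BigOperators

/-- **Test-label update identity and strict margin increase.** -/
theorem test_label_update_identity_and_strict_increase
    (d n K : ℕ) (hK : 2 ≤ K)
    (α γ α' γ' : ℝ) (hα : 0 < α) (hγ : 0 < γ) (hα' : 0 < α') (hγ' : 0 < γ')
    (c : Fin n → Fin K)
    (hclass : ∀ k : Fin K, ∃ i, c i = k)
    (cstar : Fin K)
    (hne : (Finset.univ.filter (fun i => c i = cstar)).Nonempty)
    (hne' : (Finset.univ.filter (fun i => c i ≠ cstar)).Nonempty)
    (hcard : (Finset.univ.filter (fun i => c i = cstar)).card < n)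
    (x : ℕ → Fin n → EuclideanSpace ℝ (Fin d))
    (xt : ℕ → EuclideanSpace ℝ (Fin d))
    (yt : ℕ → Fin K → ℝ)
    (hyt0 : yt 0 = 0)
    (Atr : ℕ → Fin n → Fin n → ℝ)
    (hAtr : ∀ t j k, Atr t j k =
      if c k = c j then
        Real.exp (α * ⟪x t j, x t k⟫) /
          ∑ s ∈ Finset.univ.filter (fun s => c s = c j), Real.exp (α * ⟪x t j, x t s⟫)
      else 0)
    (hx : ∀ t j, x (t+1) j =
      x t j + α' • ∑ k ∈ Finset.univ.filter (fun k => c k = c j), Atr t j k • x t k)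
    (A : ℕ → Fin n → ℝ)
    (hA : ∀ t i, A t i =
      Real.exp (α * ⟪xt t, x t i⟫ + γ * (1 + γ') ^ t * yt t (c i)) /
        ∑ m, Real.exp (α * ⟪xt t, x t m⟫ + γ * (1 + γ') ^ t * yt t (c m)))
    (hxt : ∀ t, xt (t+1) = xt t + α' • ∑ i, A t i • x t i)
    (hyt : ∀ t, yt (t+1) =
      yt t + α' • ∑ i, A t i • ((1 + γ') ^ t • (Pi.single (c i) (1 : ℝ) : Fin K → ℝ)))
    (p : Fin K → ℕ → ℝ)
    (hp : ∀ cc t, p cc t = ∑ j ∈ Finset.univ.filter (fun i => c i = cc), A t j)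
    (R L Δ ρ Λ Γ : ℕ → ℝ)
    (hR : ∀ t, R t =
      (Finset.univ.filter (fun i => c i = cstar)).inf' hne (fun j => ⟪xt t, x t j⟫))
    (hL : ∀ t, L t =
      (Finset.univ.filter (fun i => c i ≠ cstar)).sup' hne' (fun j => ⟪xt t, x t j⟫))
    (hΔ : ∀ t, Δ t = R t - L t)
    (hρ : ∀ t, ρ t =
      ((Finset.univ.filter (fun i => c i = cstar)) ×ˢ
          (Finset.univ.filter (fun i => c i = cstar))).inf' (hne.product hne)
        (fun q => ⟪x t q.1, x t q.2⟫))
    (hΛ : ∀ t, Λ t =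
      ((Finset.univ.filter (fun i => c i = cstar)) ×ˢ
          (Finset.univ.filter (fun i => c i ≠ cstar))).sup' (hne.product hne')
        (fun q => ⟪x t q.1, x t q.2⟫))
    (hΓ : ∀ t, Γ t = ρ t - Λ t) :
    (∀ t : ℕ, ∀ k : Fin K, yt (t+1) k = yt t k + α' * (1 + γ') ^ t * p k t) ∧
      (∀ t : ℕ, ∀ cc : Fin K, cc ≠ cstar →
        yt (t+1) cstar - yt (t+1) cc =
          (yt t cstar - yt t cc) + α' * (1 + γ') ^ t * (p cstar t - p cc t)) ∧
      ((∀ cc : Fin K, (Finset.univ.filter (fun i => c i = cc)).card =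
          (Finset.univ.filter (fun i => c i = cstar)).card) →
        ∀ t : ℕ, 0 < Δ t → (∀ cc : Fin K, cc ≠ cstar → yt t cc ≤ yt t cstar) →
        ∀ cc : Fin K, cc ≠ cstar →
          p cc t < p cstar t ∧
            yt t cstar - yt t cc < yt (t+1) cstar - yt (t+1) cc) := by
  -- Part 1: the update identity
  have hid : ∀ t : ℕ, ∀ k : Fin K, yt (t+1) k = yt t k + α' * (1 + γ') ^ t * p k t := by
    intro t k
    have h1 := congrFun (hyt t) k
    simp only [Pi.add_apply, Pi.smul_apply, Finset.sum_apply, smul_eq_mul,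
      Pi.single_apply] at h1
    rw [h1, hp, Finset.mul_sum, Finset.mul_sum, Finset.sum_filter]
    congr 1
    apply Finset.sum_congr rfl
    intro i _
    by_cases h : c i = k
    · rw [if_pos h.symm, if_pos h]; ring
    · rw [if_neg (fun hh => h hh.symm), if_neg h]; ring
  refine ⟨hid, ?_, ?_⟩
  · intro t cc _
    rw [hid t cstar, hid t cc]; ring
  · intro hbal t hΔpos hyle cc hcc
    have hlam : (0:ℝ) < (1 + γ') ^ t := pow_pos (by linarith) t
    -- denominator positive
    have hFn : Nonempty (Fin n) := ⟨hne.choose⟩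
    have hZ : 0 < ∑ m, Real.exp (α * ⟪xt t, x t m⟫ + γ * (1 + γ') ^ t * yt t (c m)) :=
      Finset.sum_pos (fun m _ => Real.exp_pos _) Finset.univ_nonempty
    -- pointwise comparison
    have ptwise : ∀ i ∈ Finset.univ.filter (fun i => c i = cc),
        ∀ j ∈ Finset.univ.filter (fun i => c i = cstar), A t i < A t j := by
      intro i hi j hj
      rw [Finset.mem_filter] at hi hj
      have hiL : ⟪xt t, x t i⟫ ≤ L t := by
        rw [hL]
        exact Finset.le_sup' (fun j => ⟪xt t, x t j⟫) (Finset.mem_filter.mpr ⟨Finset.mem_univ i, by rw [hi.2]; exact hcc⟩)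
      have hjR : R t ≤ ⟪xt t, x t j⟫ := by
        rw [hR]
        exact Finset.inf'_le (fun j => ⟪xt t, x t j⟫) (Finset.mem_filter.mpr ⟨Finset.mem_univ j, hj.2⟩)
      have hLR : L t < R t := by have := hΔ t; rw [this] at hΔpos; linarith
      have hy : yt t (c i) ≤ yt t (c j) := by
        rw [hi.2, hj.2]; exact hyle cc hcc
      have hexp : α * ⟪xt t, x t i⟫ + γ * (1 + γ') ^ t * yt t (c i)
          < α * ⟪xt t, x t j⟫ + γ * (1 + γ') ^ t * yt t (c j) := by
        have h1 : α * ⟪xt t, x t i⟫ < α * ⟪xt t, x t j⟫ := by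
          have := mul_lt_mul_of_pos_left hLR hα
          nlinarith [mul_le_mul_of_nonneg_left hiL hα.le, mul_le_mul_of_nonneg_left hjR hα.le]
        have h2 : γ * (1 + γ') ^ t * yt t (c i) ≤ γ * (1 + γ') ^ t * yt t (c j) :=
          mul_le_mul_of_nonneg_left hy (by positivity)
        linarith
      rw [hA, hA]
      exact div_lt_div_of_pos_right (Real.exp_lt_exp.mpr hexp) hZ
    obtain ⟨i0, hi0⟩ := hclass cc
    have hScc : (Finset.univ.filter (fun i => c i = cc)).Nonempty :=
      ⟨i0, Finset.mem_filter.mpr ⟨Finset.mem_univ _, hi0⟩⟩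
    obtain ⟨jm, hjm, hjmeq⟩ :=
      Finset.exists_mem_eq_inf' hne (A t)
    have hplt : p cc t < p cstar t := by
      calc p cc t = ∑ i ∈ Finset.univ.filter (fun i => c i = cc), A t i := hp cc t
        _ < ∑ _i ∈ Finset.univ.filter (fun i => c i = cc),
            (Finset.univ.filter (fun i => c i = cstar)).inf' hne (A t) :=
          Finset.sum_lt_sum_of_nonempty hScc (fun i hi => by
            rw [hjmeq]; exact ptwise i hi jm hjm)
        _ = (Finset.univ.filter (fun i => c i = cc)).card •
            (Finset.univ.filter (fun i => c i = cstar)).inf' hne (A t) :=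
          Finset.sum_const _
        _ = (Finset.univ.filter (fun i => c i = cstar)).card •
            (Finset.univ.filter (fun i => c i = cstar)).inf' hne (A t) := by
          rw [hbal cc]
        _ ≤ ∑ j ∈ Finset.univ.filter (fun i => c i = cstar), A t j :=
          Finset.card_nsmul_le_sum _ _ _ (fun j hj => Finset.inf'_le _ hj)
        _ = p cstar t := (hp cstar t).symm
    refine ⟨hplt, ?_⟩
    have := hid t cstar
    have := hid t cc
    nlinarith [mul_pos (mul_pos hα' hlam) (sub_pos.mpr hplt)]
end

section
/- (Attention-mass drift bound) If the classes are balanced (|S_c| = |S_{c*}| for all c), y^{(t)}_{c*} ≥ y^{(t)}_c for every c ≠ c*, and α Δ_t ≥ log(4K), then for every c ≠ c* the attention-mass gap satisfies p_{c*}^{(t)} − p_c^{(t)} ≥ 1/2. -/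
open Finset Real
open scoped RealInnerProductSpace BigOperators

/-- **Attention-mass drift bound.** -/
theorem attention_mass_drift_bound
    (d n K : ℕ) (hK : 2 ≤ K)
    (α γ α' γ' : ℝ) (hα : 0 < α) (hγ : 0 < γ) (hα' : 0 < α') (hγ' : 0 < γ')
    (c : Fin n → Fin K)
    (hclass : ∀ k : Fin K, ∃ i, c i = k)
    (cstar : Fin K)
    (hne : (Finset.univ.filter (fun i => c i = cstar)).Nonempty)
    (hne' : (Finset.univ.filter (fun i => c i ≠ cstar)).Nonempty)
    (hcard : (Finset.univ.filter (fun i => c i = cstar)).card < n)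
    (x : ℕ → Fin n → EuclideanSpace ℝ (Fin d))
    (xt : ℕ → EuclideanSpace ℝ (Fin d))
    (yt : ℕ → Fin K → ℝ)
    (hyt0 : yt 0 = 0)
    (Atr : ℕ → Fin n → Fin n → ℝ)
    (hAtr : ∀ t j k, Atr t j k =
      if c k = c j then
        Real.exp (α * ⟪x t j, x t k⟫) /
          ∑ s ∈ Finset.univ.filter (fun s => c s = c j), Real.exp (α * ⟪x t j, x t s⟫)
      else 0)
    (hx : ∀ t j, x (t+1) j =
      x t j + α' • ∑ k ∈ Finset.univ.filter (fun k => c k = c j), Atr t j k • x t k)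
    (A : ℕ → Fin n → ℝ)
    (hA : ∀ t i, A t i =
      Real.exp (α * ⟪xt t, x t i⟫ + γ * (1 + γ') ^ t * yt t (c i)) /
        ∑ m, Real.exp (α * ⟪xt t, x t m⟫ + γ * (1 + γ') ^ t * yt t (c m)))
    (hxt : ∀ t, xt (t+1) = xt t + α' • ∑ i, A t i • x t i)
    (hyt : ∀ t, yt (t+1) =
      yt t + α' • ∑ i, A t i • ((1 + γ') ^ t • (Pi.single (c i) (1 : ℝ) : Fin K → ℝ)))
    (p : Fin K → ℕ → ℝ)
    (hp : ∀ cc t, p cc t = ∑ j ∈ Finset.univ.filter (fun i => c i = cc), A t j)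
    (R L Δ ρ Λ Γ : ℕ → ℝ)
    (hR : ∀ t, R t =
      (Finset.univ.filter (fun i => c i = cstar)).inf' hne (fun j => ⟪xt t, x t j⟫))
    (hL : ∀ t, L t =
      (Finset.univ.filter (fun i => c i ≠ cstar)).sup' hne' (fun j => ⟪xt t, x t j⟫))
    (hΔ : ∀ t, Δ t = R t - L t)
    (hρ : ∀ t, ρ t =
      ((Finset.univ.filter (fun i => c i = cstar)) ×ˢ
          (Finset.univ.filter (fun i => c i = cstar))).inf' (hne.product hne)
        (fun q => ⟪x t q.1, x t q.2⟫))
    (hΛ : ∀ t, Λ t =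
      ((Finset.univ.filter (fun i => c i = cstar)) ×ˢ
          (Finset.univ.filter (fun i => c i ≠ cstar))).sup' (hne.product hne')
        (fun q => ⟪x t q.1, x t q.2⟫))
    (hΓ : ∀ t, Γ t = ρ t - Λ t)
    (hbal : ∀ cc : Fin K, (Finset.univ.filter (fun i => c i = cc)).card =
      (Finset.univ.filter (fun i => c i = cstar)).card) :
    ∀ t : ℕ, (∀ cc : Fin K, cc ≠ cstar → yt t cc ≤ yt t cstar) →
      Real.log (4 * K) ≤ α * Δ t →
      ∀ cc : Fin K, cc ≠ cstar → 1 / 2 ≤ p cstar t - p cc t := by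
  intro t hy hlog cc hcc
  classical
  -- basic positivity
  have hlam : (0:ℝ) < (1 + γ') ^ t := pow_pos (by linarith) t
  have hgl : (0:ℝ) ≤ γ * (1 + γ') ^ t := by positivity
  set B : ℝ := γ * (1 + γ') ^ t * yt t cstar with hB
  set f : Fin n → ℝ := fun i => α * ⟪xt t, x t i⟫ + γ * (1 + γ') ^ t * yt t (c i) with hfdef
  set Z : ℝ := ∑ i, Real.exp (f i) with hZdef
  have hA' : ∀ i, A t i = Real.exp (f i) / Z := by
    intro i; rw [hA t i]
  obtain ⟨i0, hi0⟩ := hne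
  have : Nonempty (Fin n) := ⟨i0⟩
  have hZpos : 0 < Z := Finset.sum_pos (fun i _ => Real.exp_pos _) Finset.univ_nonempty
  -- cardinalities
  set mc : ℕ := (Finset.univ.filter (fun i => c i = cstar)).card with hmc
  have hmpos : 0 < mc := Finset.card_pos.mpr ⟨i0, hi0⟩
  have hnK : n = K * mc := by
    have h1 : (Finset.univ : Finset (Fin n)).card
        = ∑ k : Fin K, (Finset.univ.filter (fun i => c i = k)).card :=
      Finset.card_eq_sum_card_fiberwise (fun i _ => Finset.mem_univ (c i))
    simpa [Finset.card_univ, hbal, Finset.sum_const, Finset.card_univ, mul_comm] using h1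
  have hcompcard : (Finset.univ.filter (fun i => c i ≠ cstar)).card = K * mc - mc := by
    have h2 : mc + (Finset.univ.filter (fun i => c i ≠ cstar)).card = n := by
      have h3 := Finset.card_filter_add_card_filter_not
        (s := (Finset.univ : Finset (Fin n))) (p := fun i => c i = cstar)
      simpa [hmc, Finset.card_univ, ne_eq] using h3
    omega
  -- bounds on exp(f)
  set ER : ℝ := Real.exp (α * R t + B) with hER
  set EL : ℝ := Real.exp (α * L t + B) with hEL
  have hfin : ∀ i ∈ Finset.univ.filter (fun i => c i = cstar), ER ≤ Real.exp (f i) := by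
    intro i hi
    have hci : c i = cstar := by simpa using hi
    apply Real.exp_le_exp.mpr
    have hRle : R t ≤ ⟪xt t, x t i⟫ := by
      rw [hR t]; exact Finset.inf'_le _ hi
    have : α * R t ≤ α * ⟪xt t, x t i⟫ := by
      exact mul_le_mul_of_nonneg_left hRle hα.le
    simp only [hfdef, hB, hci]
    linarith
  have hfout : ∀ i, c i ≠ cstar → Real.exp (f i) ≤ EL := by
    intro i hci
    apply Real.exp_le_exp.mpr
    have hmem : i ∈ Finset.univ.filter (fun j => c j ≠ cstar) := by simpa using hci
    have hLle : ⟪xt t, x t i⟫ ≤ L t := by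
      rw [hL t]; exact Finset.le_sup' (fun j => ⟪xt t, x t j⟫) hmem
    have h1 : α * ⟪xt t, x t i⟫ ≤ α * L t := mul_le_mul_of_nonneg_left hLle hα.le
    have h2 : yt t (c i) ≤ yt t cstar := hy (c i) hci
    have h3 : γ * (1 + γ') ^ t * yt t (c i) ≤ γ * (1 + γ') ^ t * yt t cstar :=
      mul_le_mul_of_nonneg_left h2 hgl
    simp only [hfdef, hB]
    linarith
  -- sums
  set S : ℝ := ∑ i ∈ Finset.univ.filter (fun i => c i = cstar), Real.exp (f i) with hSdef
  set T : ℝ := ∑ i ∈ Finset.univ.filter (fun i => c i = cc), Real.exp (f i) with hTdef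
  set U : ℝ := ∑ i ∈ Finset.univ.filter (fun i => c i ≠ cstar), Real.exp (f i) with hUdef
  have hZsplit : Z = S + U := by
    rw [hZdef, hSdef, hUdef]
    exact (Finset.sum_filter_add_sum_filter_not _ _ _).symm
  have hS : (mc : ℝ) * ER ≤ S := by
    have := Finset.card_nsmul_le_sum (Finset.univ.filter (fun i => c i = cstar))
      (fun i => Real.exp (f i)) ER hfin
    simpa [nsmul_eq_mul, hmc] using this
  have hT : T ≤ (mc : ℝ) * EL := by
    have hcardcc : (Finset.univ.filter (fun i => c i = cc)).card = mc := hbal cc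
    have := Finset.sum_le_card_nsmul (Finset.univ.filter (fun i => c i = cc))
      (fun i => Real.exp (f i)) EL (by
        intro i hi
        have hci : c i = cc := by simpa using hi
        exact hfout i (by rw [hci]; exact hcc))
    simpa [nsmul_eq_mul, hcardcc] using this
  have hU : U ≤ ((K : ℝ) * mc - mc) * EL := by
    have := Finset.sum_le_card_nsmul (Finset.univ.filter (fun i => c i ≠ cstar))
      (fun i => Real.exp (f i)) EL (by
        intro i hi
        exact hfout i (by simpa using hi))
    have hcast : ((K * mc - mc : ℕ) : ℝ) = (K : ℝ) * mc - mc := by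
      have : mc ≤ K * mc := Nat.le_mul_of_pos_left mc (by omega)
      push_cast [Nat.cast_sub this]; ring
    rw [hcompcard] at this
    simpa [nsmul_eq_mul, hcast] using this
  -- key exponential comparison
  have hK2 : (2:ℝ) ≤ (K:ℝ) := by exact_mod_cast hK
  have hmain : 4 * (K:ℝ) * EL ≤ ER := by
    have h4K : (0:ℝ) < 4 * K := by linarith
    have h1 : 4 * (K:ℝ) ≤ Real.exp (α * Δ t) := by
      calc 4 * (K:ℝ) = Real.exp (Real.log (4 * K)) := (Real.exp_log h4K).symm
        _ ≤ Real.exp (α * Δ t) := Real.exp_le_exp.mpr hlog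
    calc 4 * (K:ℝ) * EL ≤ Real.exp (α * Δ t) * EL :=
          mul_le_mul_of_nonneg_right h1 (Real.exp_pos _).le
      _ = ER := by
          rw [hEL, hER, ← Real.exp_add, hΔ t]; ring_nf
  -- arithmetic wrap-up
  have hWpos : (0:ℝ) ≤ (mc:ℝ) * EL := by positivity
  have hmEL : (mc:ℝ) * (4 * (K:ℝ) * EL) ≤ (mc:ℝ) * ER :=
    mul_le_mul_of_nonneg_left hmain (by positivity)
  have hb : (0:ℝ) ≤ (4 * (K:ℝ) - 8) * ((mc:ℝ) * EL) :=
    mul_nonneg (by linarith) hWpos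
  have hkey : 1/2 * Z ≤ S - T := by nlinarith [hS, hT, hU, hmEL, hb, hWpos, hZsplit]
  have hpstar : p cstar t = S / Z := by
    rw [hp, hSdef, Finset.sum_div]
    exact Finset.sum_congr rfl (fun i _ => hA' i)
  have hpcc : p cc t = T / Z := by
    rw [hp, hTdef, Finset.sum_div]
    exact Finset.sum_congr rfl (fun i _ => hA' i)
  rw [hpstar, hpcc, div_sub_div_same, le_div_iff₀ hZpos]
  linarith
end

section
/- (Main theorem, geometric part) Assume: the classes are balanced (|S_c| = |S_{c*}| for all c); ‖x^{(0)}‖₂ ≤ 1 and ‖x_i^{(0)}‖₂ ≤ 1 for all i; α' < 1; Δ_0 > 0 and Γ_0 > 0 (so Δ̃_0 := min(Δ_0, Γ_0) > 0); and α Δ_0 ≥ log(K) + log(1 + 2/Δ̃_0). Then for every t ∈ ℕ: (1) the geometric test margin grows geometrically, Δ_t ≥ Δ_0 (1+α')^t; and (2) the test-label margin stays nonnegative, y^{(t)}_{c*} ≥ y^{(t)}_c for every c ≠ c*. -/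
open Finset Real
open scoped RealInnerProductSpace BigOperators

private lemma inner_expand_aux {d : ℕ} (u v : EuclideanSpace ℝ (Fin d)) (a b : ℝ)
    {ι κ : Type*} (s : Finset ι) (t : Finset κ) (w : ι → ℝ) (w' : κ → ℝ)
    (f : ι → EuclideanSpace ℝ (Fin d)) (g : κ → EuclideanSpace ℝ (Fin d)) :
    ⟪u + a • ∑ i ∈ s, w i • f i, v + b • ∑ k ∈ t, w' k • g k⟫ =
      ⟪u, v⟫ + b * ∑ k ∈ t, w' k * ⟪u, g k⟫ + a * ∑ i ∈ s, w i * ⟪f i, v⟫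
      + (a * b) * ∑ i ∈ s, w i * ∑ k ∈ t, w' k * ⟪f i, g k⟫ := by
  simp only [inner_add_left, inner_add_right, real_inner_smul_left, real_inner_smul_right,
    sum_inner, inner_sum, Finset.mul_sum, Finset.sum_mul]
  ring_nf
  congr 1
  rw [Finset.sum_comm]
  refine Finset.sum_congr rfl fun i _ => Finset.sum_congr rfl fun k _ => by ring

private lemma convex_lb {ι : Type*} (s : Finset ι) (w v : ι → ℝ) (M : ℝ)
    (hw : ∀ i ∈ s, 0 ≤ w i) (hv : ∀ i ∈ s, M ≤ v i) :
    (∑ i ∈ s, w i) * M ≤ ∑ i ∈ s, w i * v i := by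
  rw [Finset.sum_mul]
  exact Finset.sum_le_sum fun i hi => mul_le_mul_of_nonneg_left (hv i hi) (hw i hi)

private lemma convex_ub {ι : Type*} (s : Finset ι) (w v : ι → ℝ) (M : ℝ)
    (hw : ∀ i ∈ s, 0 ≤ w i) (hv : ∀ i ∈ s, v i ≤ M) :
    ∑ i ∈ s, w i * v i ≤ (∑ i ∈ s, w i) * M := by
  rw [Finset.sum_mul]
  exact Finset.sum_le_sum fun i hi => mul_le_mul_of_nonneg_left (hv i hi) (hw i hi)

set_option maxHeartbeats 2000000 in
/-- **Main theorem, geometric part.** -/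
theorem main_theorem_geometric_part
    (d n K : ℕ) (hK : 2 ≤ K)
    (α γ α' γ' : ℝ) (hα : 0 < α) (hγ : 0 < γ) (hα' : 0 < α') (hγ' : 0 < γ')
    (c : Fin n → Fin K)
    (hclass : ∀ k : Fin K, ∃ i, c i = k)
    (cstar : Fin K)
    (hne : (Finset.univ.filter (fun i => c i = cstar)).Nonempty)
    (hne' : (Finset.univ.filter (fun i => c i ≠ cstar)).Nonempty)
    (hcard : (Finset.univ.filter (fun i => c i = cstar)).card < n)
    (x : ℕ → Fin n → EuclideanSpace ℝ (Fin d))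
    (xt : ℕ → EuclideanSpace ℝ (Fin d))
    (yt : ℕ → Fin K → ℝ)
    (hyt0 : yt 0 = 0)
    (Atr : ℕ → Fin n → Fin n → ℝ)
    (hAtr : ∀ t j k, Atr t j k =
      if c k = c j then
        Real.exp (α * ⟪x t j, x t k⟫) /
          ∑ s ∈ Finset.univ.filter (fun s => c s = c j), Real.exp (α * ⟪x t j, x t s⟫)
      else 0)
    (hx : ∀ t j, x (t+1) j =
      x t j + α' • ∑ k ∈ Finset.univ.filter (fun k => c k = c j), Atr t j k • x t k)
    (A : ℕ → Fin n → ℝ)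
    (hA : ∀ t i, A t i =
      Real.exp (α * ⟪xt t, x t i⟫ + γ * (1 + γ') ^ t * yt t (c i)) /
        ∑ m, Real.exp (α * ⟪xt t, x t m⟫ + γ * (1 + γ') ^ t * yt t (c m)))
    (hxt : ∀ t, xt (t+1) = xt t + α' • ∑ i, A t i • x t i)
    (hyt : ∀ t, yt (t+1) =
      yt t + α' • ∑ i, A t i • ((1 + γ') ^ t • (Pi.single (c i) (1 : ℝ) : Fin K → ℝ)))
    (p : Fin K → ℕ → ℝ)
    (hp : ∀ cc t, p cc t = ∑ j ∈ Finset.univ.filter (fun i => c i = cc), A t j)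
    (R L Δ ρ Λ Γ : ℕ → ℝ)
    (hR : ∀ t, R t =
      (Finset.univ.filter (fun i => c i = cstar)).inf' hne (fun j => ⟪xt t, x t j⟫))
    (hL : ∀ t, L t =
      (Finset.univ.filter (fun i => c i ≠ cstar)).sup' hne' (fun j => ⟪xt t, x t j⟫))
    (hΔ : ∀ t, Δ t = R t - L t)
    (hρ : ∀ t, ρ t =
      ((Finset.univ.filter (fun i => c i = cstar)) ×ˢ
          (Finset.univ.filter (fun i => c i = cstar))).inf' (hne.product hne)
        (fun q => ⟪x t q.1, x t q.2⟫))
    (hΛ : ∀ t, Λ t =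
      ((Finset.univ.filter (fun i => c i = cstar)) ×ˢ
          (Finset.univ.filter (fun i => c i ≠ cstar))).sup' (hne.product hne')
        (fun q => ⟪x t q.1, x t q.2⟫))
    (hΓ : ∀ t, Γ t = ρ t - Λ t)
    (hx0 : ‖xt 0‖ ≤ 1) (hxi0 : ∀ i, ‖x 0 i‖ ≤ 1)
    (hbal : ∀ cc : Fin K, (Finset.univ.filter (fun i => c i = cc)).card =
      (Finset.univ.filter (fun i => c i = cstar)).card)
    (hα'1 : α' < 1)
    (hΔ0 : 0 < Δ 0) (hΓ0 : 0 < Γ 0)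
    (hinit : Real.log K + Real.log (1 + 2 / min (Δ 0) (Γ 0)) ≤ α * Δ 0) :
    ∀ t : ℕ,
      Δ 0 * (1 + α') ^ t ≤ Δ t ∧
        ∀ cc : Fin K, cc ≠ cstar → yt t cc ≤ yt t cstar := by
  classical
  have h0α' : (0:ℝ) ≤ α' := le_of_lt hα'
  have h1α' : (0:ℝ) < 1 + α' := by linarith
  have hNpos : ∀ t : ℕ, (0:ℝ) < (1+α')^t := fun t => pow_pos h1α' t
  have hN1 : ∀ t : ℕ, (1:ℝ) ≤ (1+α')^t := fun t => one_le_pow₀ (by linarith)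
  haveI : Nonempty (Fin n) := ⟨hne.choose⟩
  -- training attention: nonneg, rows sum to 1
  have hAtr_nonneg : ∀ t j k, 0 ≤ Atr t j k := by
    intro t j k
    rw [hAtr]
    split
    · exact div_nonneg (Real.exp_pos _).le
        (Finset.sum_nonneg fun s _ => (Real.exp_pos _).le)
    · exact le_refl 0
  have hAtr_sum : ∀ t j,
      ∑ k ∈ Finset.univ.filter (fun k => c k = c j), Atr t j k = 1 := by
    intro t j
    have hjmem : j ∈ Finset.univ.filter (fun s => c s = c j) := by simp
    have hpos : 0 < ∑ s ∈ Finset.univ.filter (fun s => c s = c j),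
        Real.exp (α * ⟪x t j, x t s⟫) :=
      Finset.sum_pos (fun s _ => Real.exp_pos _) ⟨j, hjmem⟩
    have : ∀ k ∈ Finset.univ.filter (fun k => c k = c j),
        Atr t j k = Real.exp (α * ⟪x t j, x t k⟫) /
          ∑ s ∈ Finset.univ.filter (fun s => c s = c j), Real.exp (α * ⟪x t j, x t s⟫) := by
      intro k hk
      rw [hAtr, if_pos (by simpa using hk)]
    rw [Finset.sum_congr rfl this, ← Finset.sum_div, div_self (ne_of_gt hpos)]
  -- test attention: positive, sums to 1
  have hZpos : ∀ t, 0 < ∑ m, Real.exp (α * ⟪xt t, x t m⟫ + γ * (1 + γ') ^ t * yt t (c m)) :=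
    fun t => Finset.sum_pos (fun m _ => Real.exp_pos _) Finset.univ_nonempty
  have hA_pos : ∀ t i, 0 < A t i := by
    intro t i; rw [hA]; exact div_pos (Real.exp_pos _) (hZpos t)
  have hA_sum : ∀ t, ∑ i, A t i = 1 := by
    intro t
    have : ∀ i ∈ (Finset.univ : Finset (Fin n)), A t i =
        Real.exp (α * ⟪xt t, x t i⟫ + γ * (1 + γ') ^ t * yt t (c i)) /
          ∑ m, Real.exp (α * ⟪xt t, x t m⟫ + γ * (1 + γ') ^ t * yt t (c m)) :=
      fun i _ => hA t i
    rw [Finset.sum_congr rfl this, ← Finset.sum_div, div_self (ne_of_gt (hZpos t))]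
  -- norm growth
  have hnorm : ∀ t, ‖xt t‖ ≤ (1+α')^t ∧ ∀ i, ‖x t i‖ ≤ (1+α')^t := by
    intro t
    induction t with
    | zero => simpa using ⟨hx0, hxi0⟩
    | succ t ih =>
      constructor
      · rw [hxt]
        have hs : ‖∑ i, A t i • x t i‖ ≤ (1+α')^t := by
          calc ‖∑ i, A t i • x t i‖ ≤ ∑ i, ‖A t i • x t i‖ := norm_sum_le _ _
          _ = ∑ i, A t i * ‖x t i‖ := by
              refine Finset.sum_congr rfl fun i _ => ?_
              rw [norm_smul, Real.norm_of_nonneg (hA_pos t i).le]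
          _ ≤ ∑ i, A t i * (1+α')^t := Finset.sum_le_sum fun i _ =>
              mul_le_mul_of_nonneg_left (ih.2 i) (hA_pos t i).le
          _ = (1+α')^t := by rw [← Finset.sum_mul, hA_sum, one_mul]
        calc ‖xt t + α' • ∑ i, A t i • x t i‖
            ≤ ‖xt t‖ + ‖α' • ∑ i, A t i • x t i‖ := norm_add_le _ _
          _ ≤ (1+α')^t + α' * (1+α')^t := by
              rw [norm_smul, Real.norm_of_nonneg h0α']
              exact add_le_add ih.1 (mul_le_mul_of_nonneg_left hs h0α')
          _ = (1+α')^(t+1) := by ring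
      · intro j
        rw [hx]
        have hs : ‖∑ k ∈ Finset.univ.filter (fun k => c k = c j), Atr t j k • x t k‖
            ≤ (1+α')^t := by
          calc ‖∑ k ∈ Finset.univ.filter (fun k => c k = c j), Atr t j k • x t k‖
              ≤ ∑ k ∈ Finset.univ.filter (fun k => c k = c j), ‖Atr t j k • x t k‖ :=
                norm_sum_le _ _
          _ = ∑ k ∈ Finset.univ.filter (fun k => c k = c j), Atr t j k * ‖x t k‖ := by
              refine Finset.sum_congr rfl fun k _ => ?_
              rw [norm_smul, Real.norm_of_nonneg (hAtr_nonneg t j k)]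
          _ ≤ ∑ k ∈ Finset.univ.filter (fun k => c k = c j), Atr t j k * (1+α')^t :=
              Finset.sum_le_sum fun k _ =>
                mul_le_mul_of_nonneg_left (ih.2 k) (hAtr_nonneg t j k)
          _ = (1+α')^t := by rw [← Finset.sum_mul, hAtr_sum, one_mul]
        calc ‖x t j + α' • ∑ k ∈ Finset.univ.filter (fun k => c k = c j), Atr t j k • x t k‖
            ≤ ‖x t j‖ + ‖α' • ∑ k ∈ Finset.univ.filter (fun k => c k = c j),
                Atr t j k • x t k‖ := norm_add_le _ _
          _ ≤ (1+α')^t + α' * (1+α')^t := by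
              rw [norm_smul, Real.norm_of_nonneg h0α']
              exact add_le_add (ih.2 j) (mul_le_mul_of_nonneg_left hs h0α')
          _ = (1+α')^(t+1) := by ring
  -- Cauchy-Schwarz bounds on training inner products
  have hip : ∀ t i j, -(((1+α')^t)^2) ≤ ⟪x t i, x t j⟫ ∧ ⟪x t i, x t j⟫ ≤ ((1+α')^t)^2 := by
    intro t i j
    have h1 := abs_real_inner_le_norm (x t i) (x t j)
    have h2 : ‖x t i‖ * ‖x t j‖ ≤ ((1+α')^t)^2 := by
      have := (hnorm t).2 i
      have := (hnorm t).2 j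
      nlinarith [norm_nonneg (x t i), norm_nonneg (x t j)]
    constructor
    · nlinarith [neg_abs_le (⟪x t i, x t j⟫ : ℝ)]
    · nlinarith [le_abs_self (⟪x t i, x t j⟫ : ℝ)]
  -- main induction
  have key : ∀ t : ℕ, Δ 0 * (1+α')^t ≤ Δ t ∧ Γ 0 * ((1+α')^t)^2 ≤ Γ t ∧
      ∀ cc : Fin K, cc ≠ cstar → yt t cc ≤ yt t cstar := by
    intro t
    induction t with
    | zero =>
      refine ⟨by simp, by simp, fun cc _ => by simp [hyt0]⟩
    | succ t ih =>
      obtain ⟨ihΔ, ihΓ, ihy⟩ := ih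
      have hΔpos : 0 < Δ t := lt_of_lt_of_le (by positivity) ihΔ
      have hRL : L t ≤ R t := by have := hΔ t; linarith
      -- basic membership bounds
      have hRb : ∀ j, c j = cstar → R t ≤ ⟪xt t, x t j⟫ := by
        intro j hj
        rw [hR]
        exact Finset.inf'_le _ (Finset.mem_filter.mpr ⟨Finset.mem_univ j, hj⟩)
      have hLb : ∀ j, c j ≠ cstar → ⟪xt t, x t j⟫ ≤ L t := by
        intro j hj
        rw [hL]
        exact Finset.le_sup' (f := fun j => (⟪xt t, x t j⟫ : ℝ)) (Finset.mem_filter.mpr ⟨Finset.mem_univ j, hj⟩)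
      have hρb : ∀ i j, c i = cstar → c j = cstar → ρ t ≤ ⟪x t i, x t j⟫ := by
        intro i j hi hj
        rw [hρ]
        have h := Finset.inf'_le (s := (Finset.univ.filter (fun i => c i = cstar)) ×ˢ
            (Finset.univ.filter (fun i => c i = cstar))) (b := (i, j))
          (fun q => (⟪x t q.1, x t q.2⟫ : ℝ))
          (Finset.mem_product.mpr ⟨Finset.mem_filter.mpr ⟨Finset.mem_univ i, hi⟩,
            Finset.mem_filter.mpr ⟨Finset.mem_univ j, hj⟩⟩)
        exact h
      have hΛb : ∀ i j, c i = cstar → c j ≠ cstar → ⟪x t i, x t j⟫ ≤ Λ t := by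
        intro i j hi hj
        rw [hΛ]
        have h := Finset.le_sup' (s := (Finset.univ.filter (fun i => c i = cstar)) ×ˢ
            (Finset.univ.filter (fun i => c i ≠ cstar))) (b := (i, j))
          (fun q => (⟪x t q.1, x t q.2⟫ : ℝ))
          (Finset.mem_product.mpr ⟨Finset.mem_filter.mpr ⟨Finset.mem_univ i, hi⟩,
            Finset.mem_filter.mpr ⟨Finset.mem_univ j, hj⟩⟩)
        exact h
      have hΓt : 0 ≤ Γ t := le_trans (by positivity) ihΓ
      -- attention concentration
      set Z : ℝ := ∑ m, Real.exp (α * ⟪xt t, x t m⟫ + γ * (1 + γ') ^ t * yt t (c m)) with hZdef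
      have hZpos' : 0 < Z := hZpos t
      have hAt : ∀ i, A t i =
          Real.exp (α * ⟪xt t, x t i⟫ + γ * (1 + γ') ^ t * yt t (c i)) / Z := by
        intro i; rw [hA t i]
      set pS : ℝ := ∑ i ∈ Finset.univ.filter (fun i => c i = cstar), A t i with hpSdef
      set qS : ℝ := ∑ i ∈ Finset.univ.filter (fun i => c i ≠ cstar), A t i with hqSdef
      have hTT : (Finset.univ.filter (fun i => ¬ c i = cstar)) =
          (Finset.univ.filter (fun i : Fin n => c i ≠ cstar)) := rfl
      have hpq : pS + qS = 1 := by
        rw [hpSdef, hqSdef, ← hTT, Finset.sum_filter_add_sum_filter_not, hA_sum]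
      have hppos : 0 < pS := Finset.sum_pos (fun i _ => hA_pos t i) hne
      have hqpos : 0 < qS := Finset.sum_pos (fun i _ => hA_pos t i) hne'
      have c₀nn : 0 ≤ γ * (1+γ')^t := by positivity
      have hEubT : ∀ i, c i ≠ cstar →
          Real.exp (α * ⟪xt t, x t i⟫ + γ * (1 + γ') ^ t * yt t (c i)) ≤
            Real.exp (α * L t + γ * (1 + γ') ^ t * yt t cstar) := by
        intro i hi
        exact Real.exp_le_exp.mpr (add_le_add
          (mul_le_mul_of_nonneg_left (hLb i hi) hα.le)
          (mul_le_mul_of_nonneg_left (ihy (c i) hi) c₀nn))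
      have hElbS : ∀ i, c i = cstar →
          Real.exp (α * R t + γ * (1 + γ') ^ t * yt t cstar) ≤
            Real.exp (α * ⟪xt t, x t i⟫ + γ * (1 + γ') ^ t * yt t (c i)) := by
        intro i hi
        rw [hi]
        exact Real.exp_le_exp.mpr (add_le_add
          (mul_le_mul_of_nonneg_left (hRb i hi) hα.le) le_rfl)
      have hpZ : pS * Z = ∑ i ∈ Finset.univ.filter (fun i => c i = cstar),
          Real.exp (α * ⟪xt t, x t i⟫ + γ * (1 + γ') ^ t * yt t (c i)) := by
        rw [hpSdef, Finset.sum_congr rfl (fun i _ => hAt i), ← Finset.sum_div]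
        field_simp
      have hqZ : qS * Z = ∑ i ∈ Finset.univ.filter (fun i => c i ≠ cstar),
          Real.exp (α * ⟪xt t, x t i⟫ + γ * (1 + γ') ^ t * yt t (c i)) := by
        rw [hqSdef, Finset.sum_congr rfl (fun i _ => hAt i), ← Finset.sum_div]
        field_simp
      -- cardinalities
      have hfib : (Finset.univ : Finset (Fin n)).card =
          ∑ k : Fin K, (Finset.univ.filter (fun i => c i = k)).card :=
        Finset.card_eq_sum_card_fiberwise (fun i _ => Finset.mem_univ (c i))
      have hnKm : n = K * (Finset.univ.filter (fun i => c i = cstar)).card := by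
        have h2 : ∑ k : Fin K, (Finset.univ.filter (fun i => c i = k)).card =
            K * (Finset.univ.filter (fun i => c i = cstar)).card := by
          rw [Finset.sum_congr rfl (fun k _ => hbal k)]
          simp [Finset.sum_const, mul_comm]
        rw [← h2, ← hfib]; simp
      have hcardsum : (Finset.univ.filter (fun i => c i = cstar)).card +
          (Finset.univ.filter (fun i : Fin n => c i ≠ cstar)).card = n := by
        rw [← hTT]
        have := Finset.card_filter_add_card_filter_not
          (s := (Finset.univ : Finset (Fin n))) (p := fun i => c i = cstar)
        simpa using this
      have hTcard : (Finset.univ.filter (fun i : Fin n => c i ≠ cstar)).card =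
          (K - 1) * (Finset.univ.filter (fun i => c i = cstar)).card := by
        have h1 : (K - 1) * (Finset.univ.filter (fun i => c i = cstar)).card =
            K * (Finset.univ.filter (fun i => c i = cstar)).card -
              (Finset.univ.filter (fun i => c i = cstar)).card := by
          rw [Nat.sub_mul, one_mul]
        rw [h1, ← hnKm]
        omega
      have hKR : (2:ℝ) ≤ (K:ℝ) := by exact_mod_cast hK
      have hTcardR : ((Finset.univ.filter (fun i : Fin n => c i ≠ cstar)).card : ℝ) =
          ((K:ℝ) - 1) * ((Finset.univ.filter (fun i => c i = cstar)).card : ℝ) := by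
        rw [hTcard, Nat.cast_mul, Nat.cast_sub (by omega : 1 ≤ K), Nat.cast_one]
      -- the ratio bound
      have hq_le : qS ≤ ((K:ℝ) - 1) * Real.exp (α * L t - α * R t) * pS := by
        have h1 : qS * Z ≤
            ((Finset.univ.filter (fun i : Fin n => c i ≠ cstar)).card : ℝ) *
              Real.exp (α * L t + γ * (1 + γ') ^ t * yt t cstar) := by
          rw [hqZ]
          have := Finset.sum_le_card_nsmul
            (Finset.univ.filter (fun i : Fin n => c i ≠ cstar))
            (fun i => Real.exp (α * ⟪xt t, x t i⟫ + γ * (1 + γ') ^ t * yt t (c i)))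
            (Real.exp (α * L t + γ * (1 + γ') ^ t * yt t cstar))
            (fun i hi => hEubT i (Finset.mem_filter.mp hi).2)
          simpa [nsmul_eq_mul] using this
        have h2 : ((Finset.univ.filter (fun i : Fin n => c i = cstar)).card : ℝ) *
            Real.exp (α * R t + γ * (1 + γ') ^ t * yt t cstar) ≤ pS * Z := by
          rw [hpZ]
          have := Finset.card_nsmul_le_sum
            (Finset.univ.filter (fun i : Fin n => c i = cstar))
            (fun i => Real.exp (α * ⟪xt t, x t i⟫ + γ * (1 + γ') ^ t * yt t (c i)))
            (Real.exp (α * R t + γ * (1 + γ') ^ t * yt t cstar))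
            (fun i hi => hElbS i (Finset.mem_filter.mp hi).2)
          simpa [nsmul_eq_mul] using this
        have h3 : Real.exp (α * L t + γ * (1 + γ') ^ t * yt t cstar) =
            Real.exp (α * L t - α * R t) *
              Real.exp (α * R t + γ * (1 + γ') ^ t * yt t cstar) := by
          rw [← Real.exp_add]; ring_nf
        have h4 : qS * Z ≤ (((K:ℝ) - 1) * Real.exp (α * L t - α * R t) * pS) * Z := by
          calc qS * Z ≤ _ := h1
          _ = ((K:ℝ) - 1) * Real.exp (α * L t - α * R t) *
              (((Finset.univ.filter (fun i : Fin n => c i = cstar)).card : ℝ) *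
                Real.exp (α * R t + γ * (1 + γ') ^ t * yt t cstar)) := by
            rw [hTcardR, h3]; ring
          _ ≤ ((K:ℝ) - 1) * Real.exp (α * L t - α * R t) * (pS * Z) := by
            apply mul_le_mul_of_nonneg_left h2
            have := Real.exp_pos (α * L t - α * R t)
            nlinarith [hKR]
          _ = (((K:ℝ) - 1) * Real.exp (α * L t - α * R t) * pS) * Z := by ring
        exact le_of_mul_le_mul_right h4 hZpos'
      -- key smallness
      have hΔtΔ0 : Δ 0 ≤ Δ t :=
        le_trans (le_mul_of_one_le_right hΔ0.le (hN1 t)) ihΔ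
      have e1 : Real.exp (α * L t - α * R t) ≤ Real.exp (-(α * Δ 0)) := by
        apply Real.exp_le_exp.mpr
        have h5 := hΔ t
        nlinarith [mul_nonneg hα.le (sub_nonneg.mpr hΔtΔ0)]
      have hmin : 0 < min (Δ 0) (Γ 0) := lt_min hΔ0 hΓ0
      have hexp0 : (K:ℝ) * (1 + 2 / min (Δ 0) (Γ 0)) ≤ Real.exp (α * Δ 0) := by
        have h := Real.exp_le_exp.mpr hinit
        rwa [Real.exp_add, Real.exp_log (by linarith : (0:ℝ) < (K:ℝ)),
          Real.exp_log (by positivity)] at h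
      have e2 : 2*(K:ℝ)*Real.exp (-(α*Δ 0)) ≤ Γ 0 := by
        have h2 : 2*(K:ℝ)/Γ 0 ≤ 2*(K:ℝ)/min (Δ 0) (Γ 0) :=
          div_le_div_of_nonneg_left (by linarith) hmin (min_le_right _ _)
        have h3 : 2*(K:ℝ)/min (Δ 0) (Γ 0) ≤ (K:ℝ)*(1 + 2/min (Δ 0) (Γ 0)) := by
          have h4 : (K:ℝ)*(1 + 2/min (Δ 0) (Γ 0)) - 2*(K:ℝ)/min (Δ 0) (Γ 0) = (K:ℝ) := by
            ring
          linarith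
        have h1 : 2*(K:ℝ)/Γ 0 ≤ Real.exp (α*Δ 0) := by linarith [hexp0]
        rw [div_le_iff₀ hΓ0] at h1
        have hmul : Real.exp (α*Δ 0) * Real.exp (-(α*Δ 0)) = 1 := by
          rw [← Real.exp_add]; simp
        nlinarith [h1, hmul, Real.exp_pos (-(α*Δ 0)), hΓ0]
      have hkey : 2*qS*((1+α')^t)^2 ≤ pS * Γ t := by
        have hK1 : (0:ℝ) ≤ (K:ℝ) - 1 := by linarith
        have m1 : ((K:ℝ)-1)*Real.exp (α*L t - α*R t) ≤ (K:ℝ)*Real.exp (-(α*Δ 0)) :=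
          mul_le_mul (by linarith) e1 (Real.exp_pos _).le (by linarith)
        have m2 : qS ≤ (K:ℝ)*Real.exp (-(α*Δ 0)) * pS :=
          le_trans hq_le (mul_le_mul_of_nonneg_right m1 hppos.le)
        have c1 : 2*qS ≤ Γ 0 * pS := by
          nlinarith [m2, e2, hppos.le, Real.exp_pos (-(α*Δ 0))]
        have hNN : (0:ℝ) < ((1+α')^t)^2 := by positivity
        nlinarith [c1, ihΓ, hNN, hppos.le]
      -- expansion of inner products
      have hexp1 : ∀ j : Fin n, ⟪xt (t+1), x (t+1) j⟫ =
          ⟪xt t, x t j⟫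
          + α' * ∑ k ∈ Finset.univ.filter (fun k => c k = c j), Atr t j k * ⟪xt t, x t k⟫
          + α' * ∑ i, A t i * ⟪x t i, x t j⟫
          + (α' * α') * ∑ i, A t i *
              ∑ k ∈ Finset.univ.filter (fun k => c k = c j), Atr t j k * ⟪x t i, x t k⟫ := by
        intro j
        rw [hxt t, hx t j]
        exact inner_expand_aux _ _ _ _ _ _ _ _ _ _
      have hsplit : ∀ v : Fin n → ℝ, ∑ i, A t i * v i =
          ∑ i ∈ Finset.univ.filter (fun i => c i = cstar), A t i * v i +
          ∑ i ∈ Finset.univ.filter (fun i : Fin n => c i ≠ cstar), A t i * v i := by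
        intro v
        rw [← hTT, Finset.sum_filter_add_sum_filter_not]
      -- R bound
      have hRsucc : (1+α')*R t + (α' + α'*α')*(pS*ρ t - qS*((1+α')^t)^2) ≤ R (t+1) := by
        rw [hR (t+1)]
        apply Finset.le_inf'
        intro j hjmem
        have hj : c j = cstar := (Finset.mem_filter.mp hjmem).2
        have t1 : R t ≤ ∑ k ∈ Finset.univ.filter (fun k => c k = c j),
            Atr t j k * ⟪xt t, x t k⟫ := by
          have h := convex_lb (Finset.univ.filter (fun k => c k = c j)) (Atr t j)
            (fun k => ⟪xt t, x t k⟫) (R t) (fun k _ => hAtr_nonneg t j k)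
            (fun k hk => hRb k (((Finset.mem_filter.mp hk).2).trans hj))
          rwa [hAtr_sum t j, one_mul] at h
        have t2 : pS * ρ t - qS * ((1+α')^t)^2 ≤ ∑ i, A t i * ⟪x t i, x t j⟫ := by
          have a1 : pS * ρ t ≤ ∑ i ∈ Finset.univ.filter (fun i => c i = cstar),
              A t i * ⟪x t i, x t j⟫ :=
            convex_lb _ _ _ _ (fun i _ => (hA_pos t i).le)
              (fun i hi => hρb i j ((Finset.mem_filter.mp hi).2) hj)
          have a2 : qS * (-(((1+α')^t)^2)) ≤
              ∑ i ∈ Finset.univ.filter (fun i : Fin n => c i ≠ cstar),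
                A t i * ⟪x t i, x t j⟫ :=
            convex_lb _ _ _ _ (fun i _ => (hA_pos t i).le)
              (fun i _ => (hip t i j).1)
          have hs := hsplit (fun i => ⟪x t i, x t j⟫)
          linarith
        have t3 : pS * ρ t - qS * ((1+α')^t)^2 ≤ ∑ i, A t i *
            ∑ k ∈ Finset.univ.filter (fun k => c k = c j), Atr t j k * ⟪x t i, x t k⟫ := by
          have b1 : ∀ i, c i = cstar → ρ t ≤
              ∑ k ∈ Finset.univ.filter (fun k => c k = c j), Atr t j k * ⟪x t i, x t k⟫ := by
            intro i hi
            have h := convex_lb (Finset.univ.filter (fun k => c k = c j)) (Atr t j)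
              (fun k => ⟪x t i, x t k⟫) (ρ t) (fun k _ => hAtr_nonneg t j k)
              (fun k hk => hρb i k hi (((Finset.mem_filter.mp hk).2).trans hj))
            rwa [hAtr_sum t j, one_mul] at h
          have b2 : ∀ i : Fin n, -(((1+α')^t)^2) ≤
              ∑ k ∈ Finset.univ.filter (fun k => c k = c j), Atr t j k * ⟪x t i, x t k⟫ := by
            intro i
            have h := convex_lb (Finset.univ.filter (fun k => c k = c j)) (Atr t j)
              (fun k => ⟪x t i, x t k⟫) (-(((1+α')^t)^2)) (fun k _ => hAtr_nonneg t j k)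
              (fun k _ => (hip t i k).1)
            rwa [hAtr_sum t j, one_mul] at h
          have a1 : pS * ρ t ≤ ∑ i ∈ Finset.univ.filter (fun i => c i = cstar),
              A t i * ∑ k ∈ Finset.univ.filter (fun k => c k = c j),
                Atr t j k * ⟪x t i, x t k⟫ :=
            convex_lb _ _ _ _ (fun i _ => (hA_pos t i).le)
              (fun i hi => b1 i ((Finset.mem_filter.mp hi).2))
          have a2 : qS * (-(((1+α')^t)^2)) ≤
              ∑ i ∈ Finset.univ.filter (fun i : Fin n => c i ≠ cstar),
                A t i * ∑ k ∈ Finset.univ.filter (fun k => c k = c j),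
                  Atr t j k * ⟪x t i, x t k⟫ :=
            convex_lb _ _ _ _ (fun i _ => (hA_pos t i).le) (fun i _ => b2 i)
          have hs := hsplit (fun i => ∑ k ∈ Finset.univ.filter (fun k => c k = c j),
            Atr t j k * ⟪x t i, x t k⟫)
          linarith
        have m0 := hRb j hj
        have m1 := mul_le_mul_of_nonneg_left t1 h0α'
        have m2 := mul_le_mul_of_nonneg_left t2 h0α'
        have m3 := mul_le_mul_of_nonneg_left t3 (mul_nonneg h0α' h0α')
        rw [hexp1 j]
        linarith [m0, m1, m2, m3]
      -- L bound
      have hLsucc : L (t+1) ≤ (1+α')*L t + (α' + α'*α')*(pS*Λ t + qS*((1+α')^t)^2) := by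
        rw [hL (t+1)]
        apply Finset.sup'_le
        intro j hjmem
        have hj : c j ≠ cstar := (Finset.mem_filter.mp hjmem).2
        have t1 : ∑ k ∈ Finset.univ.filter (fun k => c k = c j),
            Atr t j k * ⟪xt t, x t k⟫ ≤ L t := by
          have h := convex_ub (Finset.univ.filter (fun k => c k = c j)) (Atr t j)
            (fun k => ⟪xt t, x t k⟫) (L t) (fun k _ => hAtr_nonneg t j k)
            (fun k hk => hLb k (by
              have := (Finset.mem_filter.mp hk).2
              rw [this]; exact hj))
          rwa [hAtr_sum t j, one_mul] at h
        have t2 : ∑ i, A t i * ⟪x t i, x t j⟫ ≤ pS * Λ t + qS * ((1+α')^t)^2 := by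
          have a1 : ∑ i ∈ Finset.univ.filter (fun i => c i = cstar),
              A t i * ⟪x t i, x t j⟫ ≤ pS * Λ t :=
            convex_ub _ _ _ _ (fun i _ => (hA_pos t i).le)
              (fun i hi => hΛb i j ((Finset.mem_filter.mp hi).2) hj)
          have a2 : ∑ i ∈ Finset.univ.filter (fun i : Fin n => c i ≠ cstar),
              A t i * ⟪x t i, x t j⟫ ≤ qS * ((1+α')^t)^2 :=
            convex_ub _ _ _ _ (fun i _ => (hA_pos t i).le) (fun i _ => (hip t i j).2)
          have hs := hsplit (fun i => ⟪x t i, x t j⟫)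
          linarith
        have t3 : ∑ i, A t i *
            ∑ k ∈ Finset.univ.filter (fun k => c k = c j), Atr t j k * ⟪x t i, x t k⟫ ≤
              pS * Λ t + qS * ((1+α')^t)^2 := by
          have b1 : ∀ i, c i = cstar →
              ∑ k ∈ Finset.univ.filter (fun k => c k = c j), Atr t j k * ⟪x t i, x t k⟫ ≤
                Λ t := by
            intro i hi
            have h := convex_ub (Finset.univ.filter (fun k => c k = c j)) (Atr t j)
              (fun k => ⟪x t i, x t k⟫) (Λ t) (fun k _ => hAtr_nonneg t j k)
              (fun k hk => hΛb i k hi (by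
                have := (Finset.mem_filter.mp hk).2
                rw [this]; exact hj))
            rwa [hAtr_sum t j, one_mul] at h
          have b2 : ∀ i : Fin n,
              ∑ k ∈ Finset.univ.filter (fun k => c k = c j), Atr t j k * ⟪x t i, x t k⟫ ≤
                ((1+α')^t)^2 := by
            intro i
            have h := convex_ub (Finset.univ.filter (fun k => c k = c j)) (Atr t j)
              (fun k => ⟪x t i, x t k⟫) (((1+α')^t)^2) (fun k _ => hAtr_nonneg t j k)
              (fun k _ => (hip t i k).2)
            rwa [hAtr_sum t j, one_mul] at h
          have a1 : ∑ i ∈ Finset.univ.filter (fun i => c i = cstar),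
              A t i * ∑ k ∈ Finset.univ.filter (fun k => c k = c j),
                Atr t j k * ⟪x t i, x t k⟫ ≤ pS * Λ t :=
            convex_ub _ _ _ _ (fun i _ => (hA_pos t i).le)
              (fun i hi => b1 i ((Finset.mem_filter.mp hi).2))
          have a2 : ∑ i ∈ Finset.univ.filter (fun i : Fin n => c i ≠ cstar),
              A t i * ∑ k ∈ Finset.univ.filter (fun k => c k = c j),
                Atr t j k * ⟪x t i, x t k⟫ ≤ qS * ((1+α')^t)^2 :=
            convex_ub _ _ _ _ (fun i _ => (hA_pos t i).le) (fun i _ => b2 i)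
          have hs := hsplit (fun i => ∑ k ∈ Finset.univ.filter (fun k => c k = c j),
            Atr t j k * ⟪x t i, x t k⟫)
          linarith
        have m0 := hLb j hj
        have m1 := mul_le_mul_of_nonneg_left t1 h0α'
        have m2 := mul_le_mul_of_nonneg_left t2 h0α'
        have m3 := mul_le_mul_of_nonneg_left t3 (mul_nonneg h0α' h0α')
        rw [hexp1 j]
        linarith [m0, m1, m2, m3]
      have hΔstep : Δ 0 * (1+α')^(t+1) ≤ Δ (t+1) := by
        have e3 : (α'+α'*α') * (pS*ρ t - qS*((1+α')^t)^2) -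
            (α'+α'*α')*(pS*Λ t + qS*((1+α')^t)^2) =
            (α'+α'*α')*(pS*Γ t - 2*(qS*((1+α')^t)^2)) := by
          rw [hΓ t]; ring
        have e4 : 0 ≤ (α'+α'*α')*(pS*Γ t - 2*(qS*((1+α')^t)^2)) := by
          apply mul_nonneg (by positivity)
          linarith [hkey]
        have e5 : (1+α')*Δ t ≤ R (t+1) - L (t+1) := by
          have h6 := hΔ t
          have h7 : α' * Δ t = α' * (R t - L t) := by rw [h6]
          linarith [hRsucc, hLsucc, e3, e4]
        have e6 : (1+α')*(Δ 0*(1+α')^t) ≤ (1+α')*Δ t := mul_le_mul_of_nonneg_left ihΔ h1α'.le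
        have e7 : Δ 0 * (1+α')^(t+1) = (1+α')*(Δ 0*(1+α')^t) := by ring
        rw [hΔ (t+1)]
        linarith
      -- Γ step
      have hexp2 : ∀ i j : Fin n, ⟪x (t+1) i, x (t+1) j⟫ =
          ⟪x t i, x t j⟫
          + α' * ∑ l ∈ Finset.univ.filter (fun l => c l = c j), Atr t j l * ⟪x t i, x t l⟫
          + α' * ∑ k ∈ Finset.univ.filter (fun k => c k = c i), Atr t i k * ⟪x t k, x t j⟫
          + (α' * α') * ∑ k ∈ Finset.univ.filter (fun k => c k = c i), Atr t i k *
              ∑ l ∈ Finset.univ.filter (fun l => c l = c j), Atr t j l * ⟪x t k, x t l⟫ := by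
        intro i j
        rw [hx t i, hx t j]
        exact inner_expand_aux _ _ _ _ _ _ _ _ _ _
      have hρsucc : ρ t + α'*ρ t + α'*ρ t + (α'*α')*ρ t ≤ ρ (t+1) := by
        rw [hρ (t+1)]
        apply Finset.le_inf'
        intro q hq
        obtain ⟨hq1, hq2⟩ := Finset.mem_product.mp hq
        have hi : c q.1 = cstar := (Finset.mem_filter.mp hq1).2
        have hj : c q.2 = cstar := (Finset.mem_filter.mp hq2).2
        have t0 := hρb q.1 q.2 hi hj
        have t1 : ρ t ≤ ∑ l ∈ Finset.univ.filter (fun l => c l = c q.2),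
            Atr t q.2 l * ⟪x t q.1, x t l⟫ := by
          have h := convex_lb (Finset.univ.filter (fun l => c l = c q.2)) (Atr t q.2)
            (fun l => ⟪x t q.1, x t l⟫) (ρ t) (fun l _ => hAtr_nonneg t q.2 l)
            (fun l hl => hρb q.1 l hi (((Finset.mem_filter.mp hl).2).trans hj))
          rwa [hAtr_sum t q.2, one_mul] at h
        have t2 : ρ t ≤ ∑ k ∈ Finset.univ.filter (fun k => c k = c q.1),
            Atr t q.1 k * ⟪x t k, x t q.2⟫ := by
          have h := convex_lb (Finset.univ.filter (fun k => c k = c q.1)) (Atr t q.1)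
            (fun k => ⟪x t k, x t q.2⟫) (ρ t) (fun k _ => hAtr_nonneg t q.1 k)
            (fun k hk => hρb k q.2 (((Finset.mem_filter.mp hk).2).trans hi) hj)
          rwa [hAtr_sum t q.1, one_mul] at h
        have t3 : ρ t ≤ ∑ k ∈ Finset.univ.filter (fun k => c k = c q.1), Atr t q.1 k *
            ∑ l ∈ Finset.univ.filter (fun l => c l = c q.2), Atr t q.2 l * ⟪x t k, x t l⟫ := by
          have b1 : ∀ k, c k = cstar → ρ t ≤
              ∑ l ∈ Finset.univ.filter (fun l => c l = c q.2), Atr t q.2 l * ⟪x t k, x t l⟫ := by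
            intro k hk
            have h := convex_lb (Finset.univ.filter (fun l => c l = c q.2)) (Atr t q.2)
              (fun l => ⟪x t k, x t l⟫) (ρ t) (fun l _ => hAtr_nonneg t q.2 l)
              (fun l hl => hρb k l hk (((Finset.mem_filter.mp hl).2).trans hj))
            rwa [hAtr_sum t q.2, one_mul] at h
          have h := convex_lb (Finset.univ.filter (fun k => c k = c q.1)) (Atr t q.1)
            (fun k => ∑ l ∈ Finset.univ.filter (fun l => c l = c q.2),
              Atr t q.2 l * ⟪x t k, x t l⟫) (ρ t) (fun k _ => hAtr_nonneg t q.1 k)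
            (fun k hk => b1 k (((Finset.mem_filter.mp hk).2).trans hi))
          rwa [hAtr_sum t q.1, one_mul] at h
        have m1 := mul_le_mul_of_nonneg_left t1 h0α'
        have m2 := mul_le_mul_of_nonneg_left t2 h0α'
        have m3 := mul_le_mul_of_nonneg_left t3 (mul_nonneg h0α' h0α')
        show _ ≤ ⟪x (t+1) q.1, x (t+1) q.2⟫
        rw [hexp2 q.1 q.2]
        linarith
      have hΛsucc : Λ (t+1) ≤ Λ t + α'*Λ t + α'*Λ t + (α'*α')*Λ t := by
        rw [hΛ (t+1)]
        apply Finset.sup'_le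
        intro q hq
        obtain ⟨hq1, hq2⟩ := Finset.mem_product.mp hq
        have hi : c q.1 = cstar := (Finset.mem_filter.mp hq1).2
        have hj : c q.2 ≠ cstar := (Finset.mem_filter.mp hq2).2
        have t0 := hΛb q.1 q.2 hi hj
        have t1 : ∑ l ∈ Finset.univ.filter (fun l => c l = c q.2),
            Atr t q.2 l * ⟪x t q.1, x t l⟫ ≤ Λ t := by
          have h := convex_ub (Finset.univ.filter (fun l => c l = c q.2)) (Atr t q.2)
            (fun l => ⟪x t q.1, x t l⟫) (Λ t) (fun l _ => hAtr_nonneg t q.2 l)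
            (fun l hl => hΛb q.1 l hi (by
              rw [(Finset.mem_filter.mp hl).2]; exact hj))
          rwa [hAtr_sum t q.2, one_mul] at h
        have t2 : ∑ k ∈ Finset.univ.filter (fun k => c k = c q.1),
            Atr t q.1 k * ⟪x t k, x t q.2⟫ ≤ Λ t := by
          have h := convex_ub (Finset.univ.filter (fun k => c k = c q.1)) (Atr t q.1)
            (fun k => ⟪x t k, x t q.2⟫) (Λ t) (fun k _ => hAtr_nonneg t q.1 k)
            (fun k hk => hΛb k q.2 (((Finset.mem_filter.mp hk).2).trans hi) hj)
          rwa [hAtr_sum t q.1, one_mul] at h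
        have t3 : ∑ k ∈ Finset.univ.filter (fun k => c k = c q.1), Atr t q.1 k *
            ∑ l ∈ Finset.univ.filter (fun l => c l = c q.2),
              Atr t q.2 l * ⟪x t k, x t l⟫ ≤ Λ t := by
          have b1 : ∀ k, c k = cstar →
              ∑ l ∈ Finset.univ.filter (fun l => c l = c q.2),
                Atr t q.2 l * ⟪x t k, x t l⟫ ≤ Λ t := by
            intro k hk
            have h := convex_ub (Finset.univ.filter (fun l => c l = c q.2)) (Atr t q.2)
              (fun l => ⟪x t k, x t l⟫) (Λ t) (fun l _ => hAtr_nonneg t q.2 l)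
              (fun l hl => hΛb k l hk (by
                rw [(Finset.mem_filter.mp hl).2]; exact hj))
            rwa [hAtr_sum t q.2, one_mul] at h
          have h := convex_ub (Finset.univ.filter (fun k => c k = c q.1)) (Atr t q.1)
            (fun k => ∑ l ∈ Finset.univ.filter (fun l => c l = c q.2),
              Atr t q.2 l * ⟪x t k, x t l⟫) (Λ t) (fun k _ => hAtr_nonneg t q.1 k)
            (fun k hk => b1 k (((Finset.mem_filter.mp hk).2).trans hi))
          rwa [hAtr_sum t q.1, one_mul] at h
        have m1 := mul_le_mul_of_nonneg_left t1 h0α'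
        have m2 := mul_le_mul_of_nonneg_left t2 h0α'
        have m3 := mul_le_mul_of_nonneg_left t3 (mul_nonneg h0α' h0α')
        show ⟪x (t+1) q.1, x (t+1) q.2⟫ ≤ _
        rw [hexp2 q.1 q.2]
        linarith
      have hΓstep : Γ 0 * ((1+α')^(t+1))^2 ≤ Γ (t+1) := by
        have g1 : (1+2*α'+α'*α') * Γ t ≤ Γ (t+1) := by
          have e8 : (1+2*α'+α'*α') * Γ t = (ρ t + α'*ρ t + α'*ρ t + (α'*α')*ρ t) -
              (Λ t + α'*Λ t + α'*Λ t + (α'*α')*Λ t) := by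
            rw [hΓ t]; ring
          rw [hΓ (t+1), e8]
          linarith [hρsucc, hΛsucc]
        have g2 : (1+2*α'+α'*α') * (Γ 0 * ((1+α')^t)^2) ≤ (1+2*α'+α'*α') * Γ t :=
          mul_le_mul_of_nonneg_left ihΓ (by positivity)
        have g3 : Γ 0 * ((1+α')^(t+1))^2 = (1+2*α'+α'*α') * (Γ 0 * ((1+α')^t)^2) := by
          ring
        linarith
      -- label step
      have hyval : ∀ b : Fin K, yt (t+1) b = yt t b +
          α' * ((1+γ')^t * ∑ i ∈ Finset.univ.filter (fun i => c i = b), A t i) := by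
        intro b
        rw [hyt t]
        simp only [Pi.add_apply, Pi.smul_apply, Finset.sum_apply, smul_eq_mul,
          Pi.single_apply]
        have hterm : ∀ i : Fin n, A t i * ((1+γ')^t * (if b = c i then (1:ℝ) else 0)) =
            (if c i = b then (1+γ')^t * A t i else 0) := by
          intro i
          by_cases h : c i = b
          · simp [h]; ring
          · have h' : ¬ b = c i := fun hh => h hh.symm
            simp [h, h']
        rw [Finset.sum_congr rfl (fun i _ => hterm i), ← Finset.sum_filter, ← Finset.mul_sum]
      have hple : ∀ cc : Fin K, cc ≠ cstar →
          ∑ i ∈ Finset.univ.filter (fun i => c i = cc), A t i ≤ pS := by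
        intro cc hcc
        have hE2 : Real.exp (α * L t + γ * (1+γ')^t * yt t cstar) ≤
            Real.exp (α * R t + γ * (1+γ')^t * yt t cstar) :=
          Real.exp_le_exp.mpr (add_le_add
            (mul_le_mul_of_nonneg_left hRL hα.le) le_rfl)
        have hub : ∀ i ∈ Finset.univ.filter (fun i : Fin n => c i = cc),
            A t i ≤ Real.exp (α * R t + γ * (1+γ')^t * yt t cstar) / Z := by
          intro i hi
          have hci : c i = cc := (Finset.mem_filter.mp hi).2
          have hci' : c i ≠ cstar := by rw [hci]; exact hcc
          rw [hAt i]
          exact (div_le_div_iff_of_pos_right hZpos').mpr (le_trans (hEubT i hci') hE2)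
        have hlb : ∀ i ∈ Finset.univ.filter (fun i : Fin n => c i = cstar),
            Real.exp (α * R t + γ * (1+γ')^t * yt t cstar) / Z ≤ A t i := by
          intro i hi
          rw [hAt i]
          exact (div_le_div_iff_of_pos_right hZpos').mpr (hElbS i (Finset.mem_filter.mp hi).2)
        have h1 := Finset.sum_le_card_nsmul
          (Finset.univ.filter (fun i : Fin n => c i = cc)) (A t) _ hub
        have h2 := Finset.card_nsmul_le_sum
          (Finset.univ.filter (fun i : Fin n => c i = cstar)) (A t) _ hlb
        rw [hbal cc] at h1
        rw [hpSdef]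
        exact le_trans h1 h2
      have hystep : ∀ cc : Fin K, cc ≠ cstar → yt (t+1) cc ≤ yt (t+1) cstar := by
        intro cc hcc
        rw [hyval cc, hyval cstar, ← hpSdef]
        have h1 := ihy cc hcc
        have h2 := hple cc hcc
        have h3 : α' * ((1+γ')^t * ∑ i ∈ Finset.univ.filter (fun i => c i = cc), A t i) ≤
            α' * ((1+γ')^t * pS) :=
          mul_le_mul_of_nonneg_left (mul_le_mul_of_nonneg_left h2 (by positivity)) h0α'
        linarith
      exact ⟨hΔstep, hΓstep, hystep⟩
  intro t
  exact ⟨(key t).1, (key t).2.2⟩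
end
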